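/- arXiv:2310.10441 — 7 statements merged into one kernel-verified Lean document; each statement's English description precedes it below -/
import Mathlib

section
/- There exist constants c, c'', c' > 0 and C (depending only on α) such that the following holds: if a pair of random graphs (G,H) follows an (α,d,δ)-edge-correlated distribution with d ≥ c·(log n)² and δ ≤ c''·(log n)^{-2}, and i is a fixed index, then the event Γ^t := (∩_{j=1}^n {R_j^t ≥ (α/2)·d_j}) ∩ {(1/2)·d_i ≤ R_0^t ≤ 2·d_i} satisfies P(Γ^t) ≥ 1 − C·exp(−c'·(log n)²), where R_j^t = Σ_{ℓ≠i} p_{jℓ}·(1 − max(G_{iℓ}, H_{iℓ})) and R_0^t = Σ_{j≠i} max(G_{ij}, H_{ij}). -/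
open MeasureTheory ProbabilityTheory

set_option linter.unusedSectionVars false
set_option linter.unreachableTactic false
set_option linter.unusedTactic false

open Real

section TwoValued
variable {Ω : Type*} [MeasurableSpace Ω] {P : Measure Ω} [IsProbabilityMeasure P]

lemma tv_integrable {B : Ω → ℝ} (hB : Measurable B) (h01 : ∀ ω, B ω = 0 ∨ B ω = 1) :
    Integrable B P :=
  (integrable_const (1:ℝ)).mono' hB.aestronglyMeasurable
    (Filter.Eventually.of_forall fun ω => by rcases h01 ω with h | h <;> simp [h])

lemma tv_integral {B : Ω → ℝ} (hB : Measurable B) (h01 : ∀ ω, B ω = 0 ∨ B ω = 1) :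
    ∫ ω, B ω ∂P = (P {ω | B ω = 1}).toReal := by
  have hset : MeasurableSet {ω | B ω = 1} := hB (measurableSet_singleton 1)
  have hfun : B = Set.indicator {ω | B ω = 1} (fun _ => (1:ℝ)) := by
    funext ω
    rcases h01 ω with h | h
    · rw [h, Set.indicator_apply_eq_zero.2]
      intro hmem; exact absurd (h.symm.trans hmem) zero_ne_one
    · rw [h, eq_comm, Set.indicator_apply_eq_self.2]
      intro hmem; exact absurd h hmem
    
  calc ∫ ω, B ω ∂P = ∫ ω, Set.indicator {ω | B ω = 1} (fun _ => (1:ℝ)) ω ∂P := by rw [← hfun]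
    _ = (P {ω | B ω = 1}).toReal := by
        rw [MeasureTheory.integral_indicator_const (1:ℝ) hset]; simp; rfl

lemma tv_integral_nonneg {B : Ω → ℝ} (h01 : ∀ ω, B ω = 0 ∨ B ω = 1) :
    0 ≤ ∫ ω, B ω ∂P :=
  integral_nonneg fun ω => by rcases h01 ω with h | h <;> simp [h]

lemma tv_integral_le_one {B : Ω → ℝ} (hB : Measurable B) (h01 : ∀ ω, B ω = 0 ∨ B ω = 1) :
    ∫ ω, B ω ∂P ≤ 1 := by
  rw [tv_integral hB h01]
  exact (ENNReal.toReal_le_of_le_ofReal zero_le_one (by simpa using prob_le_one))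

lemma tv_exp_eq {B : Ω → ℝ} (h01 : ∀ ω, B ω = 0 ∨ B ω = 1) (c : ℝ) (ω : Ω) :
    Real.exp (c * B ω) = 1 + (Real.exp c - 1) * B ω := by
  rcases h01 ω with h | h <;> simp [h]

lemma tv_integrable_exp {B : Ω → ℝ} (hB : Measurable B) (h01 : ∀ ω, B ω = 0 ∨ B ω = 1)
    (a t : ℝ) : Integrable (fun ω => Real.exp (t * (a * B ω))) P := by
  refine (integrable_const (max 1 (Real.exp (t * a)))).mono'
    (((hB.const_mul a).const_mul t).exp.aestronglyMeasurable)
    (Filter.Eventually.of_forall fun ω => ?_)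
  rcases h01 ω with h | h
  · simp [h, norm_of_nonneg (Real.exp_pos _).le, le_max_left]
  · simp only [h, mul_one, norm_of_nonneg (Real.exp_pos _).le]
    exact le_max_right _ _

lemma tv_mgf {B : Ω → ℝ} (hB : Measurable B) (h01 : ∀ ω, B ω = 0 ∨ B ω = 1) (a t : ℝ) :
    mgf (fun ω => a * B ω) P t = 1 + (Real.exp (t * a) - 1) * ∫ ω, B ω ∂P := by
  unfold mgf
  have : ∀ ω, Real.exp (t * (a * B ω)) = 1 + (Real.exp (t * a) - 1) * B ω := fun ω => by
    rw [← mul_assoc]; exact tv_exp_eq h01 (t * a) ω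
  simp only [this]
  rw [integral_add (integrable_const 1) ((tv_integrable hB h01).const_mul _),
    integral_const, MeasureTheory.integral_const_mul]
  simp

end TwoValued

section Chernoff
variable {Ω : Type*} [MeasurableSpace Ω] {P : Measure Ω} [IsProbabilityMeasure P]
variable {ι : Type*}

lemma tv_mgf_prod_le {B : ι → Ω → ℝ} (hmeas : ∀ q, Measurable (B q))
    (h01 : ∀ q ω, B q ω = 0 ∨ B q ω = 1)
    (hindep : iIndepFun B P) (a : ι → ℝ) (s : Finset ι) (t : ℝ) :
    mgf (∑ q ∈ s, fun ω => a q * B q ω) P t ≤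
      Real.exp (∑ q ∈ s, (Real.exp (t * a q) - 1) * ∫ ω, B q ω ∂P) := by
  have hXindep : iIndepFun (fun q ω => a q * B q ω) P :=
    hindep.comp (fun q x => a q * x) (fun q => measurable_id.const_mul (a q))
  have hXmeas : ∀ q, Measurable (fun ω => a q * B q ω) := fun q => (hmeas q).const_mul (a q)
  rw [hXindep.mgf_sum hXmeas s, Real.exp_sum]
  refine Finset.prod_le_prod (fun q _ => mgf_nonneg) (fun q _ => ?_)
  rw [tv_mgf (hmeas q) (h01 q) (a q) t, add_comm]
  exact Real.add_one_le_exp _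

lemma tv_integrable_exp_sum {B : ι → Ω → ℝ} (hmeas : ∀ q, Measurable (B q))
    (h01 : ∀ q ω, B q ω = 0 ∨ B q ω = 1)
    (hindep : iIndepFun B P) (a : ι → ℝ) (s : Finset ι) (t : ℝ) :
    Integrable (fun ω => Real.exp (t * (∑ q ∈ s, fun ω => a q * B q ω) ω)) P := by
  have hXindep : iIndepFun (fun q ω => a q * B q ω) P :=
    hindep.comp (fun q x => a q * x) (fun q => measurable_id.const_mul (a q))
  exact hXindep.integrable_exp_mul_sum (fun q => (hmeas q).const_mul (a q))
    (fun q _ => tv_integrable_exp (hmeas q) (h01 q) (a q) t)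

lemma tv_chernoff_lower {B : ι → Ω → ℝ} (hmeas : ∀ q, Measurable (B q))
    (h01 : ∀ q ω, B q ω = 0 ∨ B q ω = 1)
    (hindep : iIndepFun B P) (a : ι → ℝ) (s : Finset ι)
    {t : ℝ} (ht : t ≤ 0) (ε : ℝ) :
    P {ω | ∑ q ∈ s, a q * B q ω ≤ ε} ≤
      ENNReal.ofReal (Real.exp (-t * ε + ∑ q ∈ s, (Real.exp (t * a q) - 1) * ∫ ω, B q ω ∂P)) := by
  have h1 := measure_le_le_exp_mul_mgf (μ := P) (X := ∑ q ∈ s, fun ω => a q * B q ω) ε ht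
    (tv_integrable_exp_sum hmeas h01 hindep a s t)
  have hset : {ω | ∑ q ∈ s, a q * B q ω ≤ ε} =
      {ω | (∑ q ∈ s, fun ω => a q * B q ω) ω ≤ ε} := by
    ext ω; simp [Finset.sum_apply]
  rw [hset, ← ENNReal.ofReal_toReal (measure_ne_top P _)]
  refine ENNReal.ofReal_le_ofReal (h1.trans ?_)
  rw [Real.exp_add]
  exact mul_le_mul_of_nonneg_left (tv_mgf_prod_le hmeas h01 hindep a s t) (Real.exp_pos _).le

lemma tv_chernoff_upper {B : ι → Ω → ℝ} (hmeas : ∀ q, Measurable (B q))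
    (h01 : ∀ q ω, B q ω = 0 ∨ B q ω = 1)
    (hindep : iIndepFun B P) (a : ι → ℝ) (s : Finset ι)
    {t : ℝ} (ht : 0 ≤ t) (ε : ℝ) :
    P {ω | ε ≤ ∑ q ∈ s, a q * B q ω} ≤
      ENNReal.ofReal (Real.exp (-t * ε + ∑ q ∈ s, (Real.exp (t * a q) - 1) * ∫ ω, B q ω ∂P)) := by
  have h1 := measure_ge_le_exp_mul_mgf (μ := P) (X := ∑ q ∈ s, fun ω => a q * B q ω) ε ht
    (tv_integrable_exp_sum hmeas h01 hindep a s t)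
  have hset : {ω | ε ≤ ∑ q ∈ s, a q * B q ω} =
      {ω | ε ≤ (∑ q ∈ s, fun ω => a q * B q ω) ω} := by
    ext ω; simp [Finset.sum_apply]
  rw [hset, ← ENNReal.ofReal_toReal (measure_ne_top P _)]
  refine ENNReal.ofReal_le_ofReal (h1.trans ?_)
  rw [Real.exp_add]
  exact mul_le_mul_of_nonneg_left (tv_mgf_prod_le hmeas h01 hindep a s t) (Real.exp_pos _).le

end Chernoff
open Real

lemma exp_half_sq : Real.exp (1/2) * Real.exp (1/2) = Real.exp 1 := by
  rw [← Real.exp_add]; norm_num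

lemma exp_half_lb : (8:ℝ)/5 ≤ Real.exp (1/2) := by
  nlinarith [Real.exp_one_gt_d9, exp_half_sq, Real.exp_pos (1/2:ℝ)]

lemma exp_half_ub : Real.exp (1/2) ≤ 33/20 := by
  nlinarith [Real.exp_one_lt_d9, exp_half_sq, Real.exp_pos (1/2:ℝ)]

lemma exp_neg_half_ub : Real.exp (-(1/2)) ≤ 5/8 := by
  rw [Real.exp_neg]
  rw [inv_le_comm₀ (Real.exp_pos _) (by norm_num)]
  linarith [exp_half_lb]

/-- Chord bound: for `x ∈ [0,1]`, `exp (-(1/2) * x) ≤ 1 - (3/8) * x`. -/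
lemma exp_chord (x : ℝ) (hx0 : 0 ≤ x) (hx1 : x ≤ 1) :
    Real.exp (-(1/2) * x) ≤ 1 - (3/8) * x := by
  have h := convexOn_exp.2 (Set.mem_univ (0:ℝ)) (Set.mem_univ (-(1/2):ℝ))
    (by linarith : (0:ℝ) ≤ 1 - x) hx0 (by ring)
  simp only [smul_eq_mul, mul_zero, Real.exp_zero, mul_one] at h
  have h2 : 0 + x * (-(1/2)) = -(1/2) * x := by ring
  rw [h2] at h
  nlinarith [exp_neg_half_ub]


/-- A pair of random symmetric `n × n` matrices `(G, H)` with `{0,1}` entries and zero diagonal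
follows an `(α, d, δ)`-edge-correlated distribution with edge probabilities `p` and
correlation parameters `dd`. -/
structure EdgeCorrelated {Ω : Type*} [MeasurableSpace Ω] (P : Measure Ω) (n : ℕ)
    (G H : Ω → Fin n → Fin n → ℝ) (α d δ : ℝ) (p dd : Fin n → Fin n → ℝ) : Prop where
  measG : ∀ i j, Measurable fun ω => G ω i j
  measH : ∀ i j, Measurable fun ω => H ω i j
  symmG : ∀ ω i j, G ω i j = G ω j i
  symmH : ∀ ω i j, H ω i j = H ω j i
  diagG : ∀ ω i, G ω i i = 0
  diagH : ∀ ω i, H ω i i = 0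
  valG : ∀ ω i j, G ω i j = 0 ∨ G ω i j = 1
  valH : ∀ ω i j, H ω i j = 0 ∨ H ω i j = 1
  indep : iIndepFun
    (fun (q : {q : Fin n × Fin n // q.1 ≤ q.2}) ω =>
      (G ω q.1.1 q.1.2, H ω q.1.1 q.1.2)) P
  p_symm : ∀ i j, p i j = p j i
  p_diag : ∀ i, p i i = 0
  p_range : ∀ i j, p i j ∈ Set.Icc 0 (1 - α)
  dd_symm : ∀ i j, dd i j = dd j i
  dd_diag : ∀ i, dd i i = 0
  dd_range : ∀ i j, dd i j ∈ Set.Icc 0 δ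
  probG : ∀ i j, P {ω | G ω i j = 1} = ENNReal.ofReal (p i j)
  probH : ∀ i j, P {ω | H ω i j = 1} = ENNReal.ofReal (p i j)
  probGH : ∀ i j, P {ω | G ω i j = 1 ∧ H ω i j = 0} = ENNReal.ofReal (p i j * dd i j)
  probHG : ∀ i j, P {ω | G ω i j = 0 ∧ H ω i j = 1} = ENNReal.ofReal (p i j * dd i j)
  deg_lb : ∀ i, d ≤ ∑ j, p i j

section ECHelpers
variable {n : ℕ} {Ω : Type*} [MeasurableSpace Ω] {P : MeasureTheory.Measure Ω}
  [MeasureTheory.IsProbabilityMeasure P]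
  {G H : Ω → Fin n → Fin n → ℝ} {α d δ : ℝ} {p dd : Fin n → Fin n → ℝ}

lemma EdgeCorrelated.max01 (ec : EdgeCorrelated P n G H α d δ p dd) (i j : Fin n) (ω : Ω) :
    max (G ω i j) (H ω i j) = 0 ∨ max (G ω i j) (H ω i j) = 1 := by
  rcases ec.valG ω i j with h | h <;> rcases ec.valH ω i j with h' | h' <;> rw [h, h'] <;>
    simp [max_def] <;> norm_num

lemma EdgeCorrelated.max_mean (ec : EdgeCorrelated P n G H α d δ p dd) (i j : Fin n) :
    ∫ ω, max (G ω i j) (H ω i j) ∂P = p i j * (1 + dd i j) := by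
  have hmeas : Measurable fun ω => max (G ω i j) (H ω i j) := (ec.measG i j).max (ec.measH i j)
  rw [tv_integral hmeas (ec.max01 i j)]
  have hset : {ω | max (G ω i j) (H ω i j) = 1} =
      {ω | G ω i j = 1} ∪ {ω | G ω i j = 0 ∧ H ω i j = 1} := by
    ext ω
    simp only [Set.mem_setOf_eq, Set.mem_union]
    rcases ec.valG ω i j with h | h <;> rcases ec.valH ω i j with h' | h' <;> rw [h, h'] <;>
      simp [max_def] <;> norm_num
  have hmGH : MeasurableSet {ω | G ω i j = 0 ∧ H ω i j = 1} := by
    have : {ω | G ω i j = 0 ∧ H ω i j = 1} = {ω | G ω i j = 0} ∩ {ω | H ω i j = 1} := rfl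
    rw [this]
    exact (ec.measG i j (measurableSet_singleton 0)).inter (ec.measH i j (measurableSet_singleton 1))
  have hdisj : Disjoint {ω | G ω i j = 1} {ω | G ω i j = 0 ∧ H ω i j = 1} := by
    rw [Set.disjoint_left]
    intro ω h1 h2
    rw [Set.mem_setOf_eq] at h1
    rw [h2.1] at h1
    exact zero_ne_one h1
  have hp0 := (ec.p_range i j).1
  have hdd0 := (ec.dd_range i j).1
  rw [hset, MeasureTheory.measure_union hdisj hmGH, ec.probG, ec.probHG,
    ← ENNReal.ofReal_add hp0 (mul_nonneg hp0 hdd0), ENNReal.toReal_ofReal (by nlinarith)]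
  ring

end ECHelpers

/-- The sorted-pair map sending `ℓ` to the index of the edge `{i, ℓ}`. -/
def epair {n : ℕ} (i ℓ : Fin n) : {q : Fin n × Fin n // q.1 ≤ q.2} :=
  if h : ℓ ≤ i then ⟨(ℓ, i), h⟩ else ⟨(i, ℓ), le_of_not_ge h⟩

lemma epair_inj {n : ℕ} (i : Fin n) : Function.Injective (epair i) := by
  intro a b hab
  unfold epair at hab
  split_ifs at hab with h1 h2 h2 <;>
    simp only [Subtype.mk.injEq, Prod.mk.injEq] at hab
  · exact hab.1
  · exact absurd hab.2.ge h2
  · exact absurd hab.2.le h1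
  · exact hab.2

lemma epair_weight {n : ℕ} (i : Fin n) (w : Fin n → ℝ) (ℓ : Fin n) (h : ℓ ≠ i) :
    (if (epair i ℓ).val.1 = i then w (epair i ℓ).val.2 else w (epair i ℓ).val.1) = w ℓ := by
  unfold epair
  by_cases h1 : ℓ ≤ i
  · rw [dif_pos h1]
    show (if ℓ = i then w i else w ℓ) = w ℓ
    rw [if_neg h]
  · rw [dif_neg h1]
    show (if i = i then w ℓ else w i) = w ℓ
    rw [if_pos rfl]

lemma epair_max {n : ℕ} {Ω : Type*} [MeasurableSpace Ω] {P : MeasureTheory.Measure Ω}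
    {G H : Ω → Fin n → Fin n → ℝ} {α d δ : ℝ} {p dd : Fin n → Fin n → ℝ}
    (ec : EdgeCorrelated P n G H α d δ p dd) (i ℓ : Fin n) (ω : Ω) :
    max (G ω (epair i ℓ).val.1 (epair i ℓ).val.2) (H ω (epair i ℓ).val.1 (epair i ℓ).val.2) =
      max (G ω i ℓ) (H ω i ℓ) := by
  unfold epair
  split_ifs with h
  · simp only
    rw [ec.symmG ω ℓ i, ec.symmH ω ℓ i]
  · rfl

set_option maxHeartbeats 1000000 in
/-- Proposition 4.3 (true pair, first round of conditioning): the event `Γ^t` has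
probability at least `1 - C exp(-c' (log n)²)` whenever `d ≳ (log n)²` and
`δ ≲ (log n)⁻²`. -/
theorem true_event_prob (α : ℝ) (hα : α ∈ Set.Ioo (0:ℝ) 1) :
    ∃ c c'' c' C : ℝ, 0 < c ∧ 0 < c'' ∧ 0 < c' ∧ 0 < C ∧
      ∀ (n : ℕ) (Ω : Type) (_ : MeasurableSpace Ω) (P : Measure Ω),
        IsProbabilityMeasure P →
        ∀ (G H : Ω → Fin n → Fin n → ℝ) (d δ : ℝ) (p dd : Fin n → Fin n → ℝ),
          EdgeCorrelated P n G H α d δ p dd →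
          c * (Real.log n) ^ 2 ≤ d →
          δ ≤ c'' * ((Real.log n) ^ 2)⁻¹ →
          ∀ i : Fin n,
            ENNReal.ofReal (1 - C * Real.exp (-c' * (Real.log n) ^ 2)) ≤
              P {ω |
                (∀ j : Fin n,
                  α / 2 * (∑ ℓ, p j ℓ) ≤
                    ∑ ℓ ∈ Finset.univ \ {i}, p j ℓ * (1 - max (G ω i ℓ) (H ω i ℓ))) ∧
                (1 / 2 * (∑ ℓ, p i ℓ) ≤
                  ∑ j ∈ Finset.univ \ {i}, max (G ω i j) (H ω i j)) ∧
                (∑ j ∈ Finset.univ \ {i}, max (G ω i j) (H ω i j) ≤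
                  2 * (∑ ℓ, p i ℓ))} := by
  obtain ⟨hα0, hα1⟩ := hα
  set κ : ℝ := min (α/16) (1/40) with hκdef
  have hκpos : 0 < κ := lt_min (by linarith) (by norm_num)
  have hκ40 : κ ≤ 1/40 := min_le_right _ _
  have hκα : κ ≤ α/16 := min_le_left _ _
  refine ⟨4/κ, α/8, 1, 2 * Real.exp 1, by positivity, by linarith, one_pos, by positivity, ?_⟩
  intro n Ω mΩ P hP G H d δ p dd ec hd hδ i
  by_cases hLsmall : (Real.log n)^2 ≤ 1
  · have h1 : Real.exp (-1 : ℝ) ≤ Real.exp (-1 * (Real.log n)^2) :=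
      Real.exp_le_exp.2 (by nlinarith)
    have h2 : Real.exp 1 * Real.exp (-1 : ℝ) = 1 := by rw [← Real.exp_add]; norm_num
    have h3 : 1 - 2 * Real.exp 1 * Real.exp (-1 * (Real.log n)^2) ≤ 0 := by
      nlinarith [Real.exp_pos (1:ℝ)]
    rw [ENNReal.ofReal_of_nonpos h3]
    exact zero_le
  push_neg at hLsmall
  set L : ℝ := (Real.log n)^2 with hLdef
  have hlog0 : 0 ≤ Real.log n := by
    rcases Nat.eq_zero_or_pos n with h | h
    · simp [h]
    · exact Real.log_nonneg (by exact_mod_cast h)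
  have hlog1 : 1 ≤ Real.log n := by nlinarith
  have hlogL : Real.log n ≤ L := by nlinarith
  have hnpos : 0 < n := by
    rcases Nat.eq_zero_or_pos n with h | h
    · exfalso
      rw [hLdef, h] at hLsmall
      simp at hLsmall
      linarith
    · exact h
  have hnL : (n : ℝ) ≤ Real.exp L := by
    calc (n : ℝ) = Real.exp (Real.log n) := (Real.exp_log (by exact_mod_cast hnpos)).symm
    _ ≤ Real.exp L := Real.exp_le_exp.2 hlogL
  have hcL : 4/κ ≤ 4/κ * L := le_mul_of_one_le_right (by positivity) hLsmall.le
  have hd160 : 160 ≤ d := by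
    have h4 : (160:ℝ) ≤ 4/κ := by rw [le_div_iff₀ hκpos]; linarith
    linarith
  have hκd : 4 * L ≤ κ * d := by
    have h5 : κ * (4/κ * L) = 4 * L := by field_simp
    nlinarith [mul_le_mul_of_nonneg_left hd hκpos.le]
  have hδ8 : δ ≤ α/8 := by
    have hLpos : (0:ℝ) < L := by linarith
    have hLinv : L⁻¹ ≤ 1 := by
      rw [inv_le_one_iff₀]
      right; linarith
    nlinarith [hδ]
  have hδ0 : 0 ≤ δ := by
    have h6 := (ec.dd_range i i).2
    rw [ec.dd_diag i] at h6
    exact h6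
  -- edge variables
  set M : {q : Fin n × Fin n // q.1 ≤ q.2} → Ω → ℝ :=
    fun q ω => max (G ω q.val.1 q.val.2) (H ω q.val.1 q.val.2) with hMdef
  have hMmeas : ∀ q, Measurable (M q) := fun q => (ec.measG _ _).max (ec.measH _ _)
  have hM01 : ∀ q ω, M q ω = 0 ∨ M q ω = 1 := fun q ω => ec.max01 _ _ ω
  have hMindep : iIndepFun M P :=
    ec.indep.comp (fun q (x : ℝ × ℝ) => max x.1 x.2) (fun q => measurable_fst.max measurable_snd)
  have hBmeas : ∀ q, Measurable (fun ω => 1 - M q ω) := fun q => measurable_const.sub (hMmeas q)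
  have hB01 : ∀ q ω, (1 - M q ω) = 0 ∨ (1 - M q ω) = 1 := fun q ω => by
    rcases hM01 q ω with h | h <;> rw [h] <;> norm_num
  have hBindep : iIndepFun (fun q ω => 1 - M q ω) P :=
    hMindep.comp (fun q x => 1 - x) (fun q => measurable_const.sub measurable_id)
  have hMe : ∀ ℓ : Fin n, M (epair i ℓ) = fun ω => max (G ω i ℓ) (H ω i ℓ) := fun ℓ =>
    funext fun ω => epair_max ec i ℓ ω
  have hMmean : ∀ ℓ : Fin n, ∫ ω, M (epair i ℓ) ω ∂P = p i ℓ * (1 + dd i ℓ) := fun ℓ => by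
    rw [hMe ℓ]
    exact ec.max_mean i ℓ
  have hBmean : ∀ ℓ : Fin n, ∫ ω, (1 - M (epair i ℓ) ω) ∂P = 1 - p i ℓ * (1 + dd i ℓ) := fun ℓ => by
    rw [integral_sub (integrable_const 1) (tv_integrable (hMmeas _) (hM01 _)), integral_const,
      hMmean ℓ]
    simp
  -- parameter bounds
  have hp0 : ∀ a b, 0 ≤ p a b := fun a b => (ec.p_range a b).1
  have hp1 : ∀ a b, p a b ≤ 1 := fun a b => le_trans (ec.p_range a b).2 (by linarith)
  have hpα : ∀ a b, p a b ≤ 1 - α := fun a b => (ec.p_range a b).2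
  have hdd0 : ∀ a b, 0 ≤ dd a b := fun a b => (ec.dd_range a b).1
  have hddδ : ∀ a b, dd a b ≤ δ := fun a b => (ec.dd_range a b).2
  have hμlb : ∀ ℓ, p i ℓ ≤ p i ℓ * (1 + dd i ℓ) := fun ℓ => by nlinarith [hp0 i ℓ, hdd0 i ℓ]
  have hμub : ∀ ℓ, p i ℓ * (1 + dd i ℓ) ≤ 9/8 * p i ℓ := fun ℓ => by
    nlinarith [hp0 i ℓ, hddδ i ℓ, hdd0 i ℓ]
  have hmlb : ∀ ℓ, 7*α/8 ≤ 1 - p i ℓ * (1 + dd i ℓ) := fun ℓ => by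
    nlinarith [hp0 i ℓ, hpα i ℓ, hdd0 i ℓ, hddδ i ℓ,
      mul_le_mul (hpα i ℓ) (le_trans (hddδ i ℓ) hδ8) (hdd0 i ℓ) (by linarith)]
  -- reindexing
  set T : Finset {q : Fin n × Fin n // q.1 ≤ q.2} := (Finset.univ \ {i}).image (epair i) with hTdef
  have hre : ∀ (Ψ : {q : Fin n × Fin n // q.1 ≤ q.2} → ℝ),
      ∑ q ∈ T, Ψ q = ∑ ℓ ∈ Finset.univ \ {i}, Ψ (epair i ℓ) := fun Ψ =>
    Finset.sum_image (fun x _ y _ h => epair_inj i h)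
  have hDsum : ∀ j : Fin n, ∑ ℓ ∈ Finset.univ \ {i}, p j ℓ = (∑ ℓ, p j ℓ) - p j i := by
    intro j
    have h := Finset.sum_sdiff (f := p j) (Finset.subset_univ ({i} : Finset (Fin n)))
    rw [Finset.sum_singleton] at h
    linarith
  -- tail bounds
  have tail1 : ∀ j : Fin n,
      P {ω | ∑ ℓ ∈ Finset.univ \ {i}, p j ℓ * (1 - max (G ω i ℓ) (H ω i ℓ)) ≤
          α/2 * (∑ ℓ, p j ℓ)} ≤ ENNReal.ofReal (Real.exp (-(κ * d))) := by
    intro j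
    have hch := tv_chernoff_lower hBmeas hB01 hBindep
      (fun q => if q.val.1 = i then p j q.val.2 else p j q.val.1) T
      (by norm_num : -(1/2 : ℝ) ≤ 0) (α/2 * (∑ ℓ, p j ℓ))
    have hsum : ∀ ω, ∑ q ∈ T, (if q.val.1 = i then p j q.val.2 else p j q.val.1) * (1 - M q ω)
        = ∑ ℓ ∈ Finset.univ \ {i}, p j ℓ * (1 - max (G ω i ℓ) (H ω i ℓ)) := by
      intro ω
      rw [hre fun q => (if q.val.1 = i then p j q.val.2 else p j q.val.1) * (1 - M q ω)]
      refine Finset.sum_congr rfl fun ℓ hℓ => ?_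
      have hℓi : ℓ ≠ i := by
        rw [Finset.mem_sdiff, Finset.mem_singleton] at hℓ
        exact hℓ.2
      rw [epair_weight i (p j) ℓ hℓi, hMe ℓ]
    have hsetEq : {ω | ∑ q ∈ T, (if q.val.1 = i then p j q.val.2 else p j q.val.1) * (1 - M q ω)
          ≤ α/2 * (∑ ℓ, p j ℓ)}
        = {ω | ∑ ℓ ∈ Finset.univ \ {i}, p j ℓ * (1 - max (G ω i ℓ) (H ω i ℓ))
          ≤ α/2 * (∑ ℓ, p j ℓ)} := by
      ext ω
      rw [Set.mem_setOf_eq, Set.mem_setOf_eq, hsum ω]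
    rw [hsetEq] at hch
    refine hch.trans (ENNReal.ofReal_le_ofReal (Real.exp_le_exp.2 ?_))
    have hexpsum : ∑ q ∈ T, (Real.exp (-(1/2) * (if q.val.1 = i then p j q.val.2 else p j q.val.1)) - 1)
          * ∫ ω, (1 - M q ω) ∂P
        = ∑ ℓ ∈ Finset.univ \ {i}, (Real.exp (-(1/2) * p j ℓ) - 1) * (1 - p i ℓ * (1 + dd i ℓ)) := by
      rw [hre fun q => (Real.exp (-(1/2) * (if q.val.1 = i then p j q.val.2 else p j q.val.1)) - 1)
          * ∫ ω, (1 - M q ω) ∂P]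
      refine Finset.sum_congr rfl fun ℓ hℓ => ?_
      have hℓi : ℓ ≠ i := by
        rw [Finset.mem_sdiff, Finset.mem_singleton] at hℓ
        exact hℓ.2
      rw [epair_weight i (p j) ℓ hℓi, hBmean ℓ]
    rw [hexpsum]
    have hterm : ∀ ℓ ∈ Finset.univ \ {i},
        (Real.exp (-(1/2) * p j ℓ) - 1) * (1 - p i ℓ * (1 + dd i ℓ)) ≤ -(21/64 * α) * p j ℓ := by
      intro ℓ _
      have hc := exp_chord (p j ℓ) (hp0 j ℓ) (hp1 j ℓ)
      have hm := hmlb ℓ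
      have hm0 : 0 ≤ 1 - p i ℓ * (1 + dd i ℓ) := by nlinarith
      have h1 : Real.exp (-(1/2) * p j ℓ) - 1 ≤ -(3/8) * p j ℓ := by linarith
      have h2 : (Real.exp (-(1/2) * p j ℓ) - 1) * (1 - p i ℓ * (1 + dd i ℓ)) ≤
          (-(3/8) * p j ℓ) * (1 - p i ℓ * (1 + dd i ℓ)) := mul_le_mul_of_nonneg_right h1 hm0
      have h3 : (-(3/8) * p j ℓ) * (1 - p i ℓ * (1 + dd i ℓ)) ≤ (-(3/8) * p j ℓ) * (7*α/8) :=
        mul_le_mul_of_nonpos_left hm (by nlinarith [hp0 j ℓ])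
      nlinarith
    have hsle := Finset.sum_le_sum hterm
    have hs2 : ∑ ℓ ∈ Finset.univ \ {i}, -(21/64 * α) * p j ℓ
        = -(21/64 * α) * ((∑ ℓ, p j ℓ) - p j i) := by
      rw [← Finset.mul_sum, hDsum j]
    rw [hs2] at hsle
    have hDj := ec.deg_lb j
    have hpji := hp1 j i
    have hdpos : (0:ℝ) ≤ d := by linarith
    nlinarith [mul_le_mul_of_nonneg_left hDj hα0.le,
      mul_le_mul_of_nonneg_right hκα hdpos,
      mul_le_mul_of_nonneg_left hpji hα0.le,
      mul_le_mul_of_nonneg_left (le_trans hd160 hDj) hα0.le,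
      mul_le_mul_of_nonneg_left hd hα0.le]
  have tail2 : P {ω | ∑ j ∈ Finset.univ \ {i}, max (G ω i j) (H ω i j) ≤ 1/2 * (∑ ℓ, p i ℓ)}
      ≤ ENNReal.ofReal (Real.exp (-(κ * d))) := by
    have hch := tv_chernoff_lower hMmeas hM01 hMindep (fun _ => (1:ℝ)) T
      (by norm_num : -(1/2 : ℝ) ≤ 0) (1/2 * (∑ ℓ, p i ℓ))
    have hsum : ∀ ω, ∑ q ∈ T, (1:ℝ) * M q ω
        = ∑ j ∈ Finset.univ \ {i}, max (G ω i j) (H ω i j) := by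
      intro ω
      rw [hre fun q => (1:ℝ) * M q ω]
      exact Finset.sum_congr rfl fun ℓ hℓ => by rw [one_mul, hMe ℓ]
    have hsetEq : {ω | ∑ q ∈ T, (1:ℝ) * M q ω ≤ 1/2 * (∑ ℓ, p i ℓ)}
        = {ω | ∑ j ∈ Finset.univ \ {i}, max (G ω i j) (H ω i j) ≤ 1/2 * (∑ ℓ, p i ℓ)} := by
      ext ω
      rw [Set.mem_setOf_eq, Set.mem_setOf_eq, hsum ω]
    rw [hsetEq] at hch
    refine hch.trans (ENNReal.ofReal_le_ofReal (Real.exp_le_exp.2 ?_))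
    have hexpsum : ∑ q ∈ T, (Real.exp (-(1/2) * 1) - 1) * ∫ ω, M q ω ∂P
        = ∑ ℓ ∈ Finset.univ \ {i}, (Real.exp (-(1/2) * 1) - 1) * (p i ℓ * (1 + dd i ℓ)) := by
      rw [hre fun q => (Real.exp (-(1/2) * 1) - 1) * ∫ ω, M q ω ∂P]
      exact Finset.sum_congr rfl fun ℓ _ => by rw [hMmean ℓ]
    rw [hexpsum]
    have hterm : ∀ ℓ ∈ Finset.univ \ {i},
        (Real.exp (-(1/2) * 1) - 1) * (p i ℓ * (1 + dd i ℓ)) ≤ -(3/8) * p i ℓ := by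
      intro ℓ _
      have hc := exp_chord 1 (by norm_num) (by norm_num)
      have h1 := hμlb ℓ
      have h0 := hp0 i ℓ
      nlinarith [mul_le_mul_of_nonneg_right
        (show Real.exp (-(1/2) * 1) - 1 ≤ -(3/8) by linarith) (by linarith : (0:ℝ) ≤ p i ℓ * (1 + dd i ℓ))]
    have hsle := Finset.sum_le_sum hterm
    have hs2 : ∑ ℓ ∈ Finset.univ \ {i}, -(3/8) * p i ℓ
        = -(3/8) * ((∑ ℓ, p i ℓ) - p i i) := by
      rw [← Finset.mul_sum, hDsum i]
    rw [hs2, ec.p_diag i] at hsle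
    have hDi := ec.deg_lb i
    have hdpos : (0:ℝ) ≤ d := by linarith
    nlinarith [mul_le_mul_of_nonneg_right hκ40 hdpos]
  have tail3 : P {ω | 2 * (∑ ℓ, p i ℓ) ≤ ∑ j ∈ Finset.univ \ {i}, max (G ω i j) (H ω i j)}
      ≤ ENNReal.ofReal (Real.exp (-(κ * d))) := by
    have hch := tv_chernoff_upper hMmeas hM01 hMindep (fun _ => (1:ℝ)) T
      (by norm_num : (0:ℝ) ≤ 1/2) (2 * (∑ ℓ, p i ℓ))
    have hsum : ∀ ω, ∑ q ∈ T, (1:ℝ) * M q ω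
        = ∑ j ∈ Finset.univ \ {i}, max (G ω i j) (H ω i j) := by
      intro ω
      rw [hre fun q => (1:ℝ) * M q ω]
      exact Finset.sum_congr rfl fun ℓ hℓ => by rw [one_mul, hMe ℓ]
    have hsetEq : {ω | 2 * (∑ ℓ, p i ℓ) ≤ ∑ q ∈ T, (1:ℝ) * M q ω}
        = {ω | 2 * (∑ ℓ, p i ℓ) ≤ ∑ j ∈ Finset.univ \ {i}, max (G ω i j) (H ω i j)} := by
      ext ω
      rw [Set.mem_setOf_eq, Set.mem_setOf_eq, hsum ω]
    rw [hsetEq] at hch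
    refine hch.trans (ENNReal.ofReal_le_ofReal (Real.exp_le_exp.2 ?_))
    have hexpsum : ∑ q ∈ T, (Real.exp ((1/2) * 1) - 1) * ∫ ω, M q ω ∂P
        = ∑ ℓ ∈ Finset.univ \ {i}, (Real.exp ((1/2) * 1) - 1) * (p i ℓ * (1 + dd i ℓ)) := by
      rw [hre fun q => (Real.exp ((1/2) * 1) - 1) * ∫ ω, M q ω ∂P]
      exact Finset.sum_congr rfl fun ℓ _ => by rw [hMmean ℓ]
    rw [hexpsum]
    have hterm : ∀ ℓ ∈ Finset.univ \ {i},
        (Real.exp ((1/2) * 1) - 1) * (p i ℓ * (1 + dd i ℓ)) ≤ (13/20) * (9/8 * p i ℓ) := by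
      intro ℓ _
      have hub := exp_half_ub
      have h1 := hμub ℓ
      have h2 := hμlb ℓ
      have h0 := hp0 i ℓ
      have he1 : Real.exp ((1/2) * 1) - 1 ≤ 13/20 := by
        rw [show ((1:ℝ)/2) * 1 = 1/2 by norm_num]
        linarith
      have he0 : (0:ℝ) ≤ Real.exp ((1/2) * 1) - 1 := by
        nlinarith [Real.add_one_le_exp ((1:ℝ)/2 * 1)]
      nlinarith
    have hsle := Finset.sum_le_sum hterm
    have hs2' : ∑ ℓ ∈ Finset.univ \ {i}, (117/160) * p i ℓ
        = (117/160) * ((∑ ℓ, p i ℓ) - p i i) := by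
      rw [← Finset.mul_sum, hDsum i]
    have hsle2 : ∑ ℓ ∈ Finset.univ \ {i}, (Real.exp ((1/2) * 1) - 1) * (p i ℓ * (1 + dd i ℓ))
        ≤ (117/160) * ((∑ ℓ, p i ℓ) - p i i) := by
      rw [← hs2']
      refine le_trans hsle (le_of_eq (Finset.sum_congr rfl fun ℓ _ => by ring))
    rw [ec.p_diag i] at hsle2
    have hDi := ec.deg_lb i
    have hdpos : (0:ℝ) ≤ d := by linarith
    nlinarith [mul_le_mul_of_nonneg_right hκ40 hdpos]
  -- assembly
  have hmeasS1 : ∀ j : Fin n,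
      Measurable fun ω => ∑ ℓ ∈ Finset.univ \ {i}, p j ℓ * (1 - max (G ω i ℓ) (H ω i ℓ)) :=
    fun j => Finset.measurable_sum _ fun ℓ _ =>
      (measurable_const.sub ((ec.measG i ℓ).max (ec.measH i ℓ))).const_mul (p j ℓ)
  have hmeasS2 : Measurable fun ω => ∑ j ∈ Finset.univ \ {i}, max (G ω i j) (H ω i j) :=
    Finset.measurable_sum _ fun j _ => (ec.measG i j).max (ec.measH i j)
  set Γ : Set Ω := {ω |
      (∀ j : Fin n,
        α / 2 * (∑ ℓ, p j ℓ) ≤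
          ∑ ℓ ∈ Finset.univ \ {i}, p j ℓ * (1 - max (G ω i ℓ) (H ω i ℓ))) ∧
      (1 / 2 * (∑ ℓ, p i ℓ) ≤
        ∑ j ∈ Finset.univ \ {i}, max (G ω i j) (H ω i j)) ∧
      (∑ j ∈ Finset.univ \ {i}, max (G ω i j) (H ω i j) ≤
        2 * (∑ ℓ, p i ℓ))} with hΓdef
  have hΓmeas : MeasurableSet Γ := by
    rw [hΓdef]
    have hrw : {ω |
        (∀ j : Fin n,
          α / 2 * (∑ ℓ, p j ℓ) ≤
            ∑ ℓ ∈ Finset.univ \ {i}, p j ℓ * (1 - max (G ω i ℓ) (H ω i ℓ))) ∧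
        (1 / 2 * (∑ ℓ, p i ℓ) ≤
          ∑ j ∈ Finset.univ \ {i}, max (G ω i j) (H ω i j)) ∧
        (∑ j ∈ Finset.univ \ {i}, max (G ω i j) (H ω i j) ≤
          2 * (∑ ℓ, p i ℓ))} =
        (⋂ j : Fin n, {ω | α / 2 * (∑ ℓ, p j ℓ) ≤
            ∑ ℓ ∈ Finset.univ \ {i}, p j ℓ * (1 - max (G ω i ℓ) (H ω i ℓ))}) ∩
        ({ω | 1 / 2 * (∑ ℓ, p i ℓ) ≤ ∑ j ∈ Finset.univ \ {i}, max (G ω i j) (H ω i j)} ∩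
         {ω | ∑ j ∈ Finset.univ \ {i}, max (G ω i j) (H ω i j) ≤ 2 * (∑ ℓ, p i ℓ)}) := by
      ext ω
      simp only [Set.mem_setOf_eq, Set.mem_inter_iff, Set.mem_iInter]
    rw [hrw]
    exact (MeasurableSet.iInter fun j =>
        measurableSet_le measurable_const (hmeasS1 j)).inter
      ((measurableSet_le measurable_const hmeasS2).inter
        (measurableSet_le hmeasS2 measurable_const))
  have hsub : Γᶜ ⊆
      (⋃ j : Fin n, {ω | ∑ ℓ ∈ Finset.univ \ {i}, p j ℓ * (1 - max (G ω i ℓ) (H ω i ℓ)) ≤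
          α/2 * (∑ ℓ, p j ℓ)}) ∪
      ({ω | ∑ j ∈ Finset.univ \ {i}, max (G ω i j) (H ω i j) ≤ 1/2 * (∑ ℓ, p i ℓ)} ∪
       {ω | 2 * (∑ ℓ, p i ℓ) ≤ ∑ j ∈ Finset.univ \ {i}, max (G ω i j) (H ω i j)}) := by
    intro ω hω
    simp only [Set.mem_compl_iff, hΓdef, Set.mem_setOf_eq, not_and_or, not_forall, not_le] at hω
    rcases hω with ⟨j, hj⟩ | h | h
    · exact Or.inl (Set.mem_iUnion.2 ⟨j, le_of_lt hj⟩)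
    · exact Or.inr (Or.inl (le_of_lt h))
    · exact Or.inr (Or.inr (le_of_lt h))
  have hPc : P Γᶜ ≤ ENNReal.ofReal (((n:ℝ) + 2) * Real.exp (-(κ * d))) := by
    refine (measure_mono hsub).trans ((measure_union_le _ _).trans ?_)
    have h1 : P (⋃ j : Fin n, {ω | ∑ ℓ ∈ Finset.univ \ {i},
          p j ℓ * (1 - max (G ω i ℓ) (H ω i ℓ)) ≤ α/2 * (∑ ℓ, p j ℓ)})
        ≤ (n : ENNReal) * ENNReal.ofReal (Real.exp (-(κ * d))) := by
      refine (measure_iUnion_le _).trans ?_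
      rw [tsum_fintype]
      calc ∑ j : Fin n, P {ω | ∑ ℓ ∈ Finset.univ \ {i},
            p j ℓ * (1 - max (G ω i ℓ) (H ω i ℓ)) ≤ α/2 * (∑ ℓ, p j ℓ)}
          ≤ ∑ _j : Fin n, ENNReal.ofReal (Real.exp (-(κ * d))) :=
            Finset.sum_le_sum fun j _ => tail1 j
        _ = (n : ENNReal) * ENNReal.ofReal (Real.exp (-(κ * d))) := by
            rw [Finset.sum_const, Finset.card_univ, Fintype.card_fin, nsmul_eq_mul]
    have h2 := (measure_union_le
      {ω | ∑ j ∈ Finset.univ \ {i}, max (G ω i j) (H ω i j) ≤ 1/2 * (∑ ℓ, p i ℓ)}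
      {ω | 2 * (∑ ℓ, p i ℓ) ≤ ∑ j ∈ Finset.univ \ {i}, max (G ω i j) (H ω i j)}).trans
      (add_le_add tail2 tail3)
    refine (add_le_add h1 h2).trans (le_of_eq ?_)
    rw [← ENNReal.ofReal_natCast n, ← ENNReal.ofReal_mul (Nat.cast_nonneg n),
      ← ENNReal.ofReal_add (by positivity) (by positivity),
      ← ENNReal.ofReal_add (by positivity) (by positivity)]
    congr 1
    ring
  have hfinal : ((n:ℝ) + 2) * Real.exp (-(κ * d)) ≤ 2 * Real.exp 1 * Real.exp (-1 * L) := by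
    have h1 : Real.exp (-(κ * d)) ≤ Real.exp (-(4 * L)) := Real.exp_le_exp.2 (by linarith)
    have h2 : (2:ℝ) ≤ Real.exp L := by
      nlinarith [Real.exp_one_gt_d9, Real.exp_le_exp.2 hLsmall.le]
    have h3 : ((n:ℝ) + 2) ≤ 3 * Real.exp L := by nlinarith
    have h4 : ((n:ℝ) + 2) * Real.exp (-(κ * d)) ≤ 3 * Real.exp L * Real.exp (-(4*L)) :=
      mul_le_mul h3 h1 (Real.exp_pos _).le (by positivity)
    have h5 : Real.exp L * Real.exp (-(4*L)) = Real.exp (-1 * L) * Real.exp (-(2*L)) := by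
      rw [← Real.exp_add, ← Real.exp_add]
      congr 1
      ring
    have h6 : Real.exp (-(2*L)) ≤ 1 := by
      calc Real.exp (-(2*L)) ≤ Real.exp 0 := Real.exp_le_exp.2 (by linarith)
        _ = 1 := Real.exp_zero
    nlinarith [Real.exp_pos (-1 * L), Real.exp_pos (-(2*L)), Real.exp_one_gt_d9,
      mul_le_mul_of_nonneg_left h6 (by positivity : (0:ℝ) ≤ 3 * Real.exp (-1 * L))]
  have hb1 : P Γᶜ ≤ ENNReal.ofReal (2 * Real.exp 1 * Real.exp (-1 * L)) :=
    hPc.trans (ENNReal.ofReal_le_ofReal hfinal)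
  have hPΓ : P Γ = 1 - P Γᶜ := by
    have h := prob_compl_eq_one_sub (μ := P) hΓmeas.compl
    rw [compl_compl] at h
    exact h
  calc ENNReal.ofReal (1 - 2 * Real.exp 1 * Real.exp (-1 * L))
      = 1 - ENNReal.ofReal (2 * Real.exp 1 * Real.exp (-1 * L)) := by
        rw [ENNReal.ofReal_sub 1 (by positivity), ENNReal.ofReal_one]
    _ ≤ 1 - P Γᶜ := tsub_le_tsub_left hb1 1
    _ = P Γ := hPΓ.symm
end

section
/- Let L ≥ 5 be an integer, and for t ∈ [0,1) let I_t = ∪_{m∈ℤ}[t+m−1/L, t+m+1/L]. Then for any two real numbers a and b, the Lebesgue measure of the set {t ∈ [0,1) : a ∈ I_t and b ∈ I_t} equals max{0, 2/L − cycd(a,b)}, where cycd(a,b) := min_{m∈ℤ} |a − b − m|; equivalently it equals g(a−b) where g(x) := max{0, 2/L − min_{m∈ℤ}|x − m|}. -/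
open MeasureTheory


/-- Membership in the bin `I_t = ⋃_{m ∈ ℤ} [t + m - 1/L, t + m + 1/L]`. -/
def inBin (L : ℕ) (t x : ℝ) : Prop :=
  ∃ m : ℤ, t + m - 1 / L ≤ x ∧ x ≤ t + m + 1 / L

private lemma cycd_eq (a b : ℝ) :
    (⨅ m : ℤ, |a - b - (m : ℝ)|) = min (Int.fract (b - a)) (1 - Int.fract (b - a)) := by
  set d := Int.fract (b - a) with hd
  have hd0 : 0 ≤ d := Int.fract_nonneg _
  have hd1 : d < 1 := Int.fract_lt_one _
  have hbd : BddBelow (Set.range fun m : ℤ => |a - b - (m : ℝ)|) :=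
    ⟨0, by rintro y ⟨m, rfl⟩; positivity⟩
  have hfloor : (⌊b - a⌋ : ℝ) = (b - a) - d := (Int.self_sub_fract (b - a)).symm
  apply le_antisymm
  · apply le_min
    · have h := ciInf_le hbd (-⌊b - a⌋)
      have he : a - b - ((-⌊b - a⌋ : ℤ) : ℝ) = -d := by push_cast; rw [hfloor]; ring
      rwa [he, abs_neg, abs_of_nonneg hd0] at h
    · have h := ciInf_le hbd (-⌊b - a⌋ - 1)
      have he : a - b - ((-⌊b - a⌋ - 1 : ℤ) : ℝ) = 1 - d := by push_cast; rw [hfloor]; ring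
      rwa [he, abs_of_nonneg (by linarith)] at h
  · refine le_ciInf fun m => ?_
    have hval : a - b - (m : ℝ) = -(d + (⌊b - a⌋ + m : ℤ)) := by push_cast; rw [hfloor]; ring
    rw [hval, abs_neg]
    rcases le_or_gt 0 (⌊b - a⌋ + m) with hk | hk
    · have : (0 : ℝ) ≤ ((⌊b - a⌋ + m : ℤ) : ℝ) := by exact_mod_cast hk
      rw [abs_of_nonneg (by linarith)]
      exact le_trans (min_le_left _ _) (by linarith)
    · have h1 : (⌊b - a⌋ + m : ℤ) ≤ -1 := by omega
      have : ((⌊b - a⌋ + m : ℤ) : ℝ) ≤ -1 := by exact_mod_cast h1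
      refine le_trans (min_le_right _ _) (le_trans (by linarith) (neg_le_abs _))

private lemma int_shift (ε x : ℝ) (k : ℤ) :
    (∃ m : ℤ, |x - m| ≤ ε) ↔ (∃ m : ℤ, |x - k - m| ≤ ε) := by
  constructor
  · rintro ⟨m, hm⟩
    exact ⟨m - k, by rw [show x - k - ((m - k : ℤ) : ℝ) = x - m by push_cast; ring]; exact hm⟩
  · rintro ⟨m, hm⟩
    exact ⟨m + k, by rw [show x - ((m + k : ℤ) : ℝ) = x - k - m by push_cast; ring]; exact hm⟩

private lemma int_flip (ε x : ℝ) (k : ℤ) :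
    (∃ m : ℤ, |x - m| ≤ ε) ↔ (∃ m : ℤ, |((k : ℝ) - x) - m| ≤ ε) := by
  constructor
  · rintro ⟨m, hm⟩
    refine ⟨k - m, ?_⟩
    rw [show (k : ℝ) - x - ((k - m : ℤ) : ℝ) = -(x - m) by push_cast; ring, abs_neg]
    exact hm
  · rintro ⟨m, hm⟩
    refine ⟨k - m, ?_⟩
    rw [show x - ((k - m : ℤ) : ℝ) = -((k : ℝ) - x - m) by push_cast; ring, abs_neg]
    exact hm

private lemma vol_shift (E : Set ℝ) (hE : MeasurableSet E)
    (hper : ∀ x : ℝ, x + 1 ∈ E ↔ x ∈ E) (α : ℝ) (h0 : 0 ≤ α) (h1 : α ≤ 1) :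
    volume (E ∩ Set.Ico (-α) (1 - α)) = volume (E ∩ Set.Ico 0 1) := by
  have hsplit1 : E ∩ Set.Ico (-α) (1 - α) = (E ∩ Set.Ico (-α) 0) ∪ (E ∩ Set.Ico 0 (1 - α)) := by
    rw [← Set.inter_union_distrib_left, Set.Ico_union_Ico_eq_Ico (by linarith) (by linarith)]
  have hsplit2 : E ∩ Set.Ico 0 1 = (E ∩ Set.Ico 0 (1 - α)) ∪ (E ∩ Set.Ico (1 - α) 1) := by
    rw [← Set.inter_union_distrib_left, Set.Ico_union_Ico_eq_Ico (by linarith) (by linarith)]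
  have hpre : E ∩ Set.Ico (-α) 0 = (fun x => x + 1) ⁻¹' (E ∩ Set.Ico (1 - α) 1) := by
    ext x
    simp only [Set.mem_inter_iff, Set.mem_preimage, Set.mem_Ico, hper]
    constructor
    · rintro ⟨h, h2, h3⟩; exact ⟨h, by linarith, by linarith⟩
    · rintro ⟨h, h2, h3⟩; exact ⟨h, by linarith, by linarith⟩
  have hm1 : volume (E ∩ Set.Ico (-α) 0) = volume (E ∩ Set.Ico (1 - α) 1) := by
    rw [hpre]
    exact measure_preimage_add_right volume 1 _
  have hd1 : Disjoint (E ∩ Set.Ico (-α) 0) (E ∩ Set.Ico 0 (1 - α)) :=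
    Disjoint.mono Set.inter_subset_right Set.inter_subset_right
      (Set.Ico_disjoint_Ico_same)
  have hd2 : Disjoint (E ∩ Set.Ico 0 (1 - α)) (E ∩ Set.Ico (1 - α) 1) :=
    Disjoint.mono Set.inter_subset_right Set.inter_subset_right
      (Set.Ico_disjoint_Ico_same)
  rw [hsplit1, hsplit2, measure_union hd1 (hE.inter measurableSet_Ico),
    measure_union hd2 (hE.inter measurableSet_Ico), hm1, add_comm]

private lemma main_calc (ε d : ℝ) (hε : 0 < ε) (hε5 : ε ≤ 1 / 5) (hd0 : 0 ≤ d) (hd1 : d < 1) :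
    volume ({s : ℝ | (∃ m : ℤ, |s - m| ≤ ε) ∧ ∃ m : ℤ, |d - s - m| ≤ ε} ∩ Set.Ico 0 1)
      = ENNReal.ofReal (max 0 (2 * ε - min d (1 - d))) := by
  have hset0 : {s : ℝ | (∃ m : ℤ, |s - m| ≤ ε) ∧ ∃ m : ℤ, |d - s - m| ≤ ε} ∩ Set.Ico 0 1
      = {s : ℝ | (0 ≤ s ∧ s < 1) ∧ (s ≤ ε ∨ 1 - ε ≤ s) ∧
          ((d - ε ≤ s ∧ s ≤ d + ε) ∨ s ≤ d - 1 + ε ∨ d + 1 - ε ≤ s)} := by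
    ext s
    simp only [Set.mem_inter_iff, Set.mem_setOf_eq, Set.mem_Ico]
    constructor
    · rintro ⟨⟨⟨m1, hm1⟩, ⟨m2, hm2⟩⟩, hs0, hs1⟩
      rw [abs_le] at hm1 hm2
      refine ⟨⟨hs0, hs1⟩, ?_, ?_⟩
      · have hb1 : (0 : ℤ) ≤ m1 := by
          have h : (-1 : ℝ) < (m1 : ℝ) := by linarith [hm1.1]
          have : (-1 : ℤ) < m1 := by exact_mod_cast h
          omega
        have hb2 : m1 ≤ 1 := by
          have h : (m1 : ℝ) < 2 := by linarith [hm1.2]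
          have : m1 < (2 : ℤ) := by exact_mod_cast h
          omega
        interval_cases m1 <;> push_cast at hm1
        · left; linarith [hm1.2]
        · right; linarith [hm1.1]
      · have hb1 : (-1 : ℤ) ≤ m2 := by
          have h : (-2 : ℝ) < (m2 : ℝ) := by linarith [hm2.1]
          have : (-2 : ℤ) < m2 := by exact_mod_cast h
          omega
        have hb2 : m2 ≤ 1 := by
          have h : (m2 : ℝ) < 2 := by linarith [hm2.2]
          have : m2 < (2 : ℤ) := by exact_mod_cast h
          omega
        interval_cases m2 <;> push_cast at hm2
        · right; right; linarith [hm2.2]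
        · left; exact ⟨by linarith [hm2.2], by linarith [hm2.1]⟩
        · right; left; linarith [hm2.1]
    · rintro ⟨⟨hs0, hs1⟩, hA, hB⟩
      refine ⟨⟨?_, ?_⟩, hs0, hs1⟩
      · rcases hA with h | h
        · exact ⟨0, by rw [abs_le]; push_cast; constructor <;> linarith⟩
        · exact ⟨1, by rw [abs_le]; push_cast; constructor <;> linarith⟩
      · rcases hB with ⟨h1, h2⟩ | h | h
        · exact ⟨0, by rw [abs_le]; push_cast; constructor <;> linarith⟩
        · exact ⟨1, by rw [abs_le]; push_cast; constructor <;> linarith⟩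
        · exact ⟨-1, by rw [abs_le]; push_cast; constructor <;> linarith⟩
  rw [hset0]
  by_cases h1 : d ≤ ε
  · -- case 1 : set = Icc 0 ε ∪ Ico (d+1-ε) 1
    have hset : {s : ℝ | (0 ≤ s ∧ s < 1) ∧ (s ≤ ε ∨ 1 - ε ≤ s) ∧
          ((d - ε ≤ s ∧ s ≤ d + ε) ∨ s ≤ d - 1 + ε ∨ d + 1 - ε ≤ s)}
        = Set.Icc 0 ε ∪ Set.Ico (d + 1 - ε) 1 := by
      ext s
      simp only [Set.mem_setOf_eq, Set.mem_union, Set.mem_Icc, Set.mem_Ico]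
      constructor
      · rintro ⟨⟨hs0, hs1⟩, hA | hA, ⟨hB1, hB2⟩ | hB | hB⟩ <;>
          first
            | (left; constructor <;> linarith)
            | (right; constructor <;> linarith)
      · rintro (⟨hx, hy⟩ | ⟨hx, hy⟩)
        · exact ⟨⟨by linarith, by linarith⟩, Or.inl (by linarith),
            Or.inl ⟨by linarith, by linarith⟩⟩
        · exact ⟨⟨by linarith, by linarith⟩, Or.inr (by linarith),
            Or.inr (Or.inr (by linarith))⟩
    rw [hset, measure_union ?_ measurableSet_Ico, Real.volume_Icc, Real.volume_Ico,
      ← ENNReal.ofReal_add (by linarith) (by linarith)]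
    · congr 1
      rw [min_eq_left (by linarith), max_eq_right (by linarith)]
      ring
    · rw [Set.disjoint_left]
      rintro x ⟨hx0, hx1⟩ ⟨hy0, hy1⟩
      linarith
  · by_cases h2 : d ≤ 2 * ε
    · -- case 2 : set = Icc (d-ε) ε
      have hset : {s : ℝ | (0 ≤ s ∧ s < 1) ∧ (s ≤ ε ∨ 1 - ε ≤ s) ∧
            ((d - ε ≤ s ∧ s ≤ d + ε) ∨ s ≤ d - 1 + ε ∨ d + 1 - ε ≤ s)}
          = Set.Icc (d - ε) ε := by
        ext s
        simp only [Set.mem_setOf_eq, Set.mem_Icc]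
        constructor
        · rintro ⟨⟨hs0, hs1⟩, hA | hA, ⟨hB1, hB2⟩ | hB | hB⟩ <;>
            constructor <;> linarith
        · rintro ⟨hx, hy⟩
          exact ⟨⟨by linarith, by linarith⟩, Or.inl (by linarith),
            Or.inl ⟨by linarith, by linarith⟩⟩
      rw [hset, Real.volume_Icc]
      congr 1
      rw [min_eq_left (by linarith), max_eq_right (by linarith)]
      ring
    · by_cases h3 : d < 1 - 2 * ε
      · -- case 3 : empty
        have hset : {s : ℝ | (0 ≤ s ∧ s < 1) ∧ (s ≤ ε ∨ 1 - ε ≤ s) ∧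
              ((d - ε ≤ s ∧ s ≤ d + ε) ∨ s ≤ d - 1 + ε ∨ d + 1 - ε ≤ s)}
            = (∅ : Set ℝ) := by
          ext s
          simp only [Set.mem_setOf_eq, Set.mem_empty_iff_false, iff_false]
          rintro ⟨⟨hs0, hs1⟩, hA | hA, ⟨hB1, hB2⟩ | hB | hB⟩ <;> linarith
        rw [hset, measure_empty]
        rw [max_eq_left (by
          have : 2 * ε ≤ min d (1 - d) := le_min (by linarith) (by linarith)
          linarith), ENNReal.ofReal_zero]
      · by_cases h4 : d < 1 - ε
        · -- case 4 : Icc (1-ε) (d+ε)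
          have hset : {s : ℝ | (0 ≤ s ∧ s < 1) ∧ (s ≤ ε ∨ 1 - ε ≤ s) ∧
                ((d - ε ≤ s ∧ s ≤ d + ε) ∨ s ≤ d - 1 + ε ∨ d + 1 - ε ≤ s)}
              = Set.Icc (1 - ε) (d + ε) := by
            ext s
            simp only [Set.mem_setOf_eq, Set.mem_Icc]
            constructor
            · rintro ⟨⟨hs0, hs1⟩, hA | hA, ⟨hB1, hB2⟩ | hB | hB⟩ <;>
                constructor <;> linarith
            · rintro ⟨hx, hy⟩
              exact ⟨⟨by linarith, by linarith⟩, Or.inr (by linarith),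
                Or.inl ⟨by linarith, by linarith⟩⟩
          rw [hset, Real.volume_Icc]
          congr 1
          rw [min_eq_right (by linarith), max_eq_right (by linarith)]
          ring
        · -- case 5 : Icc 0 (d-1+ε) ∪ Ico (1-ε) 1
          have hset : {s : ℝ | (0 ≤ s ∧ s < 1) ∧ (s ≤ ε ∨ 1 - ε ≤ s) ∧
                ((d - ε ≤ s ∧ s ≤ d + ε) ∨ s ≤ d - 1 + ε ∨ d + 1 - ε ≤ s)}
              = Set.Icc 0 (d - 1 + ε) ∪ Set.Ico (1 - ε) 1 := by
            ext s
            simp only [Set.mem_setOf_eq, Set.mem_union, Set.mem_Icc, Set.mem_Ico]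
            constructor
            · rintro ⟨⟨hs0, hs1⟩, hA | hA, ⟨hB1, hB2⟩ | hB | hB⟩ <;>
                first
                  | (left; constructor <;> linarith)
                  | (right; constructor <;> linarith)
            · rintro (⟨hx, hy⟩ | ⟨hx, hy⟩)
              · exact ⟨⟨by linarith, by linarith⟩, Or.inl (by linarith),
                  Or.inr (Or.inl (by linarith))⟩
              · exact ⟨⟨by linarith, by linarith⟩, Or.inr (by linarith),
                  Or.inl ⟨by linarith, by linarith⟩⟩
          rw [hset, measure_union ?_ measurableSet_Ico, Real.volume_Icc, Real.volume_Ico,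
            ← ENNReal.ofReal_add (by linarith) (by linarith)]
          · congr 1
            rw [min_eq_right (by linarith), max_eq_right (by linarith)]
            ring
          · rw [Set.disjoint_left]
            rintro x ⟨hx0, hx1⟩ ⟨hy0, hy1⟩
            linarith

/-- Lemma 4.10: the Lebesgue measure of `{t ∈ [0,1) : a, b ∈ I_t}` equals
`g(a - b) = max {0, 2/L - cycd(a,b)}`, where `cycd(a,b) = min_{m ∈ ℤ} |a - b - m|`. -/
theorem measure_common_bins (L : ℕ) (hL : 5 ≤ L) (a b : ℝ) :
    volume {t : ℝ | t ∈ Set.Ico (0:ℝ) 1 ∧ inBin L t a ∧ inBin L t b} =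
      ENNReal.ofReal (max 0 (2 / L - ⨅ m : ℤ, |a - b - (m : ℝ)|)) := by
  have hL' : (5 : ℝ) ≤ (L : ℝ) := by exact_mod_cast hL
  set ε : ℝ := 1 / (L : ℝ) with hεdef
  have hLpos : (0 : ℝ) < L := by linarith
  have hε : 0 < ε := by rw [hεdef]; positivity
  have hε5 : ε ≤ 1 / 5 := by
    rw [hεdef, div_le_div_iff₀ hLpos (by norm_num)]; linarith
  set d := Int.fract (b - a) with hdd
  have hd0 : 0 ≤ d := Int.fract_nonneg _
  have hd1 : d < 1 := Int.fract_lt_one _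
  set α := Int.fract a with hαdef
  have hα0 : 0 ≤ α := Int.fract_nonneg _
  have hα1 : α < 1 := Int.fract_lt_one _
  have hfa : (⌊a⌋ : ℝ) = a - α := (Int.self_sub_fract a).symm
  have hfd : (⌊b - a⌋ : ℝ) = (b - a) - d := (Int.self_sub_fract (b - a)).symm
  set E : Set ℝ := {s : ℝ | (∃ m : ℤ, |s - (m : ℝ)| ≤ ε) ∧ ∃ m : ℤ, |d - s - (m : ℝ)| ≤ ε}
    with hEdef
  have hbin : ∀ t x : ℝ, inBin L t x ↔ ∃ m : ℤ, |x - t - (m : ℝ)| ≤ ε := by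
    intro t x
    constructor
    · rintro ⟨m, hm1, hm2⟩
      exact ⟨m, abs_le.mpr ⟨by linarith, by linarith⟩⟩
    · rintro ⟨m, hm⟩
      rw [abs_le] at hm
      exact ⟨m, by linarith [hm.1, hm.2], by linarith [hm.1, hm.2]⟩
  have key1 : ∀ s : ℝ, (∃ m : ℤ, |a - (s + α) - (m : ℝ)| ≤ ε) ↔ ∃ m : ℤ, |s - (m : ℝ)| ≤ ε := by
    intro s
    have heq : ∀ m : ℤ, a - (s + α) - (m : ℝ) = (⌊a⌋ : ℝ) - s - (m : ℝ) := fun m => by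
      rw [hfa]; ring
    simp only [heq]
    exact (int_flip ε s ⌊a⌋).symm
  have key2 : ∀ s : ℝ,
      (∃ m : ℤ, |b - (s + α) - (m : ℝ)| ≤ ε) ↔ ∃ m : ℤ, |d - s - (m : ℝ)| ≤ ε := by
    intro s
    have heq : ∀ m : ℤ, b - (s + α) - (m : ℝ) = d - s - ((m - ⌊b - a⌋ - ⌊a⌋ : ℤ) : ℝ) :=
      fun m => by push_cast; rw [hfa, hfd]; ring
    simp only [heq]
    constructor
    · rintro ⟨m, hm⟩; exact ⟨m - ⌊b - a⌋ - ⌊a⌋, hm⟩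
    · rintro ⟨m, hm⟩
      refine ⟨m + ⌊b - a⌋ + ⌊a⌋, ?_⟩
      rw [show (m + ⌊b - a⌋ + ⌊a⌋ - ⌊b - a⌋ - ⌊a⌋ : ℤ) = m by ring]
      exact hm
  have hpre : (fun s => s + α) ⁻¹' {t : ℝ | t ∈ Set.Ico (0 : ℝ) 1 ∧ inBin L t a ∧ inBin L t b}
      = E ∩ Set.Ico (-α) (1 - α) := by
    ext s
    simp only [Set.mem_preimage, Set.mem_setOf_eq, Set.mem_inter_iff, Set.mem_Ico, hbin, hEdef]
    constructor
    · rintro ⟨⟨hs0, hs1⟩, hA, hB⟩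
      exact ⟨⟨(key1 s).mp hA, (key2 s).mp hB⟩, by linarith, by linarith⟩
    · rintro ⟨⟨hA, hB⟩, hs0, hs1⟩
      exact ⟨⟨by linarith, by linarith⟩, (key1 s).mpr hA, (key2 s).mpr hB⟩
  have hEmeas : MeasurableSet E := by
    have hEeq : E = (⋃ m : ℤ, {s : ℝ | |s - (m : ℝ)| ≤ ε})
        ∩ ⋃ m : ℤ, {s : ℝ | |d - s - (m : ℝ)| ≤ ε} := by
      ext s
      simp only [hEdef, Set.mem_setOf_eq, Set.mem_inter_iff, Set.mem_iUnion]
    rw [hEeq]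
    exact (MeasurableSet.iUnion fun m =>
        measurableSet_le (measurable_id.sub measurable_const).abs measurable_const).inter
      (MeasurableSet.iUnion fun m =>
        measurableSet_le ((measurable_const.sub measurable_id).sub measurable_const).abs
          measurable_const)
  have hper : ∀ x : ℝ, x + 1 ∈ E ↔ x ∈ E := by
    intro x
    simp only [hEdef, Set.mem_setOf_eq]
    constructor
    · rintro ⟨⟨m, hm⟩, ⟨m2, hm2⟩⟩
      refine ⟨⟨m - 1, ?_⟩, ⟨m2 + 1, ?_⟩⟩
      · rw [show x - ((m - 1 : ℤ) : ℝ) = x + 1 - m by push_cast; ring]; exact hm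
      · rw [show d - x - ((m2 + 1 : ℤ) : ℝ) = d - (x + 1) - m2 by push_cast; ring]; exact hm2
    · rintro ⟨⟨m, hm⟩, ⟨m2, hm2⟩⟩
      refine ⟨⟨m + 1, ?_⟩, ⟨m2 - 1, ?_⟩⟩
      · rw [show x + 1 - ((m + 1 : ℤ) : ℝ) = x - m by push_cast; ring]; exact hm
      · rw [show d - (x + 1) - ((m2 - 1 : ℤ) : ℝ) = d - x - m2 by push_cast; ring]; exact hm2
  calc volume {t : ℝ | t ∈ Set.Ico (0 : ℝ) 1 ∧ inBin L t a ∧ inBin L t b}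
      = volume ((fun s => s + α) ⁻¹'
          {t : ℝ | t ∈ Set.Ico (0 : ℝ) 1 ∧ inBin L t a ∧ inBin L t b}) :=
        (measure_preimage_add_right volume α _).symm
    _ = volume (E ∩ Set.Ico (-α) (1 - α)) := by rw [hpre]
    _ = volume (E ∩ Set.Ico 0 1) := vol_shift E hEmeas hper α hα0 (le_of_lt hα1)
    _ = ENNReal.ofReal (max 0 (2 * ε - min d (1 - d))) := by
        rw [hEdef]; exact main_calc ε d hε hε5 hd0 hd1
    _ = ENNReal.ofReal (max 0 (2 / (L : ℝ) - ⨅ m : ℤ, |a - b - (m : ℝ)|)) := by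
        rw [cycd_eq a b, ← hdd, show (2 : ℝ) / (L : ℝ) = 2 * ε by rw [hεdef]; ring]
end

section
/- Let X_1,…,X_n be independent Bernoulli random variables with P[X_i = 1] = p_i, and let Y_1,…,Y_n be independent symmetric {−1,0,1} random variables with P[Y_i = 1] = P[Y_i = −1] = min{p_i, 1−p_i}. Then for every real number x, E|Σ_{i=1}^n X_i − x| ≥ (1/2)·E|Σ_{i=1}^n Y_i|; that is, inf_{x∈ℝ} E|Σ_{i=1}^n X_i − x| ≥ (1/2)·E|Σ_{i=1}^n Y_i|. -/
open MeasureTheory ProbabilityTheory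

namespace BS

variable {n : ℕ}

noncomputable def qm (p : Fin n → ℝ) (i : Fin n) : ℝ := min (p i) (1 - p i)
def bval (b : Bool) : ℝ := if b then 1 else 0
def yval (t : Fin 3) : ℝ := if t = 1 then 1 else if t = 2 then -1 else 0
noncomputable def xw (p : Fin n → ℝ) (i : Fin n) (b : Bool) : ℝ := if b then p i else 1 - p i
noncomputable def vw (p : Fin n → ℝ) (i : Fin n) (t : Fin 3) : ℝ :=
  if t = 0 then 1 - 2 * qm p i else qm p i
noncomputable def uw (p : Fin n → ℝ) (i : Fin n) (s : Bool × Bool) : ℝ :=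
  if s.2 then qm p i else (1 - 2 * qm p i) / 2
def gX (d : Fin n → Bool) (i : Fin n) (s : Bool × Bool) : Bool :=
  if d i then s.1 && s.2 else !(s.1 && s.2)
def gY (d : Fin n → Bool) (i : Fin n) (s : Bool × Bool) : Fin 3 :=
  if s.2 then (if (if d i then s.1 else !s.1) then 1 else 2) else 0
def kk (d : Fin n → Bool) (i : Fin n) (ξ : Bool) : ℝ :=
  if d i then (if ξ then 1 else 0) else (if ξ then 1 else 2)

noncomputable def codeX (r : ℝ) : Bool := decide (r = 1)
noncomputable def codeY (r : ℝ) : Fin 3 := if r = 1 then 1 else if r = -1 then 2 else 0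

lemma codeX_spec {r : ℝ} (h : r = 0 ∨ r = 1) : r = bval (codeX r) := by
  rcases h with h | h <;> simp [codeX, bval, h] <;> norm_num

lemma codeX_eq_iff {r : ℝ} (h : r = 0 ∨ r = 1) (b : Bool) : codeX r = b ↔ r = bval b := by
  rcases h with h | h <;> cases b <;> simp [codeX, bval, h] <;> norm_num

lemma codeY_spec {r : ℝ} (h : r = -1 ∨ r = 0 ∨ r = 1) : r = yval (codeY r) := by
  rcases h with h | h | h <;> simp [codeY, yval, h] <;> norm_num

lemma codeY_eq_iff {r : ℝ} (h : r = -1 ∨ r = 0 ∨ r = 1) (t : Fin 3) :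
    codeY r = t ↔ r = yval t := by
  rcases h with h | h | h <;> fin_cases t <;>
    simp [codeY, yval, h] <;> norm_num <;> decide

lemma measurable_codeX : Measurable codeX := by
  apply measurable_to_countable'
  intro b
  cases b
  · have : codeX ⁻¹' {false} = ({1}ᶜ : Set ℝ) := by
      ext r; simp [codeX]
    rw [this]
    exact (measurableSet_singleton 1).compl
  · have : codeX ⁻¹' {true} = ({1} : Set ℝ) := by
      ext r; simp [codeX]
    rw [this]
    exact measurableSet_singleton 1

lemma measurable_codeY : Measurable codeY := by
  apply measurable_to_countable'
  intro t
  have h1 : codeY ⁻¹' {1} = ({1} : Set ℝ) := by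
    ext r; by_cases h : r = 1 <;> by_cases h' : r = -1 <;> simp [codeY, h, h']
  have h2 : codeY ⁻¹' {2} = ({-1} : Set ℝ) := by
    ext r
    by_cases h : r = 1 <;> by_cases h' : r = -1 <;> simp [codeY, h, h'] <;> norm_num <;>
      first
        | decide
        | (split_ifs with hh
           · norm_num at hh
           · decide)
  have h0 : codeY ⁻¹' {0} = ({1, -1}ᶜ : Set ℝ) := by
    ext r
    simp only [Set.mem_preimage, Set.mem_singleton_iff, Set.mem_compl_iff,
      Set.mem_insert_iff, codeY]
    split_ifs with ha hb
    · constructor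
      · intro hc; exact absurd hc (by decide)
      · intro hr; exact absurd (Or.inl ha) hr
    · constructor
      · intro hc; exact absurd hc (by decide)
      · intro hr; exact absurd (Or.inr hb) hr
    · constructor
      · intro _ hor; rcases hor with h | h; exacts [ha h, hb h]
      · intro _; rfl
  fin_cases t <;> simp only []
  · rw [show ({(⟨0, by norm_num⟩ : Fin 3)} : Set (Fin 3)) = {(0 : Fin 3)} from rfl] at *
    rw [h0]; exact (MeasurableSet.insert (measurableSet_singleton (-1)) 1).compl
  · rw [show ({(⟨1, by norm_num⟩ : Fin 3)} : Set (Fin 3)) = {(1 : Fin 3)} from rfl] at *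
    rw [h1]; exact measurableSet_singleton 1
  · rw [show ({(⟨2, by norm_num⟩ : Fin 3)} : Set (Fin 3)) = {(2 : Fin 3)} from rfl] at *
    rw [h2]; exact measurableSet_singleton (-1)

lemma integral_coding {Ω : Type} [MeasurableSpace Ω] (P : Measure Ω) [IsProbabilityMeasure P]
    {β : Type} [Fintype β] [MeasurableSpace β] [MeasurableSingletonClass β]
    (Φ : Ω → (Fin n → β)) (hΦ : Measurable Φ)
    (w : Fin n → β → ENNReal)
    (hfib : ∀ a : Fin n → β, P (Φ ⁻¹' {a}) = ∏ i, w i (a i))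
    (g : (Fin n → β) → ℝ) :
    ∫ ω, g (Φ ω) ∂P = ∑ a : Fin n → β, (∏ i, w i (a i)).toReal * g a := by
  have : IsProbabilityMeasure (P.map Φ) := Measure.isProbabilityMeasure_map hΦ.aemeasurable
  rw [← integral_map hΦ.aemeasurable ((measurable_of_countable g).aestronglyMeasurable)]
  rw [integral_fintype (Integrable.of_finite)]
  refine Finset.sum_congr rfl fun a _ => ?_
  rw [measureReal_def, Measure.map_apply hΦ (measurableSet_singleton a), hfib a, smul_eq_mul]

variable {p : Fin n → ℝ} {d : Fin n → Bool}

lemma qm_nonneg (hp : ∀ i, p i ∈ Set.Icc (0:ℝ) 1) (i : Fin n) : 0 ≤ qm p i := by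
  have h := hp i
  simp only [Set.mem_Icc] at h
  unfold qm
  rcases le_total (p i) (1 - p i) with h' | h'
  · rw [min_eq_left h']; linarith [h.1]
  · rw [min_eq_right h']; linarith [h.2]

lemma qm_le_half (i : Fin n) : qm p i ≤ 1/2 := by
  unfold qm
  rcases le_total (p i) (1 - p i) with h' | h'
  · rw [min_eq_left h']; linarith
  · rw [min_eq_right h']; linarith

lemma uw_nonneg (hp : ∀ i, p i ∈ Set.Icc (0:ℝ) 1) (i : Fin n) (s : Bool × Bool) :
    0 ≤ uw p i s := by
  have h1 := qm_nonneg hp i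
  have h2 := qm_le_half (p := p) i
  unfold uw
  cases s.2 <;> simp <;> linarith

lemma coupling_identity (i : Fin n) (s : Bool × Bool) :
    bval (gX d i s) = (yval (gY d i s) + kk d i s.2) / 2 := by
  obtain ⟨ε, ξ⟩ := s
  cases hdi : d i <;> cases ε <;> cases ξ <;>
    simp [bval, gX, gY, kk, yval, hdi] <;> norm_num

lemma yval_flip (i : Fin n) (ε ξ : Bool) :
    yval (gY d i (!ε, ξ)) = - yval (gY d i (ε, ξ)) := by
  cases hdi : d i <;> cases ε <;> cases ξ <;> simp [gY, yval, hdi]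

lemma fibX (hd : ∀ i, d i = true → qm p i = p i)
    (hd' : ∀ i, d i = false → qm p i = 1 - p i) (i : Fin n) (a : Bool) :
    ∑ s ∈ Finset.univ.filter (fun s => gX d i s = a), uw p i s = xw p i a := by
  rw [Finset.sum_filter, Fintype.sum_prod_type]
  cases hdi : d i
  · have hq := hd' i hdi
    cases a <;> simp [Fintype.sum_bool, gX, uw, xw, hdi, hq] <;> ring
  · have hq := hd i hdi
    cases a <;> simp [Fintype.sum_bool, gX, uw, xw, hdi, hq] <;> ring

lemma fibY (i : Fin n) (a : Fin 3) :
    ∑ s ∈ Finset.univ.filter (fun s => gY d i s = a), uw p i s = vw p i a := by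
  rw [Finset.sum_filter, Fintype.sum_prod_type]
  cases hdi : d i <;> fin_cases a <;>
    simp [Fintype.sum_bool, gY, uw, vw, hdi] <;> ring



lemma marg {β γ : Type} [Fintype β] [Fintype γ] [DecidableEq β] [DecidableEq γ]
    (u : Fin n → γ → ℝ) (g : Fin n → γ → β) (F : (Fin n → β) → ℝ) :
    ∑ c : Fin n → γ, (∏ i, u i (c i)) * F (fun i => g i (c i))
      = ∑ a : Fin n → β,
          (∏ i, ∑ s ∈ Finset.univ.filter (fun s => g i s = a i), u i s) * F a := by
  have hset : ∀ a : Fin n → β,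
      Fintype.piFinset (fun i => Finset.univ.filter (fun s => g i s = a i))
        = Finset.univ.filter (fun c : Fin n → γ => (fun i => g i (c i)) = a) := by
    intro a
    ext c
    simp [Fintype.mem_piFinset, funext_iff]
  calc ∑ c : Fin n → γ, (∏ i, u i (c i)) * F (fun i => g i (c i))
      = ∑ a : Fin n → β, ∑ c ∈ Finset.univ.filter
          (fun c : Fin n → γ => (fun i => g i (c i)) = a),
          (∏ i, u i (c i)) * F (fun i => g i (c i)) := by
        rw [Finset.sum_fiberwise]
    _ = ∑ a : Fin n → β, ∑ c ∈ Finset.univ.filter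
          (fun c : Fin n → γ => (fun i => g i (c i)) = a),
          (∏ i, u i (c i)) * F a := by
        refine Finset.sum_congr rfl fun a _ => Finset.sum_congr rfl fun c hc => ?_
        rw [Finset.mem_filter] at hc
        rw [hc.2]
    _ = _ := by
        refine Finset.sum_congr rfl fun a _ => ?_
        rw [← Finset.sum_mul, Finset.prod_univ_sum, hset]

lemma key (hp : ∀ i, p i ∈ Set.Icc (0:ℝ) 1) (hd : ∀ i, d i = true → qm p i = p i)
    (hd' : ∀ i, d i = false → qm p i = 1 - p i) (x : ℝ) :
    (1/2) * ∑ b : Fin n → Fin 3, (∏ i, vw p i (b i)) * |∑ i, yval (b i)|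
      ≤ ∑ a : Fin n → Bool, (∏ i, xw p i (a i)) * |(∑ i, bval (a i)) - x| := by
  set U : (Fin n → Bool × Bool) → ℝ := fun c => ∏ i, uw p i (c i) with hU
  set T : (Fin n → Bool × Bool) → ℝ := fun c => ∑ i, yval (gY d i (c i)) with hT
  set C : (Fin n → Bool × Bool) → ℝ := fun c => (∑ i, kk d i ((c i).2)) - 2 * x with hC
  -- rewrite the X-side
  have hX : ∑ a : Fin n → Bool, (∏ i, xw p i (a i)) * |(∑ i, bval (a i)) - x|
      = ∑ c : Fin n → Bool × Bool, U c * |(∑ i, bval (gX d i (c i))) - x| := by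
    rw [marg (u := uw p) (g := gX d) (F := fun a => |(∑ i, bval (a i)) - x|)]
    exact Finset.sum_congr rfl fun a _ => by
      rw [Finset.prod_congr rfl fun i _ => fibX hd hd' i (a i)]
  have hY : ∑ b : Fin n → Fin 3, (∏ i, vw p i (b i)) * |∑ i, yval (b i)|
      = ∑ c : Fin n → Bool × Bool, U c * |T c| := by
    rw [marg (u := uw p) (g := gY d) (F := fun b => |∑ i, yval (b i)|)]
    exact (Finset.sum_congr rfl fun b _ => by
      rw [Finset.prod_congr rfl fun i _ => fibY i (b i)]).symm
  have habs : ∀ c, |(∑ i, bval (gX d i (c i))) - x| = |T c + C c| / 2 := by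
    intro c
    have h1 : (∑ i, bval (gX d i (c i))) = (T c + ∑ i, kk d i ((c i).2)) / 2 := by
      rw [hT]
      rw [Finset.sum_congr rfl fun i _ => coupling_identity i (c i)]
      rw [← Finset.sum_div, Finset.sum_add_distrib]
    rw [h1, hC]
    rw [show (T c + ∑ i, kk d i ((c i).2)) / 2 - x
        = (T c + ((∑ i, kk d i ((c i).2)) - 2 * x)) / 2 by ring]
    rw [abs_div]
    norm_num
  -- involution
  have hUnn : ∀ c, 0 ≤ U c := fun c => Finset.prod_nonneg fun i _ => uw_nonneg hp i (c i)
  set e : (Fin n → Bool × Bool) → (Fin n → Bool × Bool) :=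
    fun c i => (!(c i).1, (c i).2) with he
  have hinv : Function.Involutive e := by
    intro c; funext i; simp [he]
  have hUe : ∀ c, U (e c) = U c := fun c => rfl
  have hCe : ∀ c, C (e c) = C c := fun c => rfl
  have hTe : ∀ c, T (e c) = - T c := by
    intro c
    rw [hT]
    simp only [he]
    rw [Finset.sum_congr rfl fun i _ => yval_flip i ((c i).1) ((c i).2), Finset.sum_neg_distrib]
  have hflip : ∑ c, U c * |T c + C c| = ∑ c, U c * |(- T c) + C c| := by
    rw [← Function.Bijective.sum_comp hinv.bijective (fun c => U c * |T c + C c|)]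
    exact Finset.sum_congr rfl fun c _ => by
      simp only [Function.comp_apply, hUe, hTe, hCe]
  have hpoint : ∀ c, U c * (2 * |T c|) ≤ U c * (|T c + C c| + |(- T c) + C c|) := by
    intro c
    refine mul_le_mul_of_nonneg_left ?_ (hUnn c)
    have h2 : 2 * T c = (T c + C c) - ((- T c) + C c) := by ring
    calc 2 * |T c| = |2 * T c| := by rw [abs_mul]; norm_num
      _ = |(T c + C c) - ((- T c) + C c)| := by rw [h2]
      _ ≤ |T c + C c| + |(- T c) + C c| := abs_sub _ _
  have hsum : ∑ c, U c * (2 * |T c|) ≤ ∑ c, U c * (|T c + C c| + |(- T c) + C c|) :=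
    Finset.sum_le_sum fun c _ => hpoint c
  have hsplit : ∑ c, U c * (|T c + C c| + |(- T c) + C c|) = 2 * ∑ c, U c * |T c + C c| := by
    rw [show (fun c => U c * (|T c + C c| + |(- T c) + C c|))
        = fun c => U c * |T c + C c| + U c * |(- T c) + C c| from funext fun c => by ring]
    rw [Finset.sum_add_distrib, ← hflip]
    ring
  have h2T : ∑ c, U c * (2 * |T c|) = 2 * ∑ c, U c * |T c| := by
    rw [Finset.mul_sum]
    exact Finset.sum_congr rfl fun c _ => by ring
  have hmain : ∑ c, U c * |T c| ≤ ∑ c, U c * |T c + C c| := by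
    rw [h2T, hsplit] at hsum; linarith
  rw [hX, hY]
  have : ∑ c, U c * |(∑ i, bval (gX d i (c i))) - x| = (∑ c, U c * |T c + C c|) / 2 := by
    rw [Finset.sum_div]
    exact Finset.sum_congr rfl fun c _ => by rw [habs c]; ring
  rw [this]
  linarith



end BS

/-- Lemma B.2: if `X₁, …, Xₙ` are independent Bernoulli variables with parameters `pᵢ`
and `Y₁, …, Yₙ` are independent symmetric `{-1,0,1}` variables with
`P[Yᵢ = 1] = P[Yᵢ = -1] = min {pᵢ, 1 - pᵢ}`, then for every real `x`,
`E|∑ Xᵢ - x| ≥ (1/2) E|∑ Yᵢ|`. -/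
theorem bernoulli_symmetrization (n : ℕ) (p : Fin n → ℝ)
    (hp : ∀ i, p i ∈ Set.Icc (0:ℝ) 1)
    (Ω₁ : Type) [MeasurableSpace Ω₁] (P₁ : Measure Ω₁) [IsProbabilityMeasure P₁]
    (Ω₂ : Type) [MeasurableSpace Ω₂] (P₂ : Measure Ω₂) [IsProbabilityMeasure P₂]
    (X : Fin n → Ω₁ → ℝ) (hXmeas : ∀ i, Measurable (X i))
    (hXval : ∀ i ω, X i ω = 0 ∨ X i ω = 1)
    (hXprob : ∀ i, P₁ {ω | X i ω = 1} = ENNReal.ofReal (p i))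
    (hXindep : iIndepFun X P₁)
    (Y : Fin n → Ω₂ → ℝ) (hYmeas : ∀ i, Measurable (Y i))
    (hYval : ∀ i ω, Y i ω = -1 ∨ Y i ω = 0 ∨ Y i ω = 1)
    (hYprob1 : ∀ i, P₂ {ω | Y i ω = 1} = ENNReal.ofReal (min (p i) (1 - p i)))
    (hYprob2 : ∀ i, P₂ {ω | Y i ω = -1} = ENNReal.ofReal (min (p i) (1 - p i)))
    (hYindep : iIndepFun Y P₂)
    (x : ℝ) :
    (1 / 2) * ∫ ω, |∑ i, Y i ω| ∂P₂ ≤ ∫ ω, |∑ i, X i ω - x| ∂P₁ := by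
  classical
  have hp0 : ∀ i, 0 ≤ p i := fun i => (Set.mem_Icc.mp (hp i)).1
  have hp1 : ∀ i, p i ≤ 1 := fun i => (Set.mem_Icc.mp (hp i)).2
  set d : Fin n → Bool := fun i => decide (p i ≤ 1/2) with hdd
  have hd : ∀ i, d i = true → BS.qm p i = p i := by
    intro i hi
    have h2 : p i ≤ 1/2 := of_decide_eq_true (by simpa [hdd] using hi)
    exact min_eq_left (by linarith)
  have hd' : ∀ i, d i = false → BS.qm p i = 1 - p i := by
    intro i hi
    have h2 : ¬ (p i ≤ 1/2) := of_decide_eq_false (by simpa [hdd] using hi)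
    push_neg at h2
    exact min_eq_right (by linarith)
  set Φ : Ω₁ → (Fin n → Bool) := fun ω i => BS.codeX (X i ω) with hΦdef
  have hΦ : Measurable Φ :=
    measurable_pi_lambda _ fun i => BS.measurable_codeX.comp (hXmeas i)
  set Ψ : Ω₂ → (Fin n → Fin 3) := fun ω i => BS.codeY (Y i ω) with hΨdef
  have hΨ : Measurable Ψ :=
    measurable_pi_lambda _ fun i => BS.measurable_codeY.comp (hYmeas i)
  -- single-coordinate laws
  have hs1 : ∀ i, X i ⁻¹' {(1:ℝ)} = {ω | X i ω = 1} := by intro i; ext ω; simp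
  have hXfac : ∀ i (b : Bool), P₁ (X i ⁻¹' {BS.bval b}) = ENNReal.ofReal (BS.xw p i b) := by
    intro i b
    cases b
    · have hs0 : X i ⁻¹' {(0:ℝ)} = {ω | X i ω = 1}ᶜ := by
        ext ω
        simp only [Set.mem_preimage, Set.mem_singleton_iff, Set.mem_compl_iff, Set.mem_setOf_eq]
        constructor
        · intro h h1; rw [h1] at h; norm_num at h
        · intro h
          rcases hXval i ω with h0 | h1
          · exact h0
          · exact absurd h1 h
      have hmeas : MeasurableSet {ω | X i ω = 1} := by
        rw [← hs1 i]; exact hXmeas i (measurableSet_singleton 1)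
      rw [show BS.bval false = (0:ℝ) from rfl, hs0,
        measure_compl hmeas (measure_ne_top _ _), measure_univ, hXprob i]
      rw [show BS.xw p i false = 1 - p i from rfl,
        ENNReal.ofReal_sub 1 (hp0 i), ENNReal.ofReal_one]
    · rw [show BS.bval true = (1:ℝ) from rfl, hs1 i, hXprob i]
      rfl
  have hq0 : ∀ i, 0 ≤ BS.qm p i := fun i => BS.qm_nonneg hp i
  have hqh : ∀ i, BS.qm p i ≤ 1/2 := fun i => BS.qm_le_half i
  have hYfac : ∀ i (t : Fin 3), P₂ (Y i ⁻¹' {BS.yval t}) = ENNReal.ofReal (BS.vw p i t) := by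
    intro i t
    have hys1 : Y i ⁻¹' {(1:ℝ)} = {ω | Y i ω = 1} := by ext ω; simp
    have hys2 : Y i ⁻¹' {(-1:ℝ)} = {ω | Y i ω = -1} := by ext ω; simp
    have hm1 : MeasurableSet {ω | Y i ω = 1} := by
      rw [← hys1]; exact hYmeas i (measurableSet_singleton 1)
    have hm2 : MeasurableSet {ω | Y i ω = -1} := by
      rw [← hys2]; exact hYmeas i (measurableSet_singleton (-1))
    fin_cases t
    · show P₂ (Y i ⁻¹' {BS.yval 0}) = ENNReal.ofReal (BS.vw p i 0)
      -- t = 0 : value 0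
      have hys0 : Y i ⁻¹' {(0:ℝ)} = ({ω | Y i ω = 1} ∪ {ω | Y i ω = -1})ᶜ := by
        ext ω
        simp only [Set.mem_preimage, Set.mem_singleton_iff, Set.mem_compl_iff,
          Set.mem_union, Set.mem_setOf_eq]
        constructor
        · intro h hor
          rcases hor with h1 | h1 <;> rw [h1] at h <;> norm_num at h
        · intro h
          rcases hYval i ω with h1 | h1 | h1
          · exact absurd (Or.inr h1) h
          · exact h1
          · exact absurd (Or.inl h1) h
      have hdisj : Disjoint {ω | Y i ω = 1} {ω | Y i ω = -1} := by
        rw [Set.disjoint_left]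
        intro ω h1 h2
        simp only [Set.mem_setOf_eq] at h1 h2
        rw [h1] at h2; norm_num at h2
      rw [show BS.yval 0 = (0:ℝ) from rfl, hys0,
        measure_compl (hm1.union hm2) (measure_ne_top _ _), measure_univ,
        measure_union hdisj hm2, hYprob1 i, hYprob2 i]
      rw [show BS.vw p i 0 = 1 - 2 * BS.qm p i from rfl]
      have : ENNReal.ofReal (1 - 2 * BS.qm p i)
          = 1 - (ENNReal.ofReal (BS.qm p i) + ENNReal.ofReal (BS.qm p i)) := by
        rw [← ENNReal.ofReal_add (hq0 i) (hq0 i),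
          ENNReal.ofReal_sub 1 (by linarith [hq0 i]), ENNReal.ofReal_one]
        congr 1
        rw [ENNReal.ofReal_eq_ofReal_iff (by linarith [hq0 i]) (by linarith [hq0 i])]
        ring
      rw [this]
      rfl
    · show P₂ (Y i ⁻¹' {BS.yval 1}) = ENNReal.ofReal (BS.vw p i 1)
      rw [show BS.yval 1 = (1:ℝ) from rfl, hys1, hYprob1 i]
      rfl
    · show P₂ (Y i ⁻¹' {BS.yval 2}) = ENNReal.ofReal (BS.vw p i 2)
      rw [show BS.yval 2 = (-1:ℝ) from rfl, hys2, hYprob2 i]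
      rfl
  -- fiber products via independence
  have hfibX : ∀ a : Fin n → Bool,
      P₁ (Φ ⁻¹' {a}) = ∏ i, ENNReal.ofReal (BS.xw p i (a i)) := by
    intro a
    have hset : Φ ⁻¹' {a} = ⋂ i, X i ⁻¹' {BS.bval (a i)} := by
      ext ω
      simp only [Set.mem_preimage, Set.mem_singleton_iff, Set.mem_iInter, funext_iff, hΦdef]
      exact forall_congr' fun i => by
        simpa using BS.codeX_eq_iff (hXval i ω) (a i)
    have hind := hXindep.measure_inter_preimage_eq_mul (S := Finset.univ)
        (sets := fun i => {BS.bval (a i)}) (fun i _ => measurableSet_singleton _)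
    rw [hset, show (⋂ i, X i ⁻¹' {BS.bval (a i)})
        = ⋂ i ∈ Finset.univ, X i ⁻¹' {BS.bval (a i)} by simp, hind]
    exact Finset.prod_congr rfl fun i _ => hXfac i (a i)
  have hfibY : ∀ b : Fin n → Fin 3,
      P₂ (Ψ ⁻¹' {b}) = ∏ i, ENNReal.ofReal (BS.vw p i (b i)) := by
    intro b
    have hset : Ψ ⁻¹' {b} = ⋂ i, Y i ⁻¹' {BS.yval (b i)} := by
      ext ω
      simp only [Set.mem_preimage, Set.mem_singleton_iff, Set.mem_iInter, funext_iff, hΨdef]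
      exact forall_congr' fun i => by
        simpa using BS.codeY_eq_iff (hYval i ω) (b i)
    have hind := hYindep.measure_inter_preimage_eq_mul (S := Finset.univ)
        (sets := fun i => {BS.yval (b i)}) (fun i _ => measurableSet_singleton _)
    rw [hset, show (⋂ i, Y i ⁻¹' {BS.yval (b i)})
        = ⋂ i ∈ Finset.univ, Y i ⁻¹' {BS.yval (b i)} by simp, hind]
    exact Finset.prod_congr rfl fun i _ => hYfac i (b i)
  -- integrals as finite sums
  have EX : ∫ ω, |∑ i, X i ω - x| ∂P₁
      = ∑ a : Fin n → Bool,
          (∏ i, ENNReal.ofReal (BS.xw p i (a i))).toReal * |(∑ i, BS.bval (a i)) - x| := by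
    have h1 : ∫ ω, |∑ i, X i ω - x| ∂P₁
        = ∫ ω, (fun a : Fin n → Bool => |(∑ i, BS.bval (a i)) - x|) (Φ ω) ∂P₁ := by
      refine integral_congr_ae (Filter.Eventually.of_forall fun ω => ?_)
      show |(∑ i, X i ω) - x| = |(∑ i, BS.bval (Φ ω i)) - x|
      have hsum : (∑ i, X i ω) = ∑ i, BS.bval (Φ ω i) :=
        Finset.sum_congr rfl fun i _ => by
          simp only [hΦdef]; exact BS.codeX_spec (hXval i ω)
      rw [hsum]
    rw [h1, BS.integral_coding P₁ Φ hΦ (fun i b => ENNReal.ofReal (BS.xw p i b)) hfibX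
      (fun a : Fin n → Bool => |(∑ i, BS.bval (a i)) - x|)]
  have EY : ∫ ω, |∑ i, Y i ω| ∂P₂
      = ∑ b : Fin n → Fin 3,
          (∏ i, ENNReal.ofReal (BS.vw p i (b i))).toReal * |∑ i, BS.yval (b i)| := by
    have h1 : ∫ ω, |∑ i, Y i ω| ∂P₂
        = ∫ ω, (fun b : Fin n → Fin 3 => |∑ i, BS.yval (b i)|) (Ψ ω) ∂P₂ := by
      refine integral_congr_ae (Filter.Eventually.of_forall fun ω => ?_)
      show |∑ i, Y i ω| = |∑ i, BS.yval (Ψ ω i)|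
      have hsum : (∑ i, Y i ω) = ∑ i, BS.yval (Ψ ω i) :=
        Finset.sum_congr rfl fun i _ => by
          simp only [hΨdef]; exact BS.codeY_spec (hYval i ω)
      rw [hsum]
    rw [h1, BS.integral_coding P₂ Ψ hΨ (fun i t => ENNReal.ofReal (BS.vw p i t)) hfibY
      (fun b : Fin n → Fin 3 => |∑ i, BS.yval (b i)|)]
  -- convert weights to real products
  have wX : ∀ a : Fin n → Bool,
      (∏ i, ENNReal.ofReal (BS.xw p i (a i))).toReal = ∏ i, BS.xw p i (a i) := by
    intro a
    rw [ENNReal.toReal_prod]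
    refine Finset.prod_congr rfl fun i _ => ENNReal.toReal_ofReal ?_
    cases hai : a i <;> simp only [BS.xw, if_pos, if_neg, Bool.false_eq_true,
      if_false, if_true] <;> [linarith [hp1 i]; linarith [hp0 i]]
  have wY : ∀ b : Fin n → Fin 3,
      (∏ i, ENNReal.ofReal (BS.vw p i (b i))).toReal = ∏ i, BS.vw p i (b i) := by
    intro b
    rw [ENNReal.toReal_prod]
    refine Finset.prod_congr rfl fun i _ => ENNReal.toReal_ofReal ?_
    by_cases hbi : b i = 0
    · rw [hbi, show BS.vw p i 0 = 1 - 2 * BS.qm p i from rfl]; linarith [hqh i]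
    · rw [show BS.vw p i (b i) = BS.qm p i from if_neg hbi]; exact hq0 i
  rw [EX, EY]
  calc (1/2) * ∑ b : Fin n → Fin 3,
        (∏ i, ENNReal.ofReal (BS.vw p i (b i))).toReal * |∑ i, BS.yval (b i)|
      = (1/2) * ∑ b : Fin n → Fin 3, (∏ i, BS.vw p i (b i)) * |∑ i, BS.yval (b i)| := by
        congr 1
        exact Finset.sum_congr rfl fun b _ => by rw [wY b]
    _ ≤ ∑ a : Fin n → Bool, (∏ i, BS.xw p i (a i)) * |(∑ i, BS.bval (a i)) - x| :=
        BS.key hp hd hd' x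
    _ = ∑ a : Fin n → Bool,
        (∏ i, ENNReal.ofReal (BS.xw p i (a i))).toReal * |(∑ i, BS.bval (a i)) - x| := by
        exact Finset.sum_congr rfl fun a _ => by rw [wX a]
end

section
/- Let p_1,…,p_n ∈ [0, 1/2], and let X_1,…,X_n be independent symmetric {−1,0,1} random variables with P[X_i = 1] = p_i for each i. Setting S = p_1 + ⋯ + p_n, one has E|Σ_{i=1}^n X_i| ≥ 2S/√(6S+1). -/
open MeasureTheory ProbabilityTheory

private lemma aux_moments {Ω : Type} [MeasurableSpace Ω] (P : Measure Ω) [IsProbabilityMeasure P]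
    (Y : Ω → ℝ) (q : ℝ) (hq : 0 ≤ q) (hY : Measurable Y)
    (hval : ∀ ω, Y ω = -1 ∨ Y ω = 0 ∨ Y ω = 1)
    (h1 : P {ω | Y ω = 1} = ENNReal.ofReal q)
    (h2 : P {ω | Y ω = -1} = ENNReal.ofReal q) :
    (∫ ω, Y ω ∂P = 0) ∧ (∫ ω, (Y ω)^2 ∂P = 2 * q) := by
  set A : Set Ω := {ω | Y ω = 1} with hAdef
  set B : Set Ω := {ω | Y ω = -1} with hBdef
  have hA : MeasurableSet A := hY (measurableSet_singleton 1)
  have hB : MeasurableSet B := hY (measurableSet_singleton (-1))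
  have iA : Integrable (A.indicator fun _ => (1:ℝ)) P := (integrable_const 1).indicator hA
  have iB : Integrable (B.indicator fun _ => (1:ℝ)) P := (integrable_const 1).indicator hB
  have intA : ∫ ω, A.indicator (fun _ => (1:ℝ)) ω ∂P = q := by
    rw [integral_indicator_const (1:ℝ) hA, measureReal_def, h1, smul_eq_mul, mul_one,
      ENNReal.toReal_ofReal hq]
  have intB : ∫ ω, B.indicator (fun _ => (1:ℝ)) ω ∂P = q := by
    rw [integral_indicator_const (1:ℝ) hB, measureReal_def, h2, smul_eq_mul, mul_one,
      ENNReal.toReal_ofReal hq]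
  constructor
  · have hYeq : ∀ ω, Y ω = A.indicator (fun _ => (1:ℝ)) ω - B.indicator (fun _ => (1:ℝ)) ω := by
      intro ω
      rcases hval ω with h | h | h <;>
        simp [Set.indicator_apply, hAdef, hBdef, Set.mem_setOf_eq, h] <;> norm_num
    rw [show (fun ω => Y ω) = fun ω => A.indicator (fun _ => (1:ℝ)) ω -
        B.indicator (fun _ => (1:ℝ)) ω from funext hYeq, integral_sub iA iB, intA, intB, sub_self]
  · have hYeq : ∀ ω, (Y ω)^2 = A.indicator (fun _ => (1:ℝ)) ω + B.indicator (fun _ => (1:ℝ)) ω := by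
      intro ω
      rcases hval ω with h | h | h <;>
        simp [Set.indicator_apply, hAdef, hBdef, Set.mem_setOf_eq, h] <;> norm_num
    rw [show (fun ω => (Y ω)^2) = fun ω => A.indicator (fun _ => (1:ℝ)) ω +
        B.indicator (fun _ => (1:ℝ)) ω from funext hYeq, integral_add iA iB, intA, intB]
    ring

/-- Lemma B.4: if `X₁, …, Xₙ` are independent symmetric `{-1,0,1}` variables with
`P[Xᵢ = 1] = P[Xᵢ = -1] = pᵢ ∈ [0, 1/2]` and `S = ∑ pᵢ`, then
`E|∑ Xᵢ| ≥ 2S/√(6S + 1)`. -/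
theorem symmetric_sum_L1_lower_bound (n : ℕ) (p : Fin n → ℝ)
    (hp : ∀ i, p i ∈ Set.Icc (0:ℝ) (1 / 2))
    (Ω : Type) [MeasurableSpace Ω] (P : Measure Ω) [IsProbabilityMeasure P]
    (X : Fin n → Ω → ℝ) (hXmeas : ∀ i, Measurable (X i))
    (hXval : ∀ i ω, X i ω = -1 ∨ X i ω = 0 ∨ X i ω = 1)
    (hXprob1 : ∀ i, P {ω | X i ω = 1} = ENNReal.ofReal (p i))
    (hXprob2 : ∀ i, P {ω | X i ω = -1} = ENNReal.ofReal (p i))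
    (hXindep : iIndepFun X P) :
    2 * (∑ i, p i) / Real.sqrt (6 * (∑ i, p i) + 1) ≤ ∫ ω, |∑ i, X i ω| ∂P := by
  classical
  have hp0 : ∀ i, 0 ≤ p i := fun i => (hp i).1
  have hmom := fun i =>
    aux_moments P (X i) (p i) (hp0 i) (hXmeas i) (hXval i) (hXprob1 i) (hXprob2 i)
  have hE0 : ∀ i, ∫ ω, X i ω ∂P = 0 := fun i => (hmom i).1
  have hE2 : ∀ i, ∫ ω, (X i ω)^2 ∂P = 2 * p i := fun i => (hmom i).2
  have hbnd : ∀ (f : Ω → ℝ) (C : ℝ), Measurable f → (∀ ω, |f ω| ≤ C) → Integrable f P :=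
    fun f C hf hC => ⟨hf.aestronglyMeasurable,
      HasFiniteIntegral.of_bounded (C := C)
        (Filter.Eventually.of_forall (by simpa [Real.norm_eq_abs] using hC))⟩
  have habs : ∀ i ω, |X i ω| ≤ 1 := by
    intro i ω; rcases hXval i ω with h | h | h <;> simp [h]
  have hTmeas : ∀ s : Finset (Fin n), Measurable (fun ω => ∑ i ∈ s, X i ω) :=
    fun s => Finset.measurable_sum s (fun i _ => hXmeas i)
  have hTabs : ∀ (s : Finset (Fin n)) (ω : Ω), |∑ i ∈ s, X i ω| ≤ (s.card : ℝ) := by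
    intro s ω
    calc |∑ i ∈ s, X i ω| ≤ ∑ i ∈ s, |X i ω| := Finset.abs_sum_le_sum_abs _ _
    _ ≤ ∑ i ∈ s, 1 := Finset.sum_le_sum fun i _ => habs i ω
    _ = (s.card : ℝ) := by simp
  have hIntPow : ∀ (s : Finset (Fin n)) (a : ℕ),
      Integrable (fun ω => (∑ i ∈ s, X i ω)^a) P := by
    intro s a
    refine hbnd _ ((s.card : ℝ)^a) ((hTmeas s).pow_const a) fun ω => ?_
    rw [abs_pow]
    exact pow_le_pow_left₀ (abs_nonneg _) (hTabs s ω) a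
  -- main induction
  have key : ∀ s : Finset (Fin n),
      (∫ ω, (∑ i ∈ s, X i ω)^2 ∂P = 2 * ∑ i ∈ s, p i) ∧
      (∫ ω, (∑ i ∈ s, X i ω)^4 ∂P ≤ 2 * (∑ i ∈ s, p i) + 12 * (∑ i ∈ s, p i)^2) := by
    intro s
    induction s using Finset.cons_induction with
    | empty => simp
    | cons j s hj ih =>
      have hSs0 : (0:ℝ) ≤ ∑ i ∈ s, p i := Finset.sum_nonneg fun i _ => hp0 i
      set T : Ω → ℝ := fun ω => ∑ i ∈ s, X i ω with hTdef
      have hTm : Measurable T := hTmeas s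
      have hInd : IndepFun T (X j) P := by
        have h := hXindep.indepFun_finsetSum_of_notMem hXmeas hj
        have he : (∑ i ∈ s, X i) = T := funext fun ω => by simp [hTdef]
        rwa [he] at h
      have hIntX : ∀ b : ℕ, Integrable (fun ω => (X j ω)^b) P := by
        intro b
        refine hbnd _ 1 ((hXmeas j).pow_const b) fun ω => ?_
        rw [abs_pow]
        exact pow_le_one₀ (abs_nonneg _) (habs j ω)
      have hIntTX : ∀ a b : ℕ, Integrable (fun ω => (T ω)^a * (X j ω)^b) P := by
        intro a b
        refine hbnd _ ((s.card : ℝ)^a * 1) ((hTm.pow_const a).mul ((hXmeas j).pow_const b))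
          fun ω => ?_
        rw [abs_mul, abs_pow, abs_pow]
        exact mul_le_mul (pow_le_pow_left₀ (abs_nonneg _) (hTabs s ω) a)
          (pow_le_one₀ (abs_nonneg _) (habs j ω)) (pow_nonneg (abs_nonneg _) b)
          (pow_nonneg (by positivity) a)
      have hmul : ∀ a b : ℕ, ∫ ω, (T ω)^a * (X j ω)^b ∂P
          = (∫ ω, (T ω)^a ∂P) * (∫ ω, (X j ω)^b ∂P) :=
        fun a b => (hInd.comp (measurable_id.pow_const a) (measurable_id.pow_const b)).integral_fun_mul_eq_mul_integral
          (hTm.pow_const a).aestronglyMeasurable ((hXmeas j).pow_const b).aestronglyMeasurable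
      have hEX1 : ∫ ω, (X j ω)^1 ∂P = 0 := by simpa using hE0 j
      have hEX3 : ∫ ω, (X j ω)^3 ∂P = 0 := by
        rw [show (fun ω => (X j ω)^3) = fun ω => X j ω from funext fun ω => by
          rcases hXval j ω with h | h | h <;> rw [h] <;> norm_num]
        exact hE0 j
      have hEX4 : ∫ ω, (X j ω)^4 ∂P = 2 * p j := by
        rw [show (fun ω => (X j ω)^4) = fun ω => (X j ω)^2 from funext fun ω => by
          rcases hXval j ω with h | h | h <;> rw [h] <;> norm_num]
        exact hE2 j
      have hT2 := ih.1
      have hT4 := ih.2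
      simp only [Finset.sum_cons]
      have hT2' : ∫ ω, (T ω)^2 ∂P = 2 * ∑ i ∈ s, p i := hT2
      have hT4' : ∫ ω, (T ω)^4 ∂P ≤ 2 * ∑ i ∈ s, p i + 12 * (∑ i ∈ s, p i)^2 := hT4
      -- second moment
      have hSq : ∫ ω, (X j ω + ∑ i ∈ s, X i ω)^2 ∂P = 2 * (p j + ∑ i ∈ s, p i) := by
        rw [show (fun ω => (X j ω + ∑ i ∈ s, X i ω)^2)
            = fun ω => (T ω)^2 + ((2:ℝ) * ((T ω)^1 * (X j ω)^1) + (X j ω)^2) from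
          funext fun ω => by simp only [hTdef]; ring]
        have iT2 : Integrable (fun ω => T ω ^ 2) P := hIntPow s 2
        have i11 : Integrable (fun ω => (2:ℝ) * (T ω ^ 1 * X j ω ^ 1)) P :=
          (hIntTX 1 1).const_mul 2
        have iX2 : Integrable (fun ω => X j ω ^ 2) P := hIntX 2
        have i1 : Integrable (fun ω => (2:ℝ) * (T ω ^ 1 * X j ω ^ 1) + X j ω ^ 2) P :=
          i11.add iX2
        rw [integral_add iT2 i1, integral_add i11 iX2,
          integral_const_mul, hmul 1 1, hEX1, hE2 j, hT2']
        ring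
      constructor
      · exact hSq
      · rw [show (fun ω => (X j ω + ∑ i ∈ s, X i ω)^4)
            = fun ω => (T ω)^4 + ((4:ℝ) * ((T ω)^3 * (X j ω)^1)
              + ((6:ℝ) * ((T ω)^2 * (X j ω)^2)
              + ((4:ℝ) * ((T ω)^1 * (X j ω)^3) + (X j ω)^4))) from
          funext fun ω => by simp only [hTdef]; ring]
        have iT4 : Integrable (fun ω => T ω ^ 4) P := hIntPow s 4
        have i31 : Integrable (fun ω => (4:ℝ) * (T ω ^ 3 * X j ω ^ 1)) P :=
          (hIntTX 3 1).const_mul 4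
        have i22 : Integrable (fun ω => (6:ℝ) * (T ω ^ 2 * X j ω ^ 2)) P :=
          (hIntTX 2 2).const_mul 6
        have i13 : Integrable (fun ω => (4:ℝ) * (T ω ^ 1 * X j ω ^ 3)) P :=
          (hIntTX 1 3).const_mul 4
        have iX4 : Integrable (fun ω => X j ω ^ 4) P := hIntX 4
        have c4 : Integrable (fun ω => (4:ℝ) * (T ω ^ 1 * X j ω ^ 3) + X j ω ^ 4) P :=
          i13.add iX4
        have c3 : Integrable (fun ω => (6:ℝ) * (T ω ^ 2 * X j ω ^ 2)
            + ((4:ℝ) * (T ω ^ 1 * X j ω ^ 3) + X j ω ^ 4)) P := i22.add c4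
        have c2 : Integrable (fun ω => (4:ℝ) * (T ω ^ 3 * X j ω ^ 1)
            + ((6:ℝ) * (T ω ^ 2 * X j ω ^ 2)
            + ((4:ℝ) * (T ω ^ 1 * X j ω ^ 3) + X j ω ^ 4))) P := i31.add c3
        rw [integral_add iT4 c2, integral_add i31 c3, integral_add i22 c4,
          integral_add i13 iX4,
          integral_const_mul, integral_const_mul, integral_const_mul,
          hmul 3 1, hmul 2 2, hmul 1 3, hEX1, hEX3, hEX4, hE2 j, hT2']
        nlinarith [hp0 j, hSs0, hT4']
  -- final part
  set S := ∑ i, p i with hSdef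
  have hS0 : 0 ≤ S := Finset.sum_nonneg fun i _ => hp0 i
  set T : Ω → ℝ := fun ω => ∑ i, X i ω with hTdef
  have hTm : Measurable T := hTmeas Finset.univ
  have hTb : ∀ ω, |T ω| ≤ (n : ℝ) := fun ω => by
    simpa using hTabs Finset.univ ω
  have hT2 : ∫ ω, (T ω)^2 ∂P = 2 * S := (key Finset.univ).1
  have hT4 : ∫ ω, (T ω)^4 ∂P ≤ 2 * S + 12 * S^2 := (key Finset.univ).2
  set I := ∫ ω, |T ω| ∂P with hIdef
  set M := ∫ ω, (T ω)^4 ∂P with hMdef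
  have hI0 : 0 ≤ I := integral_nonneg fun ω => abs_nonneg _
  have hM0 : 0 ≤ M := integral_nonneg fun ω => by positivity
  -- Hölder
  have hpq : Real.HolderConjugate (3/2) 3 := ⟨by norm_num, by norm_num, by norm_num⟩
  have hfmeas : Measurable (fun ω => |T ω| ^ ((2:ℝ)/3)) := hTm.abs.pow measurable_const
  have hgmeas : Measurable (fun ω => |T ω| ^ ((4:ℝ)/3)) := hTm.abs.pow measurable_const
  have hfmem : MemLp (fun ω => |T ω| ^ ((2:ℝ)/3)) (ENNReal.ofReal (3/2)) P := by
    refine MemLp.of_bound hfmeas.aestronglyMeasurable ((n:ℝ) ^ ((2:ℝ)/3))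
      (Filter.Eventually.of_forall fun ω => ?_)
    rw [Real.norm_eq_abs, abs_of_nonneg (Real.rpow_nonneg (abs_nonneg _) _)]
    exact Real.rpow_le_rpow (abs_nonneg _) (hTb ω) (by norm_num)
  have hgmem : MemLp (fun ω => |T ω| ^ ((4:ℝ)/3)) (ENNReal.ofReal 3) P := by
    refine MemLp.of_bound hgmeas.aestronglyMeasurable ((n:ℝ) ^ ((4:ℝ)/3))
      (Filter.Eventually.of_forall fun ω => ?_)
    rw [Real.norm_eq_abs, abs_of_nonneg (Real.rpow_nonneg (abs_nonneg _) _)]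
    exact Real.rpow_le_rpow (abs_nonneg _) (hTb ω) (by norm_num)
  have hholder := integral_mul_le_Lp_mul_Lq_of_nonneg hpq
    (Filter.Eventually.of_forall fun ω => Real.rpow_nonneg (abs_nonneg (T ω)) _)
    (Filter.Eventually.of_forall fun ω => Real.rpow_nonneg (abs_nonneg (T ω)) _)
    hfmem hgmem
  -- rewrite the three integrals in hholder
  have e1 : ∫ ω, |T ω| ^ ((2:ℝ)/3) * |T ω| ^ ((4:ℝ)/3) ∂P = ∫ ω, (T ω)^2 ∂P := by
    congr 1
    funext ω
    rw [← Real.rpow_add_of_nonneg (abs_nonneg _) (by norm_num) (by norm_num)]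
    norm_num
  have e2 : ∫ ω, (|T ω| ^ ((2:ℝ)/3)) ^ ((3:ℝ)/2) ∂P = I := by
    rw [hIdef]
    congr 1
    funext ω
    rw [← Real.rpow_mul (abs_nonneg _)]
    norm_num
  have e3 : ∫ ω, (|T ω| ^ ((4:ℝ)/3)) ^ ((3:ℝ)) ∂P = M := by
    rw [hMdef]
    congr 1
    funext ω
    rw [← Real.rpow_mul (abs_nonneg _)]
    norm_num
    rw [← abs_pow,
      abs_of_nonneg (by positivity : (0:ℝ) ≤ T ω ^ 4)]
  rw [e1, hT2] at hholder
  have hH : 2 * S ≤ I ^ ((2:ℝ)/3) * M ^ ((1:ℝ)/3) := by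
    calc 2 * S ≤ (∫ ω, (|T ω| ^ ((2:ℝ)/3)) ^ ((3:ℝ)/2) ∂P) ^ (1/((3:ℝ)/2))
        * (∫ ω, (|T ω| ^ ((4:ℝ)/3)) ^ ((3:ℝ)) ∂P) ^ (1/(3:ℝ)) := hholder
    _ = I ^ ((2:ℝ)/3) * M ^ ((1:ℝ)/3) := by rw [e2, e3]; norm_num
  -- cube the inequality
  have hcube : (2*S)^3 ≤ I^2 * M := by
    have h3 := pow_le_pow_left₀ (by positivity) hH 3
    calc (2*S)^3 ≤ (I ^ ((2:ℝ)/3) * M ^ ((1:ℝ)/3))^3 := h3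
    _ = I^2 * M := by
      rw [mul_pow, ← Real.rpow_natCast (I ^ ((2:ℝ)/3)) 3, ← Real.rpow_natCast (M ^ ((1:ℝ)/3)) 3,
        ← Real.rpow_mul hI0, ← Real.rpow_mul hM0]
      norm_num
  have hMle : I^2 * M ≤ I^2 * (2*S + 12*S^2) :=
    mul_le_mul_of_nonneg_left hT4 (by positivity)
  -- final algebra
  have hr0 : (0:ℝ) < 6*S + 1 := by linarith
  have hr1 : 0 < Real.sqrt (6*S+1) := Real.sqrt_pos.2 hr0
  have hr2 : (Real.sqrt (6*S+1))^2 = 6*S+1 := Real.sq_sqrt hr0.le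
  rw [div_le_iff₀ hr1]
  rcases eq_or_lt_of_le hS0 with hSz | hSpos
  · linarith [mul_nonneg hI0 hr1.le]
  · have h4 : 4*S^2 ≤ (I * Real.sqrt (6*S+1))^2 := by
      have : (I * Real.sqrt (6*S+1))^2 = I^2 * (6*S+1) := by rw [mul_pow, hr2]
      nlinarith [hcube, hMle, hSpos]
    have := Real.sqrt_le_sqrt h4
    rw [Real.sqrt_sq (mul_nonneg hI0 hr1.le)] at this
    rw [show 4*S^2 = (2*S)^2 by ring, Real.sqrt_sq (by linarith)] at this
    exact this
end

section
/- Let X_1,…,X_n be independent Bernoulli random variables with P[X_i = 1] = p_i and 1/n ≤ p_i ≤ 1 − 1/n for every i ∈ [n]. Let Y be any integrable real-valued random variable independent of (X_1,…,X_n). Then E|Σ_{i=1}^n X_i + Y| ≥ (1/4)·√(Σ_{i=1}^n min{p_i, 1−p_i}). -/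
open MeasureTheory ProbabilityTheory

lemma cs_integral {Ω : Type} [MeasurableSpace Ω] {P : Measure Ω}
    (f g : Ω → ℝ) (hf2 : Integrable (fun ω => f ω * f ω) P)
    (hg2 : Integrable (fun ω => g ω * g ω) P) (hfg : Integrable (fun ω => f ω * g ω) P) :
    (∫ ω, f ω * g ω ∂P)^2 ≤ (∫ ω, f ω * f ω ∂P) * (∫ ω, g ω * g ω ∂P) := by
  set A := ∫ ω, f ω * f ω ∂P with hA
  set B := ∫ ω, g ω * g ω ∂P with hB
  set C := ∫ ω, f ω * g ω ∂P with hC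
  have hq : ∀ t : ℝ, 0 ≤ A * (t * t) + (-(2*C)) * t + B := by
    intro t
    have h0 : 0 ≤ ∫ ω, (t * f ω - g ω)^2 ∂P := integral_nonneg fun ω => sq_nonneg _
    have he : (fun ω => (t * f ω - g ω)^2)
        = fun ω => ((t*t) * (f ω * f ω) - (2*t) * (f ω * g ω)) + g ω * g ω := by
      funext ω; ring
    have i1 : Integrable (fun ω => (t*t) * (f ω * f ω)) P := hf2.const_mul _
    have i2 : Integrable (fun ω => (2*t) * (f ω * g ω)) P := hfg.const_mul _
    have i12 : Integrable (fun ω => (t*t) * (f ω * f ω) - (2*t) * (f ω * g ω)) P := i1.sub i2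
    rw [he, integral_add i12 hg2, integral_sub i1 i2,
        integral_const_mul, integral_const_mul] at h0
    nlinarith [h0]
  have hd := discrim_le_zero hq
  rw [discrim] at hd
  nlinarith [hd]

lemma integrable_of_abs_bound {Ω : Type} [MeasurableSpace Ω] {P : Measure Ω}
    [IsProbabilityMeasure P] (f : Ω → ℝ) (C : ℝ) (hf : Measurable f) (h : ∀ ω, |f ω| ≤ C) :
    Integrable f P :=
  ⟨hf.aestronglyMeasurable,
    HasFiniteIntegral.of_bounded (C := C) (ae_of_all _ fun ω => by simpa using h ω)⟩

lemma bernoulli_integral {Ω : Type} [MeasurableSpace Ω] {P : Measure Ω}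
    [IsProbabilityMeasure P] (X : Ω → ℝ) (p : ℝ) (hm : Measurable X)
    (hval : ∀ ω, X ω = 0 ∨ X ω = 1) (hprob : P {ω | X ω = 1} = ENNReal.ofReal p)
    (hp0 : 0 ≤ p) (f : ℝ → ℝ) :
    ∫ ω, f (X ω) ∂P = p * f 1 + (1 - p) * f 0 := by
  have hA : MeasurableSet {ω | X ω = 1} := hm (measurableSet_singleton 1)
  have heq : (fun ω => f (X ω))
      = fun ω => Set.indicator {ω | X ω = 1} (fun _ => f 1 - f 0) ω + f 0 := by
    funext ω
    rcases hval ω with h | h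
    · rw [Set.indicator_of_notMem (by simp [Set.mem_setOf_eq, h])]
      simp [h]
    · rw [Set.indicator_of_mem (by simp [Set.mem_setOf_eq, h])]
      simp [h]
  rw [heq, integral_add ((integrable_const _).indicator hA) (integrable_const _),
      integral_indicator_const _ hA, integral_const, measureReal_def, hprob,
      ENNReal.toReal_ofReal hp0]
  simp
  ring

set_option maxHeartbeats 1600000 in
/-- Corollary B.5: if `X₁, …, Xₙ` are independent Bernoulli variables with parameters
`pᵢ ∈ [1/n, 1 - 1/n]` and `Y` is an integrable random variable independent of
`(X₁, …, Xₙ)`, then `E|∑ Xᵢ + Y| ≥ (1/4) √(∑ min {pᵢ, 1 - pᵢ})`. -/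
theorem bernoulli_sum_plus_indep_L1_lower_bound (n : ℕ) (p : Fin n → ℝ)
    (hp : ∀ i, p i ∈ Set.Icc (1 / (n : ℝ)) (1 - 1 / (n : ℝ)))
    (Ω : Type) [MeasurableSpace Ω] (P : Measure Ω) [IsProbabilityMeasure P]
    (X : Fin n → Ω → ℝ) (hXmeas : ∀ i, Measurable (X i))
    (hXval : ∀ i ω, X i ω = 0 ∨ X i ω = 1)
    (hXprob : ∀ i, P {ω | X i ω = 1} = ENNReal.ofReal (p i))
    (hXindep : iIndepFun X P)
    (Y : Ω → ℝ) (hYmeas : Measurable Y) (hYint : Integrable Y P)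
    (hindep : IndepFun (fun ω (i : Fin n) => X i ω) Y P) :
    (1 / 4) * Real.sqrt (∑ i, min (p i) (1 - p i)) ≤
      ∫ ω, |(∑ i, X i ω) + Y ω| ∂P := by
  rcases Nat.lt_or_ge n 2 with hn | hn
  · interval_cases n
    · have h0 : (∑ i : Fin 0, min (p i) (1 - p i)) = (0:ℝ) := by simp
      rw [h0, Real.sqrt_zero, mul_zero]
      exact integral_nonneg fun ω => abs_nonneg _
    · exfalso
      obtain ⟨h1, h2⟩ := hp 0
      norm_num at h1 h2
      linarith
  -- main case : 2 ≤ n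
  have hn2 : (2:ℝ) ≤ (n:ℝ) := by exact_mod_cast hn
  have hnpos : (0:ℝ) < (n:ℝ) := by linarith
  have hp01 : ∀ i, 0 ≤ p i ∧ p i ≤ 1 := by
    intro i
    obtain ⟨h1, h2⟩ := hp i
    have h3 : 0 < 1/(n:ℝ) := by positivity
    exact ⟨by linarith, by linarith⟩
  -- basic bounds
  have hWmeas : ∀ i, Measurable (fun ω => X i ω - p i) := fun i => (hXmeas i).sub_const _
  have hWbd : ∀ i ω, |X i ω - p i| ≤ 1 := by
    intro i ω
    obtain ⟨h1, h2⟩ := hp01 i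
    rcases hXval i ω with h | h <;> rw [h, abs_le] <;> constructor <;> linarith
  have hTmeas : ∀ s : Finset (Fin n), Measurable (fun ω => ∑ i ∈ s, (X i ω - p i)) :=
    fun s => Finset.measurable_sum s fun i _ => hWmeas i
  have hTbd : ∀ s : Finset (Fin n), ∀ ω, |∑ i ∈ s, (X i ω - p i)| ≤ (s.card : ℝ) := by
    intro s ω
    calc |∑ i ∈ s, (X i ω - p i)| ≤ ∑ i ∈ s, |X i ω - p i| := Finset.abs_sum_le_sum_abs _ _
    _ ≤ ∑ _i ∈ s, (1:ℝ) := Finset.sum_le_sum fun i _ => hWbd i ω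
    _ = s.card := by simp
  have hTpowint : ∀ (s : Finset (Fin n)) (a : ℕ),
      Integrable (fun ω => (∑ i ∈ s, (X i ω - p i))^a) P := by
    intro s a
    refine integrable_of_abs_bound _ ((s.card:ℝ)^a) ((hTmeas s).pow_const a) fun ω => ?_
    rw [abs_pow]
    exact pow_le_pow_left₀ (abs_nonneg _) (hTbd s ω) a
  have hTWint : ∀ (s : Finset (Fin n)) (k : Fin n) (a b : ℕ),
      Integrable (fun ω => (∑ i ∈ s, (X i ω - p i))^a * (X k ω - p k)^b) P := by
    intro s k a b
    refine integrable_of_abs_bound _ ((s.card:ℝ)^a)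
      (((hTmeas s).pow_const a).mul ((hWmeas k).pow_const b)) fun ω => ?_
    rw [abs_mul, abs_pow, abs_pow]
    have h1 : |∑ i ∈ s, (X i ω - p i)|^a ≤ (s.card:ℝ)^a :=
      pow_le_pow_left₀ (abs_nonneg _) (hTbd s ω) a
    have h2 : |X k ω - p k|^b ≤ 1 := pow_le_one₀ (abs_nonneg _) (hWbd k ω)
    calc |∑ i ∈ s, (X i ω - p i)|^a * |X k ω - p k|^b
        ≤ (s.card:ℝ)^a * 1 :=
          mul_le_mul h1 h2 (pow_nonneg (abs_nonneg _) _) (pow_nonneg (Nat.cast_nonneg _) _)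
    _ = (s.card:ℝ)^a := mul_one _
  -- independence : product of moments
  have hIndepSW : ∀ (s : Finset (Fin n)) (k : Fin n), k ∉ s → ∀ a b : ℕ,
      ∫ ω, (∑ i ∈ s, (X i ω - p i))^a * (X k ω - p k)^b ∂P
        = (∫ ω, (∑ i ∈ s, (X i ω - p i))^a ∂P) * (∫ ω, (X k ω - p k)^b ∂P) := by
    intro s k hk a b
    have h1 : IndepFun (∑ j ∈ s, X j) (X k) P :=
      hXindep.indepFun_finsetSum_of_notMem hXmeas hk
    have h2 := h1.comp (φ := fun x => (x - ∑ i ∈ s, p i)^a) (ψ := fun x => (x - p k)^b)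
      ((measurable_id.sub_const _).pow_const a) ((measurable_id.sub_const _).pow_const b)
    have hfeq : ((fun x => (x - ∑ i ∈ s, p i)^a) ∘ (∑ j ∈ s, X j))
        = fun ω => (∑ i ∈ s, (X i ω - p i))^a := by
      funext ω
      simp only [Function.comp_apply, Finset.sum_apply, Finset.sum_sub_distrib]
    have hgeq : ((fun x => (x - p k)^b) ∘ (X k)) = fun ω => (X k ω - p k)^b := rfl
    rw [hfeq, hgeq] at h2
    exact h2.integral_fun_mul_eq_mul_integral (hTpowint s a).aestronglyMeasurable (integrable_of_abs_bound _ 1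
      ((hWmeas k).pow_const b) (fun ω => by rw [abs_pow]; exact pow_le_one₀ (abs_nonneg _) (hWbd k ω))).aestronglyMeasurable
  -- per-variable moments
  have hWint_pow : ∀ (i : Fin n) (k : ℕ),
      ∫ ω, (X i ω - p i)^k ∂P = p i * (1 - p i)^k + (1 - p i) * (0 - p i)^k := by
    intro i k
    have h := bernoulli_integral (X i) (p i) (hXmeas i) (hXval i) (hXprob i) (hp01 i).1
      (fun x => (x - p i)^k)
    simpa using h
  have hm1 : ∀ i, ∫ ω, (X i ω - p i)^(1:ℕ) ∂P = 0 := by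
    intro i; rw [hWint_pow]; ring
  have hm2 : ∀ i, ∫ ω, (X i ω - p i)^(2:ℕ) ∂P = p i * (1 - p i) := by
    intro i; rw [hWint_pow]; ring
  have hv0 : ∀ i, (0:ℝ) ≤ p i * (1 - p i) := by
    intro i; obtain ⟨h0, h1⟩ := hp01 i; nlinarith
  have hm3 : ∀ i, |∫ ω, (X i ω - p i)^(3:ℕ) ∂P| ≤ p i * (1 - p i) := by
    intro i; rw [hWint_pow]
    obtain ⟨h0, h1⟩ := hp01 i
    have e : p i * (1 - p i)^3 + (1 - p i) * (0 - p i)^3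
        = (p i * (1 - p i)) * (1 - 2 * p i) := by ring
    rw [e, abs_mul, abs_of_nonneg (hv0 i)]
    have h2 : |1 - 2 * p i| ≤ 1 := by rw [abs_le]; constructor <;> linarith
    exact mul_le_of_le_one_right (hv0 i) h2
  have hm4 : ∀ i, ∫ ω, (X i ω - p i)^(4:ℕ) ∂P ≤ p i * (1 - p i) := by
    intro i; rw [hWint_pow]
    obtain ⟨h0, h1⟩ := hp01 i
    have e : p i * (1 - p i)^4 + (1 - p i) * (0 - p i)^4
        = (p i * (1 - p i)) * ((1 - p i)^3 + (p i)^3) := by ring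
    have h2 : (1 - p i)^3 + (p i)^3 ≤ 1 := by
      nlinarith [mul_nonneg h0 (by linarith : (0:ℝ) ≤ 1 - p i)]
    have h3 : (0:ℝ) ≤ (1 - p i)^3 + (p i)^3 := by nlinarith [sq_nonneg (2 * p i - 1)]
    rw [e]
    nlinarith [hv0 i]
  have hW0 : ∀ i : Fin n, ∫ ω, (X i ω - p i)^(0:ℕ) ∂P = 1 := by
    intro i; simp
  have hT0 : ∀ s : Finset (Fin n), ∫ ω, (∑ i ∈ s, (X i ω - p i))^(0:ℕ) ∂P = 1 := by
    intro s; simp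
  have hVs0 : ∀ s : Finset (Fin n), (0:ℝ) ≤ ∑ i ∈ s, p i * (1 - p i) :=
    fun s => Finset.sum_nonneg fun i _ => hv0 i
  -- induction on finsets : moments of partial sums
  have key : ∀ s : Finset (Fin n),
      (∫ ω, (∑ i ∈ s, (X i ω - p i))^(1:ℕ) ∂P = 0) ∧
      (∫ ω, (∑ i ∈ s, (X i ω - p i))^(2:ℕ) ∂P = ∑ i ∈ s, p i * (1 - p i)) ∧
      (|∫ ω, (∑ i ∈ s, (X i ω - p i))^(3:ℕ) ∂P| ≤ ∑ i ∈ s, p i * (1 - p i)) ∧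
      (∫ ω, (∑ i ∈ s, (X i ω - p i))^(4:ℕ) ∂P
          ≤ (∑ i ∈ s, p i * (1 - p i)) + 3 * (∑ i ∈ s, p i * (1 - p i))^2) := by
    intro s
    induction s using Finset.induction_on with
    | empty => norm_num
    | @insert k s hk ih =>
      obtain ⟨ih1, ih2, ih3, ih4⟩ := ih
      have hexp : ∀ m : ℕ, ∫ ω, (∑ i ∈ insert k s, (X i ω - p i))^m ∂P
          = ∑ j ∈ Finset.range (m+1),
              (∫ ω, (∑ i ∈ s, (X i ω - p i))^j ∂P) * (∫ ω, (X k ω - p k)^(m-j) ∂P)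
                * (m.choose j) := by
        intro m
        have h1 : ∀ ω, (∑ i ∈ insert k s, (X i ω - p i))^m
            = ∑ j ∈ Finset.range (m+1),
                (∑ i ∈ s, (X i ω - p i))^j * (X k ω - p k)^(m-j) * (m.choose j) := by
          intro ω
          rw [Finset.sum_insert hk, add_comm, add_pow]
        simp_rw [h1]
        rw [integral_finset_sum _ (fun j _ => ((hTWint s k j (m-j)).mul_const _))]
        exact Finset.sum_congr rfl fun j _ => by
          rw [integral_mul_const, hIndepSW s k hk j (m-j)]
      have c1 : ∫ ω, (∑ i ∈ insert k s, (X i ω - p i))^(1:ℕ) ∂P = 0 := by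
        rw [hexp 1, Finset.sum_range_succ, Finset.sum_range_succ, Finset.sum_range_zero]
        norm_num only
        simp only [Nat.choose_self, Nat.choose_zero_right, Nat.choose_one_right, show Nat.choose 3 2 = 3 from rfl, show Nat.choose 4 2 = 6 from rfl, show Nat.choose 4 3 = 4 from rfl, Nat.cast_ofNat, Nat.cast_one, hT0 s, hW0 k, ih1, ih2, hm1 k, hm2 k, one_mul, mul_one, mul_zero, zero_mul, add_zero, zero_add]
      have c2 : ∫ ω, (∑ i ∈ insert k s, (X i ω - p i))^(2:ℕ) ∂P
          = p k * (1 - p k) + ∑ i ∈ s, p i * (1 - p i) := by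
        rw [hexp 2, Finset.sum_range_succ, Finset.sum_range_succ, Finset.sum_range_succ,
          Finset.sum_range_zero]
        norm_num only
        simp only [Nat.choose_self, Nat.choose_zero_right, Nat.choose_one_right, show Nat.choose 3 2 = 3 from rfl, show Nat.choose 4 2 = 6 from rfl, show Nat.choose 4 3 = 4 from rfl, Nat.cast_ofNat, Nat.cast_one, hT0 s, hW0 k, ih1, ih2, hm1 k, hm2 k, one_mul, mul_one, mul_zero, zero_mul, add_zero, zero_add]
        try ring
      have c3 : ∫ ω, (∑ i ∈ insert k s, (X i ω - p i))^(3:ℕ) ∂P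
          = (∫ ω, (X k ω - p k)^(3:ℕ) ∂P) + ∫ ω, (∑ i ∈ s, (X i ω - p i))^(3:ℕ) ∂P := by
        rw [hexp 3, Finset.sum_range_succ, Finset.sum_range_succ, Finset.sum_range_succ,
          Finset.sum_range_succ, Finset.sum_range_zero]
        norm_num only
        simp only [Nat.choose_self, Nat.choose_zero_right, Nat.choose_one_right, show Nat.choose 3 2 = 3 from rfl, show Nat.choose 4 2 = 6 from rfl, show Nat.choose 4 3 = 4 from rfl, Nat.cast_ofNat, Nat.cast_one, hT0 s, hW0 k, ih1, ih2, hm1 k, hm2 k, one_mul, mul_one, mul_zero, zero_mul, add_zero, zero_add]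
        try ring
      have c4 : ∫ ω, (∑ i ∈ insert k s, (X i ω - p i))^(4:ℕ) ∂P
          = (∫ ω, (X k ω - p k)^(4:ℕ) ∂P)
            + 6 * (∑ i ∈ s, p i * (1 - p i)) * (p k * (1 - p k))
            + ∫ ω, (∑ i ∈ s, (X i ω - p i))^(4:ℕ) ∂P := by
        rw [hexp 4, Finset.sum_range_succ, Finset.sum_range_succ, Finset.sum_range_succ,
          Finset.sum_range_succ, Finset.sum_range_succ, Finset.sum_range_zero]
        norm_num only
        simp only [Nat.choose_self, Nat.choose_zero_right, Nat.choose_one_right, show Nat.choose 3 2 = 3 from rfl, show Nat.choose 4 2 = 6 from rfl, show Nat.choose 4 3 = 4 from rfl, Nat.cast_ofNat, Nat.cast_one, hT0 s, hW0 k, ih1, ih2, hm1 k, hm2 k, one_mul, mul_one, mul_zero, zero_mul, add_zero, zero_add]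
        ring
      rw [Finset.sum_insert hk]
      refine ⟨c1, by rw [c2], ?_, ?_⟩
      · rw [c3]
        have h3 := hm3 k
        calc |∫ ω, (X k ω - p k)^(3:ℕ) ∂P + ∫ ω, (∑ i ∈ s, (X i ω - p i))^(3:ℕ) ∂P|
            ≤ |∫ ω, (X k ω - p k)^(3:ℕ) ∂P| + |∫ ω, (∑ i ∈ s, (X i ω - p i))^(3:ℕ) ∂P| :=
              abs_add_le _ _
        _ ≤ p k * (1 - p k) + ∑ i ∈ s, p i * (1 - p i) := add_le_add h3 ih3
      · rw [c4]
        have h4 := hm4 k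
        have hvk := hv0 k
        have hVs := hVs0 s
        nlinarith [ih4]
  obtain ⟨hT1u, hT2u, hT3u, hT4u⟩ := key Finset.univ
  -- lower bound on total variance
  have hVlow : (1:ℝ)/2 ≤ ∑ i, p i * (1 - p i) := by
    have hsum : ∀ i ∈ Finset.univ, 1/(n:ℝ) * (1/2) ≤ p i * (1 - p i) := by
      intro i _
      obtain ⟨ha, hb⟩ := hp i
      have h1 : 0 ≤ (p i - 1/(n:ℝ)) * ((1 - 1/(n:ℝ)) - p i) :=
        mul_nonneg (by linarith) (by linarith)
      have h2 : 1/(n:ℝ) ≤ 1/2 := by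
        rw [div_le_div_iff₀ hnpos (by norm_num)]; linarith
      have h3 : 0 < 1/(n:ℝ) := by positivity
      nlinarith
    calc (1:ℝ)/2 = (n:ℝ) * (1/(n:ℝ) * (1/2)) := by field_simp
    _ ≤ ∑ i, p i * (1 - p i) := by
        have h := Finset.card_nsmul_le_sum Finset.univ _ _ hsum
        simpa [Finset.card_univ, nsmul_eq_mul] using h
  -- bound on the target sum
  have hmle : (∑ i, min (p i) (1 - p i)) ≤ 2 * ∑ i, p i * (1 - p i) := by
    rw [Finset.mul_sum]
    refine Finset.sum_le_sum fun i _ => ?_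
    obtain ⟨h0, h1⟩ := hp01 i
    rcases min_cases (p i) (1 - p i) with ⟨hmin, hle⟩ | ⟨hmin, hle⟩ <;> rw [hmin] <;> nlinarith
  have hm0 : (0:ℝ) ≤ ∑ i, min (p i) (1 - p i) :=
    Finset.sum_nonneg fun i _ => le_min (hp01 i).1 (by linarith [(hp01 i).2])
  -- fixed shift lemma
  have hfix : ∀ d : ℝ, (1/4) * Real.sqrt (∑ i, min (p i) (1 - p i))
      ≤ ∫ ω, |(∑ i, (X i ω - p i)) + d| ∂P := by
    intro d
    have hZmeas : Measurable (fun ω => (∑ i, (X i ω - p i)) + d) :=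
      (hTmeas Finset.univ).add_const d
    have hZbd : ∀ ω, |(∑ i, (X i ω - p i)) + d| ≤ (n:ℝ) + |d| := by
      intro ω
      calc |(∑ i, (X i ω - p i)) + d| ≤ |∑ i, (X i ω - p i)| + |d| := abs_add_le _ _
      _ ≤ (n:ℝ) + |d| := by
          have h := hTbd Finset.univ ω
          rw [Finset.card_univ, Fintype.card_fin] at h
          linarith
    have hCZ0 : (0:ℝ) ≤ (n:ℝ) + |d| := by positivity
    -- expansion with constants
    have hexpc : ∀ m : ℕ, ∫ ω, ((∑ i, (X i ω - p i)) + d)^m ∂P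
        = ∑ j ∈ Finset.range (m+1),
            (∫ ω, (∑ i, (X i ω - p i))^j ∂P) * (d^(m-j) * (m.choose j)) := by
      intro m
      have h1 : ∀ ω, ((∑ i, (X i ω - p i)) + d)^m
          = ∑ j ∈ Finset.range (m+1),
              (∑ i, (X i ω - p i))^j * (d^(m-j) * (m.choose j)) := by
        intro ω
        rw [add_pow]
        exact Finset.sum_congr rfl fun j _ => by ring
      simp_rw [h1]
      rw [integral_finset_sum _ (fun j _ => ((hTpowint Finset.univ j).mul_const _))]
      exact Finset.sum_congr rfl fun j _ => integral_mul_const _ _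
    have e2 : ∫ ω, ((∑ i, (X i ω - p i)) + d)^(2:ℕ) ∂P
        = d^2 + (∑ i, p i * (1 - p i)) := by
      rw [hexpc 2, Finset.sum_range_succ, Finset.sum_range_succ, Finset.sum_range_succ,
        Finset.sum_range_zero]
      norm_num only
      simp only [Nat.choose_self, Nat.choose_zero_right, Nat.choose_one_right, show Nat.choose 4 2 = 6 from rfl, show Nat.choose 4 3 = 4 from rfl, Nat.cast_ofNat, Nat.cast_one, hT0 Finset.univ, hT1u, hT2u, MeasureTheory.integral_const, measure_univ, ENNReal.toReal_one, probReal_univ, smul_eq_mul, one_mul, mul_one, mul_zero, zero_mul, add_zero, zero_add, pow_zero]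
      try ring
    have e4 : ∫ ω, ((∑ i, (X i ω - p i)) + d)^(4:ℕ) ∂P
        = d^4 + 6 * d^2 * (∑ i, p i * (1 - p i))
          + (∫ ω, (∑ i, (X i ω - p i))^(3:ℕ) ∂P) * (d * 4)
          + ∫ ω, (∑ i, (X i ω - p i))^(4:ℕ) ∂P := by
      rw [hexpc 4, Finset.sum_range_succ, Finset.sum_range_succ, Finset.sum_range_succ,
        Finset.sum_range_succ, Finset.sum_range_succ, Finset.sum_range_zero]
      norm_num only
      simp only [Nat.choose_self, Nat.choose_zero_right, Nat.choose_one_right, show Nat.choose 4 2 = 6 from rfl, show Nat.choose 4 3 = 4 from rfl, Nat.cast_ofNat, Nat.cast_one, hT0 Finset.univ, hT1u, hT2u, MeasureTheory.integral_const, measure_univ, ENNReal.toReal_one, probReal_univ, smul_eq_mul, one_mul, mul_one, mul_zero, zero_mul, add_zero, zero_add, pow_zero]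
      ring
    -- abbreviations
    set V : ℝ := ∑ i, p i * (1 - p i) with hVdef
    set M : ℝ := ∑ i, min (p i) (1 - p i) with hMdef
    set A : ℝ := ∫ ω, |(∑ i, (X i ω - p i)) + d| ∂P with hAdef
    set B : ℝ := ∫ ω, ((∑ i, (X i ω - p i)) + d)^(2:ℕ) ∂P with hBdef
    set C : ℝ := ∫ ω, |(∑ i, (X i ω - p i)) + d|^(3:ℕ) ∂P with hCdef
    set D : ℝ := ∫ ω, ((∑ i, (X i ω - p i)) + d)^(4:ℕ) ∂P with hDdef
    set t3 : ℝ := ∫ ω, (∑ i, (X i ω - p i))^(3:ℕ) ∂P with ht3def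
    have hA0 : 0 ≤ A := integral_nonneg fun ω => abs_nonneg _
    have hC0 : 0 ≤ C := integral_nonneg fun ω => pow_nonneg (abs_nonneg _) _
    have hD0 : 0 ≤ D := integral_nonneg fun ω => by positivity
    have hBval : B = d^2 + V := e2
    have hBpos : 0 < B := by rw [hBval]; nlinarith [sq_nonneg d, hVlow]
    have hDbound : D ≤ d^4 + 6 * d^2 * V + 4 * |d| * V + V + 3*V^2 := by
      rw [e4]
      have ht3 : t3 * (d*4) ≤ 4 * |d| * V := by
        calc t3 * (d*4) ≤ |t3 * (d*4)| := le_abs_self _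
        _ = |t3| * (|d| * 4) := by rw [abs_mul, abs_mul]; norm_num
        _ ≤ V * (|d| * 4) := by
            have := hT3u
            nlinarith [abs_nonneg d]
        _ = 4 * |d| * V := by ring
      nlinarith [hT4u, ht3]
    -- Cauchy-Schwarz applications
    have intAbs : Integrable (fun ω => |(∑ i, (X i ω - p i)) + d|) P :=
      integrable_of_abs_bound _ ((n:ℝ) + |d|) hZmeas.abs
        (fun ω => by rw [abs_abs]; exact hZbd ω)
    have intSq : Integrable (fun ω => ((∑ i, (X i ω - p i)) + d)^(2:ℕ)) P :=
      integrable_of_abs_bound _ (((n:ℝ) + |d|)^(2:ℕ)) (hZmeas.pow_const _)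
        (fun ω => by rw [abs_pow]; exact pow_le_pow_left₀ (abs_nonneg _) (hZbd ω) _)
    have intCube : Integrable (fun ω => |(∑ i, (X i ω - p i)) + d|^(3:ℕ)) P :=
      integrable_of_abs_bound _ (((n:ℝ) + |d|)^(3:ℕ)) (hZmeas.abs.pow_const _)
        (fun ω => by
          rw [abs_pow, abs_abs]
          exact pow_le_pow_left₀ (abs_nonneg _) (hZbd ω) _)
    have intQuart : Integrable (fun ω => ((∑ i, (X i ω - p i)) + d)^(4:ℕ)) P :=
      integrable_of_abs_bound _ (((n:ℝ) + |d|)^(4:ℕ)) (hZmeas.pow_const _)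
        (fun ω => by rw [abs_pow]; exact pow_le_pow_left₀ (abs_nonneg _) (hZbd ω) _)
    have hsqrtmeas : Measurable (fun ω => Real.sqrt |(∑ i, (X i ω - p i)) + d|) :=
      Real.continuous_sqrt.measurable.comp hZmeas.abs
    have cs1 : B^2 ≤ A * C := by
      have ef : (fun ω => Real.sqrt |(∑ i, (X i ω - p i)) + d|
            * Real.sqrt |(∑ i, (X i ω - p i)) + d|)
          = fun ω => |(∑ i, (X i ω - p i)) + d| :=
        funext fun ω => Real.mul_self_sqrt (abs_nonneg _)
      have efg : (fun ω => Real.sqrt |(∑ i, (X i ω - p i)) + d|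
            * (|(∑ i, (X i ω - p i)) + d| * Real.sqrt |(∑ i, (X i ω - p i)) + d|))
          = fun ω => ((∑ i, (X i ω - p i)) + d)^(2:ℕ) := by
        funext ω
        rw [show Real.sqrt |(∑ i, (X i ω - p i)) + d|
              * (|(∑ i, (X i ω - p i)) + d| * Real.sqrt |(∑ i, (X i ω - p i)) + d|)
            = (Real.sqrt |(∑ i, (X i ω - p i)) + d| * Real.sqrt |(∑ i, (X i ω - p i)) + d|)
              * |(∑ i, (X i ω - p i)) + d| from by ring,
          Real.mul_self_sqrt (abs_nonneg _), ← abs_mul, abs_mul_self, sq]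
      have egg : (fun ω => (|(∑ i, (X i ω - p i)) + d| * Real.sqrt |(∑ i, (X i ω - p i)) + d|)
            * (|(∑ i, (X i ω - p i)) + d| * Real.sqrt |(∑ i, (X i ω - p i)) + d|))
          = fun ω => |(∑ i, (X i ω - p i)) + d|^(3:ℕ) := by
        funext ω
        rw [show (|(∑ i, (X i ω - p i)) + d| * Real.sqrt |(∑ i, (X i ω - p i)) + d|)
              * (|(∑ i, (X i ω - p i)) + d| * Real.sqrt |(∑ i, (X i ω - p i)) + d|)
            = (Real.sqrt |(∑ i, (X i ω - p i)) + d| * Real.sqrt |(∑ i, (X i ω - p i)) + d|)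
              * (|(∑ i, (X i ω - p i)) + d| * |(∑ i, (X i ω - p i)) + d|) from by ring,
          Real.mul_self_sqrt (abs_nonneg _)]
        ring
      have i1 : Integrable (fun ω => Real.sqrt |(∑ i, (X i ω - p i)) + d|
          * Real.sqrt |(∑ i, (X i ω - p i)) + d|) P := by rw [ef]; exact intAbs
      have i2 : Integrable (fun ω => (|(∑ i, (X i ω - p i)) + d|
            * Real.sqrt |(∑ i, (X i ω - p i)) + d|)
          * (|(∑ i, (X i ω - p i)) + d| * Real.sqrt |(∑ i, (X i ω - p i)) + d|)) P := by
        rw [egg]; exact intCube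
      have i3 : Integrable (fun ω => Real.sqrt |(∑ i, (X i ω - p i)) + d|
          * (|(∑ i, (X i ω - p i)) + d| * Real.sqrt |(∑ i, (X i ω - p i)) + d|)) P := by
        rw [efg]; exact intSq
      have h := cs_integral (fun ω => Real.sqrt |(∑ i, (X i ω - p i)) + d|)
        (fun ω => |(∑ i, (X i ω - p i)) + d| * Real.sqrt |(∑ i, (X i ω - p i)) + d|) i1 i2 i3
      beta_reduce at h
      rw [ef, efg, egg] at h
      rw [hAdef, hBdef, hCdef]
      exact h
    have cs2 : C^2 ≤ B * D := by
      have efg : (fun ω => |(∑ i, (X i ω - p i)) + d| * |(∑ i, (X i ω - p i)) + d|^(2:ℕ))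
          = fun ω => |(∑ i, (X i ω - p i)) + d|^(3:ℕ) := by
        funext ω; ring
      have ef : (fun ω => |(∑ i, (X i ω - p i)) + d| * |(∑ i, (X i ω - p i)) + d|)
          = fun ω => ((∑ i, (X i ω - p i)) + d)^(2:ℕ) := by
        funext ω; rw [← abs_mul, abs_mul_self, sq]
      have egg : (fun ω => |(∑ i, (X i ω - p i)) + d|^(2:ℕ) * |(∑ i, (X i ω - p i)) + d|^(2:ℕ))
          = fun ω => ((∑ i, (X i ω - p i)) + d)^(4:ℕ) := by
        funext ω
        rw [sq_abs]
        ring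
      have i1 : Integrable (fun ω => |(∑ i, (X i ω - p i)) + d|
          * |(∑ i, (X i ω - p i)) + d|) P := by rw [ef]; exact intSq
      have i2 : Integrable (fun ω => |(∑ i, (X i ω - p i)) + d|^(2:ℕ)
          * |(∑ i, (X i ω - p i)) + d|^(2:ℕ)) P := by rw [egg]; exact intQuart
      have i3 : Integrable (fun ω => |(∑ i, (X i ω - p i)) + d|
          * |(∑ i, (X i ω - p i)) + d|^(2:ℕ)) P := by rw [efg]; exact intCube
      have h := cs_integral (fun ω => |(∑ i, (X i ω - p i)) + d|)
        (fun ω => |(∑ i, (X i ω - p i)) + d|^(2:ℕ)) i1 i2 i3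
      beta_reduce at h
      rw [ef, efg, egg] at h
      rw [hBdef, hCdef, hDdef]
      exact h
    -- combine
    have h4 : B^4 ≤ A^2 * C^2 := by nlinarith [cs1, hA0, hC0, sq_nonneg B]
    have h5 : A^2 * C^2 ≤ A^2 * (B * D) := mul_le_mul_of_nonneg_left cs2 (sq_nonneg A)
    have h3 : B^3 ≤ A^2 * D := by nlinarith [h4, h5, hBpos]
    have hnum : M * D ≤ 16 * B^3 := by
      have step1 : M * D ≤ 2 * V * D := mul_le_mul_of_nonneg_right hmle hD0
      have step2 : 2 * V * D ≤ 2 * V * (d^4 + 6 * d^2 * V + 4 * |d| * V + V + 3*V^2) :=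
        mul_le_mul_of_nonneg_left hDbound (by linarith)
      have hu : 0 ≤ |d| := abs_nonneg d
      have hud : |d|^2 = d^2 := sq_abs d
      have step3 : 2 * V * (d^4 + 6 * d^2 * V + 4 * |d| * V + V + 3*V^2) ≤ 16 * B^3 := by
        rw [hBval]
        have hV0 : (0:ℝ) ≤ V := by linarith
        have hd2 : d^2 = |d|^2 := (sq_abs d).symm
        have hd4 : d^4 = |d|^4 := by rw [show d^4 = (d^2)^2 from by ring, hd2]; ring
        rw [hd2, hd4]
        have ha : 0 ≤ V^2 * (2*V - 1) := mul_nonneg (sq_nonneg V) (by linarith)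
        have hb : 0 ≤ V^2 * (|d| - 1/2)^2 := mul_nonneg (sq_nonneg V) (sq_nonneg _)
        have hc : 0 ≤ V^3 := by positivity
        have hd' : 0 ≤ V^2 * |d|^2 := by positivity
        have he : 0 ≤ V * |d|^4 := by positivity
        have hf : 0 ≤ |d|^6 := by positivity
        linarith [ha, hb, hc, hd', he, hf]
      linarith
    have hDpos : 0 < D := by nlinarith [h3, pow_pos hBpos 3, sq_nonneg A]
    have hfinal : M ≤ 16 * A^2 := by nlinarith [hnum, h3, hDpos, sq_nonneg A]
    have hsq : Real.sqrt M ≤ 4 * A := by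
      have h6 : Real.sqrt M ≤ Real.sqrt (16 * A^2) := Real.sqrt_le_sqrt hfinal
      rwa [show (16:ℝ)*A^2 = (4*A)^2 from by ring, Real.sqrt_sq (by linarith)] at h6
    linarith
  -- reduction over Y by independence
  have hSmeas : Measurable (fun ω => ∑ i, X i ω) :=
    Finset.measurable_sum _ fun i _ => hXmeas i
  have hSY : IndepFun (fun ω => ∑ i, X i ω) Y P := by
    have h := hindep.comp (φ := fun v : Fin n → ℝ => ∑ i, v i) (ψ := id)
      (Finset.measurable_sum Finset.univ fun i _ => measurable_pi_apply i) measurable_id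
    exact h
  have hYae : AEMeasurable Y P := hYmeas.aemeasurable
  have hmap : P.map (fun ω => ((∑ i, X i ω), Y ω))
      = (P.map (fun ω => ∑ i, X i ω)).prod (P.map Y) :=
    (indepFun_iff_map_prod_eq_prod_map_map hSmeas.aemeasurable hYae).mp hSY
  have habs_cont : Continuous (fun z : ℝ × ℝ => |z.1 + z.2|) :=
    (continuous_fst.add continuous_snd).abs
  have hSbd : ∀ ω, |∑ i, X i ω| ≤ (n:ℝ) := by
    intro ω
    calc |∑ i, X i ω| ≤ ∑ i, |X i ω| := Finset.abs_sum_le_sum_abs _ _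
    _ ≤ ∑ _i : Fin n, (1:ℝ) := Finset.sum_le_sum fun i _ => by
        rcases hXval i ω with h | h <;> simp [h]
    _ = n := by simp
  have hint1 : Integrable (fun ω => |(∑ i, X i ω) + Y ω|) P := by
    refine Integrable.mono' ((integrable_const ((n:ℝ))).add hYint.abs)
      ((hSmeas.add hYmeas).abs.aestronglyMeasurable) (ae_of_all _ fun ω => ?_)
    rw [Real.norm_eq_abs, abs_abs]
    calc |(∑ i, X i ω) + Y ω| ≤ |∑ i, X i ω| + |Y ω| := abs_add_le _ _
    _ ≤ (n:ℝ) + |Y ω| := by linarith [hSbd ω]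
  have hintprod : Integrable (fun z : ℝ × ℝ => |z.1 + z.2|)
      ((P.map (fun ω => ∑ i, X i ω)).prod (P.map Y)) := by
    rw [← hmap, integrable_map_measure habs_cont.aestronglyMeasurable
      (hSmeas.aemeasurable.prodMk hYae)]
    exact hint1
  have hstep : ∫ ω, |(∑ i, X i ω) + Y ω| ∂P
      = ∫ y, ∫ x, |x + y| ∂(P.map (fun ω => ∑ i, X i ω)) ∂(P.map Y) := by
    rw [show (fun ω => |(∑ i, X i ω) + Y ω|)
        = fun ω => (fun z : ℝ × ℝ => |z.1 + z.2|) ((∑ i, X i ω), Y ω) from rfl]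
    rw [← integral_map (hSmeas.aemeasurable.prodMk hYae) habs_cont.aestronglyMeasurable, hmap]
    exact integral_prod_symm _ hintprod
  have hprobY : IsProbabilityMeasure (P.map Y) := Measure.isProbabilityMeasure_map hYae
  have hinner : ∀ y : ℝ, (1/4) * Real.sqrt (∑ i, min (p i) (1 - p i))
      ≤ ∫ x, |x + y| ∂(P.map (fun ω => ∑ i, X i ω)) := by
    intro y
    have hmy : ∫ x, |x + y| ∂(P.map (fun ω => ∑ i, X i ω)) = ∫ ω, |(∑ i, X i ω) + y| ∂P :=
      integral_map (φ := fun ω => ∑ i, X i ω) hSmeas.aemeasurable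
        (((measurable_id.add_const y).abs).aestronglyMeasurable)
    rw [hmy]
    have heq : (fun ω => |(∑ i, X i ω) + y|)
        = fun ω => |(∑ i, (X i ω - p i)) + ((∑ i, p i) + y)| := by
      funext ω
      congr 1
      rw [Finset.sum_sub_distrib]
      ring
    calc (1/4) * Real.sqrt (∑ i, min (p i) (1 - p i))
        ≤ ∫ ω, |(∑ i, (X i ω - p i)) + ((∑ i, p i) + y)| ∂P := hfix _
    _ = ∫ ω, |(∑ i, X i ω) + y| ∂P := by rw [heq]
  have hinner_int : Integrable (fun y => ∫ x, |x + y| ∂(P.map (fun ω => ∑ i, X i ω))) (P.map Y) :=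
    hintprod.integral_prod_right
  calc (1/4) * Real.sqrt (∑ i, min (p i) (1 - p i))
      = ∫ _y, (1/4) * Real.sqrt (∑ i, min (p i) (1 - p i)) ∂(P.map Y) := by
        rw [integral_const]; simp
  _ ≤ ∫ y, ∫ x, |x + y| ∂(P.map (fun ω => ∑ i, X i ω)) ∂(P.map Y) :=
      integral_mono (integrable_const _) hinner_int hinner
  _ = ∫ ω, |(∑ i, X i ω) + Y ω| ∂P := hstep.symm
end

section
/- Let p_1,…,p_n and q_1,…,q_n be real numbers in [0, 1/2] with p_i ≤ q_i for every i. Let X_1,…,X_n be independent symmetric {−1,0,1} random variables with P[X_i = 1] = p_i, and let X'_1,…,X'_n be independent symmetric {−1,0,1} random variables with P[X'_i = 1] = q_i. Then E|Σ_{i=1}^n X_i| ≤ E|Σ_{i=1}^n X'_i|; that is, the function f_n(p_1,…,p_n) := E|Σ_{i=1}^n X_i| is non-decreasing in each of its arguments. -/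
open MeasureTheory ProbabilityTheory

noncomputable section SymSumAux

def val3 : Fin 3 → ℝ := ![(-1 : ℝ), 0, 1]
def w3 (r : ℝ) : Fin 3 → ℝ := ![r, 1 - 2*r, r]

lemma w3_nonneg {r : ℝ} (hr : r ∈ Set.Icc (0:ℝ) (1/2)) (k : Fin 3) : 0 ≤ w3 r k := by
  obtain ⟨h0, h1⟩ := hr
  fin_cases k <;> (simp [w3]; linarith)

def gfun (n : ℕ) (p : Fin n → ℝ) : ℝ :=
  ∑ v : Fin n → Fin 3, (∏ i, w3 (p i) (v i)) * |∑ i, val3 (v i)|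

def a3 : Fin 3 → ℝ := ![1, -2, 1]

lemma w3_affine (s t : ℝ) (k : Fin 3) : w3 t k = w3 s k + (t - s) * a3 k := by
  fin_cases k <;> (simp [w3, a3]; try ring)

lemma gfun_update (n : ℕ) (p : Fin n → ℝ) (i : Fin n) (t : ℝ) :
    gfun n (Function.update p i t)
      = ∑ v : Fin n → Fin 3,
          w3 t (v i) * ((∏ j ∈ Finset.univ.erase i, w3 (p j) (v j)) * |∑ j, val3 (v j)|) := by
  unfold gfun
  refine Finset.sum_congr rfl fun v _ => ?_
  have h1 : (fun j => w3 (Function.update p i t j) (v j))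
      = Function.update (fun j => w3 (p j) (v j)) i (w3 t (v i)) := by
    funext j
    by_cases h : j = i
    · subst h; simp
    · simp [Function.update, h]
  have h2 : ∏ j, w3 (Function.update p i t j) (v j)
      = w3 t (v i) * ∏ j ∈ Finset.univ.erase i, w3 (p j) (v j) := by
    rw [h1, Finset.prod_update_of_mem (Finset.mem_univ i), Finset.sdiff_singleton_eq_erase]
  rw [h2, mul_assoc]

lemma abs_ineq (S : ℝ) : 2 * |S| ≤ |S - 1| + |S + 1| := by
  have := abs_add_le (S - 1) (S + 1)
  have h : |S - 1 + (S + 1)| = 2 * |S| := by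
    rw [show S - 1 + (S + 1) = 2 * S by ring, abs_mul]
    norm_num
  linarith

lemma gfun_update_le (n : ℕ) (p : Fin n → ℝ)
    (hp : ∀ j, p j ∈ Set.Icc (0:ℝ) (1/2)) (i : Fin n) {t : ℝ} (ht : p i ≤ t) :
    gfun n p ≤ gfun n (Function.update p i t) := by
  classical
  set G : (Fin n → Fin 3) → ℝ :=
    fun v => (∏ j ∈ Finset.univ.erase i, w3 (p j) (v j)) * |∑ j, val3 (v j)| with hG
  have hpself : gfun n p = ∑ v : Fin n → Fin 3, w3 (p i) (v i) * G v := by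
    have := gfun_update n p i (p i)
    rwa [Function.update_eq_self] at this
  rw [gfun_update n p i t, hpself]
  have expand : ∀ v : Fin n → Fin 3,
      w3 t (v i) * G v = w3 (p i) (v i) * G v + (t - p i) * (a3 (v i) * G v) := by
    intro v
    rw [w3_affine (p i) t (v i)]; ring
  rw [Finset.sum_congr rfl fun v _ => expand v, Finset.sum_add_distrib, ← Finset.mul_sum]
  have hB : 0 ≤ ∑ v : Fin n → Fin 3, a3 (v i) * G v := by
    set e := (Equiv.funSplitAt i (Fin 3)).symm with he
    have hsplit : ∑ v : Fin n → Fin 3, a3 (v i) * G v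
        = ∑ x : Fin 3 × ({ j // j ≠ i } → Fin 3), a3 ((e x) i) * G (e x) :=
      (Fintype.sum_equiv e (fun x => a3 ((e x) i) * G (e x)) (fun v => a3 (v i) * G v)
        (fun x => rfl)).symm
    rw [hsplit, Fintype.sum_prod_type, Finset.sum_comm]
    refine Finset.sum_nonneg fun r _ => ?_
    -- for fixed rest `r`, the inner sum over the value at `i`
    have hvi : ∀ k : Fin 3, (e (k, r)) i = k := by
      intro k; simp [he, Equiv.funSplitAt, Equiv.piSplitAt]
    have hvj : ∀ (k : Fin 3) (j : Fin n) (h : j ≠ i), (e (k, r)) j = r ⟨j, h⟩ := by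
      intro k j h; simp [he, Equiv.funSplitAt, Equiv.piSplitAt, h]
    set R : ℝ := ∏ j ∈ Finset.univ.erase i, w3 (p j) (e (0, r) j) with hR
    have hRnonneg : 0 ≤ R :=
      Finset.prod_nonneg fun j _ => w3_nonneg (hp j) _
    set S : ℝ := ∑ j ∈ Finset.univ.erase i, val3 (e (0, r) j) with hS
    have hRk : ∀ k : Fin 3, (∏ j ∈ Finset.univ.erase i, w3 (p j) (e (k, r) j)) = R := by
      intro k
      refine Finset.prod_congr rfl fun j hj => ?_
      have hji : j ≠ i := (Finset.mem_erase.mp hj).1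
      rw [hvj k j hji, ← hvj 0 j hji]
    have hSk : ∀ k : Fin 3, (∑ j, val3 (e (k, r) j)) = val3 k + S := by
      intro k
      rw [← Finset.add_sum_erase _ _ (Finset.mem_univ i), hvi k]
      congr 1
      refine Finset.sum_congr rfl fun j hj => ?_
      have hji : j ≠ i := (Finset.mem_erase.mp hj).1
      rw [hvj k j hji, ← hvj 0 j hji]
    have hGk : ∀ k : Fin 3, G (e (k, r)) = R * |val3 k + S| := by
      intro k; rw [hG]; dsimp only; rw [hRk k, hSk k]
    rw [show (∑ k : Fin 3, a3 ((e (k, r)) i) * G (e (k, r)))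
        = ∑ k : Fin 3, a3 k * (R * |val3 k + S|) from
      Finset.sum_congr rfl fun k _ => by rw [hvi k, hGk k]]
    rw [Fin.sum_univ_three]
    have habs := abs_ineq S
    have h0 : val3 0 + S = S - 1 := by simp [val3]; ring
    have h1 : val3 1 + S = S := by simp [val3]
    have h2 : val3 2 + S = S + 1 := by simp [val3]; ring
    rw [h0, h1, h2]
    simp only [a3]
    have : (1:ℝ) * (R * |S - 1|) + (-2) * (R * |S|) + 1 * (R * |S + 1|)
        = R * (|S - 1| + |S + 1| - 2 * |S|) := by ring
    simp only [Matrix.cons_val_zero, Matrix.cons_val_one, Matrix.head_cons,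
      Matrix.cons_val_two, Matrix.tail_cons]
    nlinarith [mul_nonneg hRnonneg (by linarith : (0:ℝ) ≤ |S - 1| + |S + 1| - 2 * |S|)]
  have : 0 ≤ (t - p i) * ∑ v : Fin n → Fin 3, a3 (v i) * G v :=
    mul_nonneg (by linarith) hB
  linarith

lemma gfun_mono (n : ℕ) (p q : Fin n → ℝ)
    (hp : ∀ i, p i ∈ Set.Icc (0:ℝ) (1/2)) (hq : ∀ i, q i ∈ Set.Icc (0:ℝ) (1/2))
    (hpq : ∀ i, p i ≤ q i) : gfun n p ≤ gfun n q := by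
  classical
  have key : ∀ s : Finset (Fin n),
      gfun n p ≤ gfun n (fun i => if i ∈ s then q i else p i) := by
    intro s
    induction s using Finset.induction_on with
    | empty => simp
    | @insert a s ha ih =>
        have heq : (fun i => if i ∈ insert a s then q i else p i)
            = Function.update (fun i => if i ∈ s then q i else p i) a (q a) := by
          funext i
          by_cases h : i = a
          · subst h; simp [ha]
          · simp [Function.update, h, Finset.mem_insert]
        rw [heq]
        refine ih.trans ?_
        refine gfun_update_le n _ (fun j => ?_) a ?_
        · by_cases h : j ∈ s
          · simpa [h] using hq j
          · simpa [h] using hp j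
        · simp [ha, hpq a]
  have := key Finset.univ
  simpa using this


lemma val3_injective : Function.Injective val3 := by
  intro a b h
  fin_cases a <;> fin_cases b <;> simp_all [val3] <;> norm_num at h

lemma expectation_eq_gfun (n : ℕ) (p : Fin n → ℝ)
    (hp : ∀ i, p i ∈ Set.Icc (0:ℝ) (1/2))
    (Ω : Type) [MeasurableSpace Ω] (P : Measure Ω) [IsProbabilityMeasure P]
    (X : Fin n → Ω → ℝ) (hXmeas : ∀ i, Measurable (X i))
    (hXval : ∀ i ω, X i ω = -1 ∨ X i ω = 0 ∨ X i ω = 1)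
    (hX1 : ∀ i, P {ω | X i ω = 1} = ENNReal.ofReal (p i))
    (hX2 : ∀ i, P {ω | X i ω = -1} = ENNReal.ofReal (p i))
    (hind : iIndepFun X P) :
    ∫ ω, |∑ i, X i ω| ∂P = gfun n p := by
  classical
  -- the events of the partition
  set A : (Fin n → Fin 3) → Set Ω := fun v => ⋂ i, X i ⁻¹' {val3 (v i)} with hA
  have hAmeas : ∀ v, MeasurableSet (A v) := fun v =>
    MeasurableSet.iInter fun i => (hXmeas i) (measurableSet_singleton _)
  -- the classifying map
  have hclass : ∀ ω, ∃ v : Fin n → Fin 3, ∀ i, X i ω = val3 (v i) := by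
    intro ω
    refine ⟨fun i => if X i ω = -1 then 0 else if X i ω = 0 then 1 else 2, fun i => ?_⟩
    rcases hXval i ω with h | h | h <;> norm_num [h, val3] <;> rfl
  -- pointwise identity
  have hpoint : ∀ ω, |∑ i, X i ω|
      = ∑ v : Fin n → Fin 3, (A v).indicator (fun _ => |∑ i, val3 (v i)|) ω := by
    intro ω
    obtain ⟨v₀, hv₀⟩ := hclass ω
    rw [Finset.sum_eq_single v₀]
    · have : ω ∈ A v₀ := Set.mem_iInter.mpr fun i => hv₀ i
      rw [Set.indicator_of_mem this]
      congr 1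
      exact Finset.sum_congr rfl fun i _ => hv₀ i
    · intro v _ hv
      refine Set.indicator_of_notMem (fun hmem => hv ?_) _
      funext i
      have h1 : X i ω = val3 (v i) := Set.mem_iInter.mp hmem i
      exact val3_injective (h1.symm.trans (hv₀ i))
    · intro h; exact absurd (Finset.mem_univ v₀) h
  -- compute P (A v)
  have hmarg : ∀ (i : Fin n) (k : Fin 3),
      (P (X i ⁻¹' {val3 k})).toReal = w3 (p i) k := by
    intro i k
    have hp1 : X i ⁻¹' {(1:ℝ)} = {ω | X i ω = 1} := rfl
    have hpm1 : X i ⁻¹' {(-1:ℝ)} = {ω | X i ω = -1} := rfl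
    have hpi := hp i
    fin_cases k
    · show (P (X i ⁻¹' {(-1:ℝ)})).toReal = _
      rw [hpm1, hX2 i, ENNReal.toReal_ofReal hpi.1]
      simp [w3]
    · -- value 0
      show (P (X i ⁻¹' {(0:ℝ)})).toReal = _
      have hset : X i ⁻¹' {(0:ℝ)} = ({ω | X i ω = 1} ∪ {ω | X i ω = -1})ᶜ := by
        ext ω
        rcases hXval i ω with h | h | h <;> simp [h]
      have hdisj : Disjoint {ω | X i ω = 1} {ω | X i ω = -1} := by
        rw [Set.disjoint_left]
        intro ω h1 h2
        simp only [Set.mem_setOf_eq] at h1 h2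
        rw [h1] at h2; norm_num at h2
      have hm1 : MeasurableSet {ω | X i ω = 1} := (hXmeas i) (measurableSet_singleton 1)
      have hm2 : MeasurableSet {ω | X i ω = -1} := (hXmeas i) (measurableSet_singleton (-1))
      rw [hset, measure_compl (hm1.union hm2) (measure_ne_top P _),
        measure_union hdisj hm2, hX1 i, hX2 i, measure_univ,
        ← ENNReal.ofReal_add hpi.1 hpi.1]
      have hle : ENNReal.ofReal (p i + p i) ≤ 1 := by
        have h' : ENNReal.ofReal (p i + p i) ≤ ENNReal.ofReal 1 :=
          ENNReal.ofReal_le_ofReal (by linarith [hpi.2])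
        simpa using h'
      rw [ENNReal.toReal_sub_of_le hle ENNReal.one_ne_top,
        ENNReal.toReal_ofReal (by linarith [hpi.1]), ENNReal.toReal_one]
      simp [w3]; ring
    · show (P (X i ⁻¹' {(1:ℝ)})).toReal = _
      rw [hp1, hX1 i, ENNReal.toReal_ofReal hpi.1]
      simp [w3]
  have hPA : ∀ v, (P (A v)).toReal = ∏ i, w3 (p i) (v i) := by
    intro v
    have := hind.meas_iInter (s := fun i => X i ⁻¹' {val3 (v i)})
      (fun i => ⟨{val3 (v i)}, measurableSet_singleton _, rfl⟩)
    rw [hA]; dsimp only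
    rw [this, ENNReal.toReal_prod]
    exact Finset.prod_congr rfl fun i _ => hmarg i (v i)
  -- integrate
  calc ∫ ω, |∑ i, X i ω| ∂P
      = ∫ ω, ∑ v : Fin n → Fin 3, (A v).indicator (fun _ => |∑ i, val3 (v i)|) ω ∂P := by
        exact integral_congr_ae (Filter.Eventually.of_forall hpoint)
    _ = ∑ v : Fin n → Fin 3, ∫ ω, (A v).indicator (fun _ => |∑ i, val3 (v i)|) ω ∂P := by
        refine integral_finset_sum _ fun v _ => ?_
        exact (integrable_const _).indicator (hAmeas v)
    _ = ∑ v : Fin n → Fin 3, (P (A v)).toReal * |∑ i, val3 (v i)| := by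
        refine Finset.sum_congr rfl fun v _ => ?_
        rw [integral_indicator_const _ (hAmeas v), smul_eq_mul]; rfl
    _ = gfun n p := by
        unfold gfun
        exact Finset.sum_congr rfl fun v _ => by rw [hPA v]


end SymSumAux

/-- Lemma B.6: the function `fₙ(p₁, …, pₙ) = E|∑ Xᵢ|`, where `X₁, …, Xₙ` are independent
symmetric `{-1,0,1}` variables with `P[Xᵢ = 1] = pᵢ`, is non-decreasing in each argument:
if `pᵢ ≤ qᵢ` for all `i` then `E|∑ Xᵢ| ≤ E|∑ X'ᵢ|`. -/
theorem symmetric_sum_L1_monotone (n : ℕ) (p q : Fin n → ℝ)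
    (hp : ∀ i, p i ∈ Set.Icc (0:ℝ) (1 / 2)) (hq : ∀ i, q i ∈ Set.Icc (0:ℝ) (1 / 2))
    (hpq : ∀ i, p i ≤ q i)
    (Ω₁ : Type) [MeasurableSpace Ω₁] (P₁ : Measure Ω₁) [IsProbabilityMeasure P₁]
    (Ω₂ : Type) [MeasurableSpace Ω₂] (P₂ : Measure Ω₂) [IsProbabilityMeasure P₂]
    (X : Fin n → Ω₁ → ℝ) (hXmeas : ∀ i, Measurable (X i))
    (hXval : ∀ i ω, X i ω = -1 ∨ X i ω = 0 ∨ X i ω = 1)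
    (hXprob1 : ∀ i, P₁ {ω | X i ω = 1} = ENNReal.ofReal (p i))
    (hXprob2 : ∀ i, P₁ {ω | X i ω = -1} = ENNReal.ofReal (p i))
    (hXindep : iIndepFun X P₁)
    (X' : Fin n → Ω₂ → ℝ) (hX'meas : ∀ i, Measurable (X' i))
    (hX'val : ∀ i ω, X' i ω = -1 ∨ X' i ω = 0 ∨ X' i ω = 1)
    (hX'prob1 : ∀ i, P₂ {ω | X' i ω = 1} = ENNReal.ofReal (q i))
    (hX'prob2 : ∀ i, P₂ {ω | X' i ω = -1} = ENNReal.ofReal (q i))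
    (hX'indep : iIndepFun X' P₂) :
    ∫ ω, |∑ i, X i ω| ∂P₁ ≤ ∫ ω, |∑ i, X' i ω| ∂P₂ := by
  rw [expectation_eq_gfun n p hp Ω₁ P₁ X hXmeas hXval hXprob1 hXprob2 hXindep,
    expectation_eq_gfun n q hq Ω₂ P₂ X' hX'meas hX'val hX'prob1 hX'prob2 hX'indep]
  exact gfun_mono n p q hp hq hpq
end

section
/- Let p_1,…,p_n ∈ [0, 1/4] and let X_1,…,X_n be independent symmetric {−1,0,1} random variables with P[X_i = 1] = p_i. Then for any integers a_1,…,a_n and any integer x, P[Σ_{i=1}^n a_i·X_i = 0] ≥ P[Σ_{i=1}^n a_i·X_i = x]. -/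
open MeasureTheory ProbabilityTheory Finset



def z3 : Fin 3 → ℤ := fun k => if k = 0 then -1 else if k = 1 then 0 else 1

noncomputable def wgt (t : ℝ) : Fin 3 → ℝ :=
  fun k => if k = 1 then 1 - 2 * (t * (1 - t)) else t * (1 - t)

lemma wgt_nonneg {t : ℝ} (h0 : 0 ≤ t) (h1 : t ≤ 1) (k : Fin 3) : 0 ≤ wgt t k := by
  unfold wgt
  split
  · nlinarith
  · nlinarith

lemma comb_main (n : ℕ) (q : Fin n → ℝ) (hq0 : ∀ i, 0 ≤ q i) (hq1 : ∀ i, q i ≤ 1)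
    (a : Fin n → ℤ) (x : ℤ) :
    (∑ v : Fin n → Fin 3, if (∑ i, a i * z3 (v i)) = x then ∏ i, wgt (q i) (v i) else 0)
    ≤ ∑ v : Fin n → Fin 3, if (∑ i, a i * z3 (v i)) = 0 then ∏ i, wgt (q i) (v i) else 0 := by
  classical
  set Q : (Fin n → Bool) → ℝ := fun u => ∏ i, (if u i then q i else 1 - q i) with hQ
  set T : (Fin n → Bool) → ℤ := fun u => ∑ i, a i * (if u i then 1 else 0) with hT
  set G : ℤ → ℝ := fun y => ∑ u : Fin n → Bool, if T u = y then Q u else 0 with hG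
  set F : ℤ → ℝ := fun y =>
    ∑ v : Fin n → Fin 3, if (∑ i, a i * z3 (v i)) = y then ∏ i, wgt (q i) (v i) else 0 with hF
  set d3 : Bool × Bool → Fin 3 := fun p =>
    if p.1 then (if p.2 then 1 else 2) else (if p.2 then 0 else 1) with hd3
  -- coordinate identity
  have coord : ∀ (t : ℝ) (k : Fin 3),
      (∑ p : Bool × Bool, if d3 p = k
        then (if p.1 then t else 1 - t) * (if p.2 then t else 1 - t) else 0) = wgt t k := by
    intro t k
    fin_cases k <;>
      simp [Fintype.sum_prod_type, d3, wgt] <;> ring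
  have hz3d3 : ∀ p : Bool × Bool,
      z3 (d3 p) = (if p.1 then (1:ℤ) else 0) - (if p.2 then 1 else 0) := by
    decide
  -- Step A : F y = sum over pairs
  have stepA : ∀ y : ℤ, F y = ∑ pr : (Fin n → Bool) × (Fin n → Bool),
      if T pr.1 - T pr.2 = y then Q pr.1 * Q pr.2 else 0 := by
    intro y
    rw [← Fintype.sum_equiv (Equiv.arrowProdEquivProdArrow (Fin n) (fun _ => Bool) (fun _ => Bool))
      (fun w : Fin n → Bool × Bool =>
        if (∑ i, a i * z3 (d3 (w i))) = y then ∏ i, (if (w i).1 then q i else 1 - q i) *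
          (if (w i).2 then q i else 1 - q i) else 0)
      (fun pr => if T pr.1 - T pr.2 = y then Q pr.1 * Q pr.2 else 0)
      (by
        intro w
        simp only [Equiv.arrowProdEquivProdArrow, Equiv.coe_fn_mk]
        have h1 : T (fun i => (w i).1) - T (fun i => (w i).2) = ∑ i, a i * z3 (d3 (w i)) := by
          simp only [hT, ← Finset.sum_sub_distrib, ← mul_sub, hz3d3]
        have h2 : Q (fun i => (w i).1) * Q (fun i => (w i).2)
            = ∏ i, (if (w i).1 then q i else 1 - q i) * (if (w i).2 then q i else 1 - q i) := by
          simp only [hQ, ← Finset.prod_mul_distrib]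
        simp only [h1, h2])]
    rw [← Finset.sum_fiberwise (univ : Finset (Fin n → Bool × Bool)) (fun w => fun i => d3 (w i))
      (fun w => if (∑ i, a i * z3 (d3 (w i))) = y then ∏ i, (if (w i).1 then q i else 1 - q i) *
          (if (w i).2 then q i else 1 - q i) else 0)]
    simp only [hF]
    refine Finset.sum_congr rfl fun v _ => ?_
    have hfib : (univ.filter fun w : Fin n → Bool × Bool => (fun i => d3 (w i)) = v)
        = Fintype.piFinset (fun i => univ.filter fun p => d3 p = v i) := by
      ext w
      simp [Fintype.mem_piFinset, funext_iff]
    have hcg : ∀ w ∈ univ.filter fun w : Fin n → Bool × Bool => (fun i => d3 (w i)) = v,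
        (if (∑ i, a i * z3 (d3 (w i))) = y then ∏ i, (if (w i).1 then q i else 1 - q i) *
          (if (w i).2 then q i else 1 - q i) else 0)
        = (if (∑ i, a i * z3 (v i)) = y then ∏ i, (if (w i).1 then q i else 1 - q i) *
          (if (w i).2 then q i else 1 - q i) else 0) := by
      intro w hw
      rw [mem_filter] at hw
      have hw2 := hw.2
      simp only [funext_iff] at hw2
      simp only [hw2]
    rw [Finset.sum_congr rfl hcg]
    by_cases hy : (∑ i, a i * z3 (v i)) = y
    · simp only [hy, if_true]
      rw [hfib]
      rw [← Finset.prod_univ_sum (fun i => univ.filter fun p : Bool × Bool => d3 p = v i)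
        (fun i p => (if p.1 then q i else 1 - q i) * (if p.2 then q i else 1 - q i))]
      refine Finset.prod_congr rfl fun i _ => ?_
      rw [Finset.sum_filter]
      exact (coord (q i) (v i)).symm
    · simp [hy]
  -- Step B
  set K : Finset ℤ := univ.image T with hK
  have stepB : ∀ y : ℤ, (∑ pr : (Fin n → Bool) × (Fin n → Bool),
      if T pr.1 - T pr.2 = y then Q pr.1 * Q pr.2 else 0) = ∑ k ∈ K, G (y + k) * G k := by
    intro y
    rw [Fintype.sum_prod_type]
    rw [Finset.sum_comm]
    have inner : ∀ u' : Fin n → Bool, (∑ u : Fin n → Bool,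
        if T u - T u' = y then Q u * Q u' else 0) = G (y + T u') * Q u' := by
      intro u'
      calc (∑ u : Fin n → Bool, if T u - T u' = y then Q u * Q u' else 0)
          = ∑ u : Fin n → Bool, (if T u = y + T u' then Q u else 0) * Q u' := by
            refine Finset.sum_congr rfl fun u _ => ?_
            by_cases h : T u - T u' = y
            · rw [if_pos h, if_pos (by omega)]
            · rw [if_neg h, if_neg (by omega), zero_mul]
        _ = G (y + T u') * Q u' := by rw [← Finset.sum_mul]
    calc (∑ u' : Fin n → Bool, ∑ u : Fin n → Bool, if T u - T u' = y then Q u * Q u' else 0)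
        = ∑ u' : Fin n → Bool, G (y + T u') * Q u' := Finset.sum_congr rfl fun u' _ => inner u'
      _ = ∑ k ∈ K, ∑ u' ∈ univ.filter fun u' => T u' = k, G (y + T u') * Q u' :=
          (Finset.sum_fiberwise_of_maps_to
            (fun u _ => Finset.mem_image_of_mem T (mem_univ u)) _).symm
      _ = ∑ k ∈ K, G (y + k) * G k := by
          refine Finset.sum_congr rfl fun k hk => ?_
          have : ∀ u' ∈ univ.filter fun u' => T u' = k,
              G (y + T u') * Q u' = G (y + k) * Q u' := by
            intro u' hu'
            rw [mem_filter] at hu'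
            rw [hu'.2]
          rw [Finset.sum_congr rfl this, ← Finset.mul_sum]
          congr 1
          rw [hG]
          simp only
          rw [Finset.sum_filter]
  -- nonnegativity
  have hQ0 : ∀ u, 0 ≤ Q u := fun u => Finset.prod_nonneg fun i _ => by
    split
    · exact hq0 i
    · linarith [hq1 i]
  have hG0 : ∀ k, 0 ≤ G k := fun k => Finset.sum_nonneg fun u _ => by
    split
    · exact hQ0 u
    · exact le_refl 0
  have hGout : ∀ j, j ∉ K → G j = 0 := by
    intro j hj
    rw [hG]
    refine Finset.sum_eq_zero fun u _ => ?_
    rw [if_neg]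
    intro hTu
    exact hj (hTu ▸ Finset.mem_image_of_mem T (mem_univ u))
  -- shift inequality
  have shift : ∀ y : ℤ, (∑ k ∈ K, G (y + k) ^ 2) ≤ ∑ k ∈ K, G k ^ 2 := by
    intro y
    calc (∑ k ∈ K, G (y + k) ^ 2)
        = ∑ j ∈ K.image (fun k => y + k), G j ^ 2 :=
          (Finset.sum_image (f := fun j => G j ^ 2) (g := fun k => y + k)
            (fun b _ c _ h => by simpa using h)).symm
      _ = ∑ j ∈ (K.image (fun k => y + k)) ∩ K, G j ^ 2 := by
          refine (Finset.sum_subset Finset.inter_subset_left fun j hj hj' => ?_).symm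
          have hjK : j ∉ K := fun h => hj' (Finset.mem_inter.mpr ⟨hj, h⟩)
          rw [hGout j hjK]; ring
      _ ≤ ∑ k ∈ K, G k ^ 2 :=
          Finset.sum_le_sum_of_subset_of_nonneg Finset.inter_subset_right
            fun j _ _ => sq_nonneg _
  -- conclude
  have hFx : F x = ∑ k ∈ K, G (x + k) * G k := (stepA x).trans (stepB x)
  have hF0 : F 0 = ∑ k ∈ K, G k ^ 2 := by
    rw [(stepA 0).trans (stepB 0)]
    refine Finset.sum_congr rfl fun k _ => ?_
    rw [zero_add, sq]
  have hFxnn : 0 ≤ F x := Finset.sum_nonneg fun v _ => by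
    split
    · exact Finset.prod_nonneg fun i _ => wgt_nonneg (hq0 i) (hq1 i) _
    · exact le_refl 0
  have cs := Finset.sum_mul_sq_le_sq_mul_sq K (fun k => G (x + k)) G
  have hF0nn : 0 ≤ F 0 := hF0 ▸ Finset.sum_nonneg fun k _ => sq_nonneg _
  have key : F x ^ 2 ≤ F 0 ^ 2 := by
    rw [hFx, hF0]
    calc (∑ k ∈ K, G (x + k) * G k) ^ 2
        ≤ (∑ k ∈ K, G (x + k) ^ 2) * ∑ k ∈ K, G k ^ 2 := cs
      _ ≤ (∑ k ∈ K, G k ^ 2) * ∑ k ∈ K, G k ^ 2 := by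
          apply mul_le_mul_of_nonneg_right (shift x)
          exact Finset.sum_nonneg fun k _ => sq_nonneg _
      _ = (∑ k ∈ K, G k ^ 2) ^ 2 := (sq _).symm
  show F x ≤ F 0
  nlinarith

/-- Lemma B.7: if `X₁, …, Xₙ` are independent symmetric `{-1,0,1}` variables with
`P[Xᵢ = 1] = P[Xᵢ = -1] = pᵢ ∈ [0, 1/4]`, then for any integers `a₁, …, aₙ` and any
integer `x`, `P[∑ aᵢ Xᵢ = 0] ≥ P[∑ aᵢ Xᵢ = x]`. -/
theorem symmetric_sum_mode_at_zero (n : ℕ) (p : Fin n → ℝ)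
    (hp : ∀ i, p i ∈ Set.Icc (0:ℝ) (1 / 4))
    (Ω : Type) [MeasurableSpace Ω] (P : Measure Ω) [IsProbabilityMeasure P]
    (X : Fin n → Ω → ℝ) (hXmeas : ∀ i, Measurable (X i))
    (hXval : ∀ i ω, X i ω = -1 ∨ X i ω = 0 ∨ X i ω = 1)
    (hXprob1 : ∀ i, P {ω | X i ω = 1} = ENNReal.ofReal (p i))
    (hXprob2 : ∀ i, P {ω | X i ω = -1} = ENNReal.ofReal (p i))
    (hXindep : iIndepFun X P)
    (a : Fin n → ℤ) (x : ℤ) :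
    P {ω | ∑ i, (a i : ℝ) * X i ω = (x : ℝ)} ≤
      P {ω | ∑ i, (a i : ℝ) * X i ω = 0} := by
  classical
  have hp0 : ∀ i, 0 ≤ p i := fun i => (hp i).1
  have hp4 : ∀ i, p i ≤ 1 / 4 := fun i => (hp i).2
  have hs : ∀ i, Real.sqrt (1 - 4 * p i) ^ 2 = 1 - 4 * p i := fun i =>
    Real.sq_sqrt (by linarith [hp4 i])
  have hsnn : ∀ i, 0 ≤ Real.sqrt (1 - 4 * p i) := fun i => Real.sqrt_nonneg _
  have hsle1 : ∀ i, Real.sqrt (1 - 4 * p i) ≤ 1 := fun i => by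
    nlinarith [hs i, hsnn i, hp0 i]
  set q : Fin n → ℝ := fun i => (1 - Real.sqrt (1 - 4 * p i)) / 2 with hqdef
  have hq0 : ∀ i, 0 ≤ q i := fun i => by
    have := hsle1 i; simp only [hqdef]; linarith
  have hq1 : ∀ i, q i ≤ 1 := fun i => by
    have := hsnn i; simp only [hqdef]; linarith
  have hpq : ∀ i, q i * (1 - q i) = p i := fun i => by
    have h := hs i
    simp only [hqdef]
    nlinarith
  -- weights
  have hw0 : ∀ i, wgt (q i) 0 = p i := fun i => by
    simp only [wgt]; norm_num; exact hpq i
  have hw2 : ∀ i, wgt (q i) 2 = p i := fun i => by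
    simp only [wgt]; norm_num; exact hpq i
  have hw1 : ∀ i, wgt (q i) 1 = 1 - 2 * p i := fun i => by
    simp only [wgt]; norm_num; rw [hpq i]
  -- events
  set E : (Fin n → Fin 3) → Set Ω := fun v => ⋂ i, X i ⁻¹' {((z3 (v i) : ℤ) : ℝ)} with hE
  have hEmeas : ∀ v, MeasurableSet (E v) := fun v =>
    MeasurableSet.iInter fun i => hXmeas i (measurableSet_singleton _)
  have hpre : ∀ i (c : ℝ), X i ⁻¹' {c} = {ω | X i ω = c} := fun i c => by
    ext ω; simp [Set.mem_preimage]
  -- probabilities of single events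
  have hsingle : ∀ i (k : Fin 3),
      P (X i ⁻¹' {((z3 k : ℤ) : ℝ)}) = ENNReal.ofReal (wgt (q i) k) := by
    intro i k
    have hA1 : P (X i ⁻¹' {(1:ℝ)}) = ENNReal.ofReal (p i) := by rw [hpre]; exact hXprob1 i
    have hAm1 : P (X i ⁻¹' {(-1:ℝ)}) = ENNReal.ofReal (p i) := by rw [hpre]; exact hXprob2 i
    have hA0 : P (X i ⁻¹' {(0:ℝ)}) = ENNReal.ofReal (1 - 2 * p i) := by
      have hU : (X i ⁻¹' {(-1:ℝ)}) ∪ ((X i ⁻¹' {(0:ℝ)}) ∪ (X i ⁻¹' {(1:ℝ)})) = Set.univ := by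
        ext ω
        simp only [Set.mem_union, Set.mem_preimage, Set.mem_singleton_iff, Set.mem_univ,
          iff_true]
        rcases hXval i ω with h | h | h
        · exact Or.inl h
        · exact Or.inr (Or.inl h)
        · exact Or.inr (Or.inr h)
      have hd1 : Disjoint (X i ⁻¹' {(-1:ℝ)}) ((X i ⁻¹' {(0:ℝ)}) ∪ (X i ⁻¹' {(1:ℝ)})) := by
        rw [Set.disjoint_left]
        rintro ω h1 (h2 | h2) <;>
          · simp only [Set.mem_preimage, Set.mem_singleton_iff] at h1 h2
            rw [h1] at h2; norm_num at h2
      have hd2 : Disjoint (X i ⁻¹' {(0:ℝ)}) (X i ⁻¹' {(1:ℝ)}) := by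
        rw [Set.disjoint_left]
        intro ω h1 h2
        simp only [Set.mem_preimage, Set.mem_singleton_iff] at h1 h2
        rw [h1] at h2; norm_num at h2
      have hm0 : MeasurableSet (X i ⁻¹' {(0:ℝ)}) := hXmeas i (measurableSet_singleton _)
      have hm1 : MeasurableSet (X i ⁻¹' {(1:ℝ)}) := hXmeas i (measurableSet_singleton _)
      have htot : P (X i ⁻¹' {(-1:ℝ)}) + (P (X i ⁻¹' {(0:ℝ)}) + P (X i ⁻¹' {(1:ℝ)})) = 1 := by
        rw [← measure_union hd2 hm1, ← measure_union hd1 (hm0.union hm1), hU,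
          measure_univ]
      rw [hAm1, hA1] at htot
      have hfin : ENNReal.ofReal (p i) + ENNReal.ofReal (p i) ≠ ⊤ := by
        simp
      have h2p : (1:ENNReal) - (ENNReal.ofReal (p i) + ENNReal.ofReal (p i))
          = ENNReal.ofReal (1 - 2 * p i) := by
        rw [← ENNReal.ofReal_add (hp0 i) (hp0 i), ← ENNReal.ofReal_one,
          ← ENNReal.ofReal_sub _ (by linarith [hp0 i])]
        ring_nf
      have : P (X i ⁻¹' {(0:ℝ)}) = 1 - (ENNReal.ofReal (p i) + ENNReal.ofReal (p i)) := by
        apply ENNReal.eq_sub_of_add_eq hfin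
        calc P (X i ⁻¹' {(0:ℝ)}) + (ENNReal.ofReal (p i) + ENNReal.ofReal (p i))
            = ENNReal.ofReal (p i) + (P (X i ⁻¹' {(0:ℝ)}) + ENNReal.ofReal (p i)) := by ring
          _ = 1 := htot
      rw [this, h2p]
    fin_cases k
    · show P (X i ⁻¹' {((z3 (0 : Fin 3) : ℤ) : ℝ)}) = ENNReal.ofReal (wgt (q i) (0 : Fin 3))
      rw [hw0]
      have : ((z3 0 : ℤ) : ℝ) = -1 := by norm_num [show z3 0 = -1 by decide]
      rw [this, hAm1]
    · show P (X i ⁻¹' {((z3 (1 : Fin 3) : ℤ) : ℝ)}) = ENNReal.ofReal (wgt (q i) (1 : Fin 3))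
      rw [hw1]
      have : ((z3 1 : ℤ) : ℝ) = 0 := by norm_num [show z3 1 = 0 by decide]
      rw [this, hA0]
    · show P (X i ⁻¹' {((z3 (2 : Fin 3) : ℤ) : ℝ)}) = ENNReal.ofReal (wgt (q i) (2 : Fin 3))
      rw [hw2]
      have : ((z3 2 : ℤ) : ℝ) = 1 := by norm_num [show z3 2 = 1 by decide]
      rw [this, hA1]
  -- independence: measure of E v
  have hEprob : ∀ v, P (E v) = ENNReal.ofReal (∏ i, wgt (q i) (v i)) := by
    intro v
    have := hXindep.meas_iInter (s := fun i => X i ⁻¹' {((z3 (v i) : ℤ) : ℝ)})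
      (fun i => ⟨{((z3 (v i) : ℤ) : ℝ)}, measurableSet_singleton _, rfl⟩)
    rw [hE]
    simp only
    rw [this]
    rw [Finset.prod_congr rfl fun i _ => hsingle i (v i)]
    exact (ENNReal.ofReal_prod_of_nonneg fun i _ => wgt_nonneg (hq0 i) (hq1 i) _).symm
  -- every X i ω takes a z3 value
  have hXc : ∀ i ω, ∃ k : Fin 3, X i ω = ((z3 k : ℤ) : ℝ) := by
    intro i ω
    rcases hXval i ω with h | h | h
    · exact ⟨0, by rw [h]; norm_num [show z3 0 = -1 by decide]⟩
    · exact ⟨1, by rw [h]; norm_num [show z3 1 = 0 by decide]⟩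
    · exact ⟨2, by rw [h]; norm_num [show z3 2 = 1 by decide]⟩
  -- cover
  have hcover : ∀ y : ℤ, {ω | ∑ i, (a i : ℝ) * X i ω = (y : ℝ)}
      = ⋃ v ∈ univ.filter (fun v : Fin n → Fin 3 => (∑ i, a i * z3 (v i)) = y), E v := by
    intro y
    ext ω
    simp only [Set.mem_setOf_eq, Set.mem_iUnion, Finset.mem_filter, Finset.mem_univ, true_and,
      exists_prop]
    constructor
    · intro h
      choose v hv using fun i => hXc i ω
      refine ⟨v, ?_, ?_⟩
      · have hc : ((∑ i, a i * z3 (v i) : ℤ) : ℝ) = (y : ℝ) := by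
          push_cast
          rw [← h]
          exact Finset.sum_congr rfl fun i _ => by rw [hv i]
        exact_mod_cast hc
      · exact Set.mem_iInter.mpr fun i => by
          simp only [Set.mem_preimage, Set.mem_singleton_iff]; exact hv i
    · rintro ⟨v, hv1, hv2⟩
      have hXv : ∀ i, X i ω = ((z3 (v i) : ℤ) : ℝ) := fun i => by
        have := Set.mem_iInter.mp hv2 i
        simpa [Set.mem_preimage, Set.mem_singleton_iff] using this
      calc ∑ i, (a i : ℝ) * X i ω
          = ∑ i, (a i : ℝ) * ((z3 (v i) : ℤ) : ℝ) :=
            Finset.sum_congr rfl fun i _ => by rw [hXv i]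
        _ = ((∑ i, a i * z3 (v i) : ℤ) : ℝ) := by push_cast; ring
        _ = (y : ℝ) := by rw [hv1]
  -- z3 injective
  have hz3inj : Function.Injective z3 := by decide
  -- disjointness
  have hdisj : ∀ (s : Finset (Fin n → Fin 3)), Set.PairwiseDisjoint ↑s E := by
    intro s v _ v' _ hne
    refine Set.disjoint_left.mpr fun ω h1 h2 => hne ?_
    funext i
    have e1 : X i ω = ((z3 (v i) : ℤ) : ℝ) := by
      have := Set.mem_iInter.mp h1 i
      simpa using this
    have e2 : X i ω = ((z3 (v' i) : ℤ) : ℝ) := by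
      have := Set.mem_iInter.mp h2 i
      simpa using this
    have : ((z3 (v i) : ℤ) : ℝ) = ((z3 (v' i) : ℤ) : ℝ) := e1 ▸ e2
    exact hz3inj (by exact_mod_cast this)
  -- measure formula
  have hmeasure : ∀ y : ℤ, P {ω | ∑ i, (a i : ℝ) * X i ω = (y : ℝ)}
      = ENNReal.ofReal (∑ v : Fin n → Fin 3,
          if (∑ i, a i * z3 (v i)) = y then ∏ i, wgt (q i) (v i) else 0) := by
    intro y
    rw [hcover y,
      measure_biUnion_finset (hdisj _) (fun v _ => hEmeas v)]
    rw [Finset.sum_congr rfl fun v _ => hEprob v]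
    rw [← ENNReal.ofReal_sum_of_nonneg
      (fun v _ => Finset.prod_nonneg fun i _ => wgt_nonneg (hq0 i) (hq1 i) _)]
    rw [Finset.sum_filter]
  have h0 : {ω | ∑ i, (a i : ℝ) * X i ω = 0}
      = {ω | ∑ i, (a i : ℝ) * X i ω = ((0:ℤ) : ℝ)} := by norm_num
  rw [hmeasure x, h0, hmeasure 0]
  exact ENNReal.ofReal_le_ofReal (comb_main n q hq0 hq1 a x)
end
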